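/- arXiv:math/0203052 — 7 statements merged into one kernel-verified Lean document; each statement's English description precedes it below -/
import Mathlib

section
/- Let α > 1. For every integrable function f : ℝ → ℂ with compact support contained in [0,∞), one has [f, f]_α = |∫₀^∞ f(t) dt|² + (log α) · ∫₀^∞ α^u · |∫_u^∞ f(t) dt|² du. -/
open MeasureTheory Set

private lemma expInt (c : ℝ) (hc : 0 < c) (m : ℝ) (hm : 0 ≤ m) :
    ∫ u in Set.Ioi (0:ℝ), Set.indicator (Set.Iio m) (fun u => Real.exp (c*u)) u
      = (Real.exp (c*m) - 1) / c := by
  rw [setIntegral_indicator measurableSet_Iio, Set.Ioi_inter_Iio,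
    ← integral_Ioc_eq_integral_Ioo, ← intervalIntegral.integral_of_le hm]
  have hcont : Continuous fun u : ℝ => Real.exp (c * u) :=
    Real.continuous_exp.comp (continuous_const.mul continuous_id)
  have hderiv : ∀ u ∈ Set.uIcc (0:ℝ) m,
      HasDerivAt (fun u => Real.exp (c*u) / c) (Real.exp (c*u)) u := by
    intro u _
    have h := ((Real.hasDerivAt_exp (c*u)).comp u ((hasDerivAt_id u).const_mul c)).div_const c
    simpa [mul_comm, mul_div_assoc, mul_div_cancel_left₀, ne_of_gt hc] using h
  rw [intervalIntegral.integral_eq_sub_of_hasDerivAt hderiv (hcont.intervalIntegrable 0 m)]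
  rw [mul_zero, Real.exp_zero]
  ring

private lemma aux (α : ℝ) (hα : 1 < α) (R : ℝ) (hR : 0 < R) (g : ℝ → ℂ)
    (hmg : Measurable g) (hg : Integrable g)
    (hgR : ∀ s, s ∉ Set.Icc (0:ℝ) R → g s = 0) :
    (∫ s in Set.Ioi (0 : ℝ), ∫ t in Set.Ioi (0 : ℝ),
        ((α ^ min s t : ℝ) : ℂ) * g s * (starRingEnd ℂ) (g t))
      = (‖∫ t in Set.Ioi (0 : ℝ), g t‖ ^ 2 : ℝ)
        + ((Real.log α *
            ∫ u in Set.Ioi (0 : ℝ),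
              (α ^ u : ℝ) * ‖∫ t in Set.Ioi u, g t‖ ^ 2 : ℝ) : ℂ) := by
  set c := Real.log α with hcdef
  have hc : 0 < c := Real.log_pos hα
  have hα0 : (0:ℝ) < α := lt_trans one_pos hα
  set e : ℝ → ℝ := fun u => Real.exp (c * u) with hedef
  have he : ∀ u : ℝ, (α : ℝ) ^ u = e u := by
    intro u; rw [Real.rpow_def_of_pos hα0]
  have hepos : ∀ u, 0 < e u := fun u => Real.exp_pos _
  have hemono : ∀ ⦃u v : ℝ⦄, u ≤ v → e u ≤ e v := by
    intro u v huv
    exact Real.exp_le_exp.2 (by nlinarith)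
  have hecont : Continuous e := Real.continuous_exp.comp (continuous_const.mul continuous_id)
  set T : ℝ → ℂ := fun u => ∫ t in Set.Ioi u, g t with hTdef
  set K : ℝ := ∫ t, ‖g t‖ with hKdef
  have hK0 : 0 ≤ K := integral_nonneg fun t => norm_nonneg _
  have hTK : ∀ u, ‖T u‖ ≤ K := by
    intro u
    refine le_trans (norm_integral_le_integral_norm _) ?_
    exact setIntegral_le_integral hg.norm (Filter.Eventually.of_forall fun t => norm_nonneg _)
  -- continuous version of T valid on [0,∞)
  set P : ℝ → ℂ := fun u => ∫ t in (0:ℝ)..u, g t with hPdef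
  have hPc : Continuous P := hg.continuous_primitive 0
  set T' : ℝ → ℂ := fun u => T 0 - P u with hT'def
  have hT'c : Continuous T' := continuous_const.sub hPc
  have hTT' : ∀ u, 0 ≤ u → T u = T' u := by
    intro u hu
    have hsplit := setIntegral_union (Set.Ioc_disjoint_Ioi le_rfl) measurableSet_Ioi
      (hg.integrableOn (s := Set.Ioc 0 u)) (hg.integrableOn (s := Set.Ioi u))
    rw [Set.Ioc_union_Ioi_eq_Ioi hu] at hsplit
    have hP : P u = ∫ t in Set.Ioc 0 u, g t := intervalIntegral.integral_of_le hu
    simp only [hT'def, hTdef, hP]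
    rw [hsplit]; ring
  have hT'K : ∀ u, 0 ≤ u → ‖T' u‖ ≤ K := fun u hu => (hTT' u hu) ▸ hTK u
  -- the function φ
  set φ : ℝ → ℂ := fun u => ((e u : ℝ) : ℂ) * (starRingEnd ℂ) (T' u) with hφdef
  have hφc : Continuous φ := by
    exact (Complex.continuous_ofReal.comp hecont).mul (continuous_star.comp hT'c)
  have hφbound : ∀ u, 0 ≤ u → u ≤ R → ‖φ u‖ ≤ e R * K := by
    intro u h0 h1
    rw [hφdef]
    calc ‖((e u : ℝ):ℂ) * (starRingEnd ℂ) (T' u)‖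
        = e u * ‖T' u‖ := by
          rw [norm_mul, Complex.norm_real, RCLike.norm_conj,
            Real.norm_of_nonneg (le_of_lt (hepos u))]
      _ ≤ e R * K := by
          exact mul_le_mul (hemono h1) (hT'K u h0) (norm_nonneg _) (le_of_lt (hepos R))
  -- B' s
  set B : ℝ → ℂ := fun s => ∫ u in Set.Ioi (0:ℝ), Set.indicator (Set.Iio s) φ u with hBdef
  set Q : ℝ → ℂ := fun s => ∫ u in (0:ℝ)..s, φ u with hQdef
  have hQc : Continuous Q := intervalIntegral.continuous_primitive
      (fun a b => hφc.intervalIntegrable a b) 0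
  have hBQ : ∀ s, 0 ≤ s → B s = Q s := by
    intro s hs
    rw [hBdef]
    simp only
    rw [setIntegral_indicator measurableSet_Iio, Set.Ioi_inter_Iio,
      ← integral_Ioc_eq_integral_Ioo, ← intervalIntegral.integral_of_le hs]
  have hQbound : ∀ s, 0 ≤ s → s ≤ R → ‖Q s‖ ≤ e R * K * R := by
    intro s h0 h1
    have := intervalIntegral.norm_integral_le_of_norm_le_const (C := e R * K)
      (f := φ) (a := 0) (b := s) ?_
    · calc ‖Q s‖ ≤ e R * K * |s - 0| := this
        _ = e R * K * s := by rw [sub_zero, abs_of_nonneg h0]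
        _ ≤ e R * K * R := by
            have : 0 ≤ e R * K := mul_nonneg (le_of_lt (hepos R)) hK0
            nlinarith
    · intro x hx
      rw [Set.uIoc_of_le h0] at hx
      exact hφbound x (le_of_lt hx.1) (le_trans hx.2 h1)
  have hprodr : ((volume.restrict (Set.Ioi (0:ℝ))).prod (volume.restrict (Set.Ioi (0:ℝ))))
      = (volume.prod volume).restrict (Set.Ioi (0:ℝ) ×ˢ Set.Ioi (0:ℝ)) :=
    Measure.prod_restrict _ _
  -- indicator-const integrable on restrict (Ioi 0)
  have hindint : ∀ b : ℝ, 0 < b → ∀ C : ℝ,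
      Integrable (Set.indicator (Set.Iio b) (fun _ => C)) (volume.restrict (Set.Ioi (0:ℝ))) := by
    intro b hb C
    rw [integrable_indicator_iff measurableSet_Iio]
    refine integrableOn_const ?_
    rw [Measure.restrict_apply measurableSet_Iio, Set.Iio_inter_Ioi]
    exact measure_Ioo_lt_top.ne
  have hcne : (c:ℂ) ≠ 0 := Complex.ofReal_ne_zero.2 (ne_of_gt hc)
  have hT0 : (∫ s in Set.Ioi (0:ℝ), g s) = T 0 := rfl
  have hTu : ∀ u : ℝ, (∫ t in Set.Ioi u, g t) = T u := fun u => rfl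
  have hconj : Integrable (fun t => (starRingEnd ℂ) (g t)) := by
    refine Integrable.mono' hg.norm
      ((continuous_star.measurable.comp hmg).aestronglyMeasurable) ?_
    exact Filter.Eventually.of_forall fun t => le_of_eq (RCLike.norm_conj _)
  -- Step: inner formula
  have inner_eq : ∀ s ∈ Set.Ioi (0:ℝ),
      (∫ t in Set.Ioi (0 : ℝ), ((α ^ min s t : ℝ) : ℂ) * g s * (starRingEnd ℂ) (g t))
        = g s * (starRingEnd ℂ) (T 0) + (c:ℂ) * (g s * B s) := by
    intro s hs
    have hs0 : (0:ℝ) < s := hs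
    have hpoint : ∀ t ∈ Set.Ioi (0:ℝ),
        ((α ^ min s t : ℝ) : ℂ) * g s * (starRingEnd ℂ) (g t)
          = g s * (starRingEnd ℂ) (g t)
            + (c:ℂ) * ((((e (min s t) - 1)/c : ℝ) : ℂ) * (g s * (starRingEnd ℂ) (g t))) := by
      intro t ht
      have hm : ((α ^ min s t : ℝ) : ℂ) = 1 + (c:ℂ) * (((e (min s t) - 1)/c : ℝ) : ℂ) := by
        rw [he]
        push_cast
        field_simp
        ring
      rw [hm]; ring
    rw [setIntegral_congr_fun measurableSet_Ioi hpoint]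
    have I1 : Integrable (fun t => g s * (starRingEnd ℂ) (g t))
        (volume.restrict (Set.Ioi (0:ℝ))) :=
      (hconj.restrict).const_mul _
    have I2m : AEStronglyMeasurable
        (fun t => (((e (min s t) - 1)/c : ℝ):ℂ) * (g s * (starRingEnd ℂ) (g t)))
        (volume.restrict (Set.Ioi (0:ℝ))) := by
      refine AEStronglyMeasurable.mul ?_
        (aestronglyMeasurable_const.mul
          ((continuous_star.measurable.comp hmg).aestronglyMeasurable.restrict))
      exact ((Complex.continuous_ofReal.comp
        (((hecont.comp (continuous_const.min continuous_id)).sub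
          continuous_const).div_const c)).aestronglyMeasurable).restrict
    have I2 : Integrable
        (fun t => (((e (min s t) - 1)/c : ℝ):ℂ) * (g s * (starRingEnd ℂ) (g t)))
        (volume.restrict (Set.Ioi (0:ℝ))) := by
      refine Integrable.mono' (g := fun t => e s / c * (‖g s‖ * ‖g t‖))
        (((hg.norm.restrict).const_mul ‖g s‖).const_mul (e s / c)) I2m ?_
      rw [ae_restrict_iff' measurableSet_Ioi]
      refine Filter.Eventually.of_forall fun t ht => ?_
      have hm0 : (0:ℝ) < min s t := lt_min hs0 ht
      have h1 : 1 ≤ e (min s t) := by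
        have := hemono (le_of_lt hm0)
        simpa [hedef] using this
      have h2 : e (min s t) ≤ e s := hemono (min_le_left s t)
      have hX : ‖((((e (min s t) - 1)/c : ℝ)):ℂ)‖ ≤ e s / c := by
        rw [Complex.norm_real, Real.norm_eq_abs,
          abs_of_nonneg (div_nonneg (by linarith) (le_of_lt hc))]
        exact div_le_div_of_nonneg_right (by linarith) hc.le
      calc ‖(((e (min s t) - 1)/c : ℝ):ℂ) * (g s * (starRingEnd ℂ) (g t))‖
          = ‖((((e (min s t) - 1)/c : ℝ)):ℂ)‖ * (‖g s‖ * ‖g t‖) := by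
            rw [norm_mul, norm_mul, RCLike.norm_conj]
        _ ≤ e s / c * (‖g s‖ * ‖g t‖) :=
            mul_le_mul_of_nonneg_right hX (mul_nonneg (norm_nonneg _) (norm_nonneg _))
    rw [integral_add I1 (I2.const_mul (c:ℂ)), integral_const_mul (g s), integral_conj,
      integral_const_mul ((c:ℂ))]
    -- handle the second piece
    have hre : (fun t => (((e (min s t) - 1)/c : ℝ):ℂ) * (g s * (starRingEnd ℂ) (g t)))
        = fun t => g s * ((((e (min s t) - 1)/c : ℝ):ℂ) * (starRingEnd ℂ) (g t)) :=
      funext fun t => by ring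
    rw [hre, integral_const_mul (g s)]
    -- Fubini for the inner term
    have hFint1 : Integrable
        (fun z : ℝ × ℝ =>
          ((Set.indicator (Set.Iio (min s z.1)) e z.2 : ℝ):ℂ) * (starRingEnd ℂ) (g z.1))
        ((volume.restrict (Set.Ioi (0:ℝ))).prod (volume.restrict (Set.Ioi (0:ℝ)))) := by
      have hmF : AEStronglyMeasurable
          (fun z : ℝ × ℝ =>
            ((Set.indicator (Set.Iio (min s z.1)) e z.2 : ℝ):ℂ) * (starRingEnd ℂ) (g z.1))
          ((volume.restrict (Set.Ioi (0:ℝ))).prod (volume.restrict (Set.Ioi (0:ℝ)))) := by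
        have heq2 : (fun z : ℝ × ℝ =>
              ((Set.indicator (Set.Iio (min s z.1)) e z.2 : ℝ):ℂ) * (starRingEnd ℂ) (g z.1))
            = fun z : ℝ × ℝ =>
              ((Set.indicator {p : ℝ × ℝ | p.2 < min s p.1} (fun p => e p.2) z : ℝ):ℂ)
                * (starRingEnd ℂ) (g z.1) := by
          funext z
          simp only [Set.indicator_apply, Set.mem_Iio, Set.mem_setOf_eq]
        rw [heq2]
        exact ((Complex.measurable_ofReal.comp
          ((hecont.measurable.comp measurable_snd).indicator
            (measurableSet_lt measurable_snd (measurable_const.min measurable_fst)))).mul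
          (continuous_star.measurable.comp (hmg.comp measurable_fst))).aestronglyMeasurable
      refine Integrable.mono'
        (g := fun z : ℝ × ℝ => ‖g z.1‖ * Set.indicator (Set.Iio s) (fun _ => e s) z.2)
        (Integrable.mul_prod hg.norm.restrict (hindint s hs0 _)) hmF ?_
      rw [hprodr, ae_restrict_iff' (measurableSet_Ioi.prod measurableSet_Ioi)]
      refine Filter.Eventually.of_forall fun z hz => ?_
      obtain ⟨hz1, hz2⟩ := hz
      simp only [Set.indicator_apply, Set.mem_Iio, norm_mul]
      by_cases h : z.2 < min s z.1
      · have hzs : z.2 < s := lt_of_lt_of_le h (min_le_left _ _)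
        simp only [h, if_true, hzs]
        rw [Complex.norm_real, RCLike.norm_conj, Real.norm_eq_abs,
          abs_of_nonneg (le_of_lt (hepos _)), mul_comm]
        exact mul_le_mul_of_nonneg_left (hemono (le_of_lt hzs)) (norm_nonneg _)
      · simp only [h, if_false]
        rw [Complex.ofReal_zero, norm_zero, zero_mul]
        split_ifs
        · exact mul_nonneg (norm_nonneg _) (le_of_lt (hepos _))
        · simp
    have key : (∫ t in Set.Ioi (0:ℝ),
        (((e (min s t) - 1)/c : ℝ):ℂ) * (starRingEnd ℂ) (g t)) = B s := by
      have hpt : ∀ t ∈ Set.Ioi (0:ℝ),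
          (((e (min s t) - 1)/c : ℝ):ℂ) * (starRingEnd ℂ) (g t)
            = ∫ u in Set.Ioi (0:ℝ),
                ((Set.indicator (Set.Iio (min s t)) e u : ℝ):ℂ) * (starRingEnd ℂ) (g t) := by
        intro t ht
        rw [integral_mul_const]
        congr 1
        simp only [hedef]
        rw [← expInt c hc (min s t) (le_of_lt (lt_min hs0 ht))]
        exact (integral_ofReal (𝕜 := ℂ)).symm
      rw [setIntegral_congr_fun measurableSet_Ioi hpt, integral_integral_swap hFint1]
      simp only [hBdef]
      refine setIntegral_congr_fun measurableSet_Ioi fun u hu => ?_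
      by_cases hus : u < s
      · have hpt2 : ∀ t ∈ Set.Ioi (0:ℝ),
            ((Set.indicator (Set.Iio (min s t)) e u : ℝ):ℂ) * (starRingEnd ℂ) (g t)
              = Set.indicator (Set.Ioi u) (fun t => ((e u : ℝ):ℂ) * (starRingEnd ℂ) (g t)) t := by
          intro t _
          by_cases h : u < t
          · rw [Set.indicator_of_mem (Set.mem_Iio.mpr (lt_min_iff.mpr ⟨hus, h⟩)) e,
              Set.indicator_of_mem (Set.mem_Ioi.mpr h)]
          · rw [Set.indicator_of_notMem
                (fun hmem => h (lt_min_iff.mp (Set.mem_Iio.mp hmem)).2) e,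
              Set.indicator_of_notMem (fun hmem => h (Set.mem_Ioi.mp hmem))]
            simp
        rw [setIntegral_congr_fun measurableSet_Ioi hpt2,
          setIntegral_indicator measurableSet_Ioi, Set.Ioi_inter_Ioi,
          sup_eq_right.mpr (le_of_lt hu), integral_const_mul, integral_conj,
          Set.indicator_of_mem (Set.mem_Iio.mpr hus) φ]
        simp only [hφdef]
        rw [hTu u, hTT' u (le_of_lt hu)]
      · have hpt3 : ∀ t ∈ Set.Ioi (0:ℝ),
            ((Set.indicator (Set.Iio (min s t)) e u : ℝ):ℂ) * (starRingEnd ℂ) (g t) = 0 := by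
          intro t _
          rw [Set.indicator_of_notMem
            (fun hmem => hus (lt_min_iff.mp (Set.mem_Iio.mp hmem)).1) e]
          simp
        rw [setIntegral_congr_fun measurableSet_Ioi hpt3,
          Set.indicator_of_notMem (fun hmem => hus (Set.mem_Iio.mp hmem)) φ]
        simp
    rw [key]
  rw [setIntegral_congr_fun measurableSet_Ioi inner_eq]
  -- Fubini for the outer term
  have hFm : AEStronglyMeasurable (fun z : ℝ × ℝ => g z.1 * Set.indicator (Set.Iio z.1) φ z.2)
      ((volume.restrict (Set.Ioi (0:ℝ))).prod (volume.restrict (Set.Ioi (0:ℝ)))) := by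
    have heq : (fun z : ℝ × ℝ => g z.1 * Set.indicator (Set.Iio z.1) φ z.2)
        = fun z : ℝ × ℝ => g z.1 * Set.indicator {p : ℝ × ℝ | p.2 < p.1} (fun p => φ p.2) z := by
      funext z
      by_cases h : z.2 < z.1 <;>
        simp [Set.indicator_apply, h]
    rw [heq]
    exact ((hmg.comp measurable_fst).mul
      (((hφc.measurable.comp measurable_snd)).indicator
        (measurableSet_lt measurable_snd measurable_fst))).aestronglyMeasurable
  have hFint : Integrable (fun z : ℝ × ℝ => g z.1 * Set.indicator (Set.Iio z.1) φ z.2)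
      ((volume.restrict (Set.Ioi (0:ℝ))).prod (volume.restrict (Set.Ioi (0:ℝ)))) := by
    refine Integrable.mono'
      (g := fun z : ℝ × ℝ => ‖g z.1‖ * Set.indicator (Set.Iio R) (fun _ => e R * K) z.2)
      (Integrable.mul_prod hg.norm.restrict (hindint R hR _)) hFm ?_
    rw [hprodr, ae_restrict_iff' (measurableSet_Ioi.prod measurableSet_Ioi)]
    refine Filter.Eventually.of_forall fun z hz => ?_
    obtain ⟨hz1, hz2⟩ := hz
    have hERK : 0 ≤ e R * K := mul_nonneg (le_of_lt (hepos R)) hK0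
    simp only [Set.indicator_apply, Set.mem_Iio, norm_mul]
    by_cases hgs : g z.1 = 0
    · simp only [hgs, zero_mul, norm_zero]
      exact le_refl 0
    · have hzR : z.1 ∈ Set.Icc 0 R := by
        by_contra h; exact hgs (hgR _ h)
      by_cases h : z.2 < z.1
      · have h2R : z.2 < R := lt_of_lt_of_le h hzR.2
        simp only [h, if_true, h2R]
        exact mul_le_mul_of_nonneg_left (hφbound z.2 (le_of_lt hz2) (le_of_lt h2R)) (norm_nonneg _)
      · simp only [h, if_false, norm_zero, mul_zero]
        apply mul_nonneg (norm_nonneg _)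
        split_ifs
        · exact hERK
        · exact le_refl 0
  -- the outer swap
  have hswap2 : (∫ s in Set.Ioi (0:ℝ), g s * B s) = ∫ u in Set.Ioi (0:ℝ), T u * φ u := by
    have h1 : (fun s => g s * B s)
        = fun s => ∫ u in Set.Ioi (0:ℝ), g s * Set.indicator (Set.Iio s) φ u :=
      funext fun s => (integral_const_mul (g s) _).symm
    rw [h1, integral_integral_swap hFint]
    refine setIntegral_congr_fun measurableSet_Ioi fun u hu => ?_
    have h2 : (fun s => g s * Set.indicator (Set.Iio s) φ u)
        = fun s => Set.indicator (Set.Ioi u) (fun s => g s * φ u) s := by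
      funext s
      by_cases h : u < s <;> simp [Set.indicator_apply, h]
    rw [h2, setIntegral_indicator measurableSet_Ioi, Set.Ioi_inter_Ioi,
      sup_eq_right.mpr (le_of_lt hu), integral_mul_const]
  -- integrability of outer pieces
  have hint1 : Integrable (fun s => g s * (starRingEnd ℂ) (T 0)) (volume.restrict (Set.Ioi (0:ℝ))) :=
    (hg.restrict).mul_const _
  have hint2 : Integrable (fun s => g s * B s) (volume.restrict (Set.Ioi (0:ℝ))) := by
    refine Integrable.mono' (g := fun s => (e R * K * R) * ‖g s‖)
      ((hg.norm.restrict).const_mul _) ?_ ?_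
    · have heq : (fun s => g s * Q s) =ᵐ[volume.restrict (Set.Ioi (0:ℝ))] fun s => g s * B s := by
        rw [Filter.EventuallyEq, ae_restrict_iff' measurableSet_Ioi]
        exact Filter.Eventually.of_forall fun s hs => by rw [hBQ s (le_of_lt hs)]
      exact ((hmg.mul hQc.measurable).aestronglyMeasurable).congr heq
    · refine Filter.Eventually.of_forall fun s => ?_
      by_cases hgs : g s = 0
      · simp only [hgs, zero_mul, norm_zero]
        positivity
      · have hsR : s ∈ Set.Icc 0 R := by
          by_contra h; exact hgs (hgR _ h)
        rw [norm_mul, hBQ s hsR.1, mul_comm]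
        exact mul_le_mul_of_nonneg_right (hQbound s hsR.1 hsR.2) (norm_nonneg _)
  rw [integral_add hint1 (hint2.const_mul _), integral_mul_const, integral_const_mul, hswap2]
  -- compute the two pieces
  have hpiece2 : (∫ u in Set.Ioi (0:ℝ), T u * φ u)
      = ((∫ u in Set.Ioi (0:ℝ), (α ^ u : ℝ) * ‖∫ t in Set.Ioi u, g t‖ ^ 2 : ℝ) : ℂ) := by
    have h1 : ∀ u ∈ Set.Ioi (0:ℝ), T u * φ u
        = ((((α:ℝ) ^ u) * ‖∫ t in Set.Ioi u, g t‖ ^ 2 : ℝ) : ℂ) := by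
      intro u hu
      simp only [hφdef]
      rw [← hTT' u (le_of_lt hu), hTu u,
        show T u * (((e u : ℝ):ℂ) * (starRingEnd ℂ) (T u))
          = ((e u : ℝ):ℂ) * (T u * (starRingEnd ℂ) (T u)) by ring,
        Complex.mul_conj, ← Complex.sq_norm, he u]
      push_cast
      ring
    rw [setIntegral_congr_fun measurableSet_Ioi h1]
    exact integral_ofReal
  rw [hT0, hpiece2, Complex.mul_conj, ← Complex.sq_norm]
  push_cast
  ring


/-- For `α > 1` and `f : ℝ → ℂ` integrable with compact support contained in `[0,∞)`,
`[f,f]_α = |∫₀^∞ f|² + log α · ∫₀^∞ α^u |∫_u^∞ f|² du`. -/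
theorem form_alpha_integral_formula (α : ℝ) (hα : 1 < α) (f : ℝ → ℂ)
    (hf : Integrable f) (hcs : HasCompactSupport f)
    (hsupp : Function.support f ⊆ Set.Ici 0) :
    (∫ s in Set.Ioi (0 : ℝ), ∫ t in Set.Ioi (0 : ℝ),
        ((α ^ min s t : ℝ) : ℂ) * f s * (starRingEnd ℂ) (f t))
      = (‖∫ t in Set.Ioi (0 : ℝ), f t‖ ^ 2 : ℝ)
        + ((Real.log α *
            ∫ u in Set.Ioi (0 : ℝ),
              (α ^ u : ℝ) * ‖∫ t in Set.Ioi u, f t‖ ^ 2 : ℝ) : ℂ) := by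
  obtain ⟨r, hr⟩ := hcs.isBounded.subset_closedBall 0
  set R := max r 1 with hRdef
  have hR : (0:ℝ) < R := lt_of_lt_of_le one_pos (le_max_right _ _)
  have hfR : ∀ s, s ∉ Set.Icc (0:ℝ) R → f s = 0 := by
    intro s hs
    by_contra h
    have hmem : s ∈ Function.support f := h
    have h0 : (0:ℝ) ≤ s := hsupp hmem
    have h2 : s ∈ Metric.closedBall (0:ℝ) r := hr (subset_tsupport f hmem)
    rw [Metric.mem_closedBall, Real.dist_eq, sub_zero, abs_of_nonneg h0] at h2
    exact hs ⟨h0, le_trans h2 (le_max_left _ _)⟩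
  set g : ℝ → ℂ := Set.indicator (Set.Icc 0 R) (hf.1.mk f) with hgdef
  have hmg : Measurable g :=
    (hf.1.stronglyMeasurable_mk.measurable).indicator measurableSet_Icc
  have hfg : f =ᵐ[volume] g := by
    filter_upwards [hf.1.ae_eq_mk] with x hx
    by_cases h : x ∈ Set.Icc (0:ℝ) R
    · rw [hgdef, Set.indicator_of_mem h, ← hx]
    · rw [hgdef, Set.indicator_of_notMem h]
      exact hfR x h
  have hg : Integrable g := hf.congr hfg
  have hTeq : ∀ u : ℝ, (∫ t in Set.Ioi u, f t) = ∫ t in Set.Ioi u, g t :=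
    fun u => integral_congr_ae (ae_restrict_of_ae hfg)
  have hLHS : (∫ s in Set.Ioi (0 : ℝ), ∫ t in Set.Ioi (0 : ℝ),
        ((α ^ min s t : ℝ) : ℂ) * f s * (starRingEnd ℂ) (f t))
      = ∫ s in Set.Ioi (0 : ℝ), ∫ t in Set.Ioi (0 : ℝ),
        ((α ^ min s t : ℝ) : ℂ) * g s * (starRingEnd ℂ) (g t) := by
    refine integral_congr_ae ?_
    filter_upwards [ae_restrict_of_ae hfg] with s hs
    rw [hs]
    exact integral_congr_ae ((ae_restrict_of_ae hfg).mono fun t ht => by simp only [ht])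
  rw [hLHS]
  simp only [hTeq]
  exact aux α hα R hR g hmg hg (fun s h => Set.indicator_of_notMem h _)
end

section
/- Let α > 1 and let θ = e^{iψ} with ψ ∈ [-π, π). For every finitely supported function f : ℕ → ℂ one has [D_θ f, D_θ f]°_α ≤ (1 + 2|ψ|/log α)² · [f, f]°_α, where both sides are nonnegative real numbers. -/
open scoped ComplexOrder

open Finset

/-- The discrete sesquilinear form `[f,g]°_α = ∑_{m,n ≥ 0} α^(min m n) f(m) conj(g(n))`. -/
noncomputable def coxFormDiscrete (α : ℝ) (f g : ℕ → ℂ) : ℂ :=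
  ∑' m : ℕ, ∑' n : ℕ, ((α ^ min m n : ℝ) : ℂ) * f m * (starRingEnd ℂ) (g n)

/-- Coefficients of the kernel decomposition. -/
noncomputable def cc (α : ℝ) : ℕ → ℝ
  | 0 => 1
  | k+1 => α ^ (k+1) - α ^ k

lemma cc_nonneg {α : ℝ} (hα : 1 ≤ α) (k : ℕ) : 0 ≤ cc α k := by
  cases k with
  | zero => norm_num [cc]
  | succ k =>
      have : α ^ k ≤ α ^ (k+1) := pow_le_pow_right₀ hα (Nat.le_succ k)
      simp only [cc]; linarith

lemma cc_sum (α : ℝ) : ∀ m : ℕ, ∑ k ∈ Finset.range (m+1), cc α k = α ^ m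
  | 0 => by simp [cc]
  | m+1 => by
      rw [Finset.sum_range_succ, cc_sum α m]
      simp only [cc]; ring

lemma sum_ite_le {M : Type*} [AddCommMonoid M] (k N : ℕ) (g : ℕ → M) :
    ∑ n ∈ Finset.range N, (if k ≤ n then g n else 0) = ∑ n ∈ Finset.Ico k N, g n := by
  rw [← Finset.sum_filter]
  congr 1
  ext x
  simp only [Finset.mem_filter, Finset.mem_range, Finset.mem_Ico]
  omega

lemma kernel_eq (α : ℝ) {m n N : ℕ} (hm : m < N) (hn : n < N) :
    (α ^ min m n) = ∑ k ∈ Finset.range N, (if k ≤ m ∧ k ≤ n then cc α k else 0) := by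
  have h1 : ∀ k : ℕ, (k ≤ m ∧ k ≤ n) = (k < min m n + 1) := by
    intro k; simp only [eq_iff_iff]; omega
  simp_rw [h1]
  have h2 : ∑ k ∈ Finset.range N, (if k < min m n + 1 then cc α k else 0)
      = ∑ k ∈ Finset.range (min m n + 1), cc α k := by
    rw [← Finset.sum_filter]
    congr 1
    ext x
    simp only [Finset.mem_filter, Finset.mem_range]
    omega
  rw [h2, cc_sum]

lemma swapA {M : Type*} [AddCommMonoid M] (k N : ℕ) (f : ℕ → ℕ → M) :
    ∑ n ∈ Finset.Ico k N, ∑ j ∈ Finset.Ioc k n, f j n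
      = ∑ j ∈ Finset.Ioo k N, ∑ n ∈ Finset.Ico j N, f j n := by
  rw [Finset.sum_sigma', Finset.sum_sigma']
  refine Finset.sum_nbij' (fun x => ⟨x.2, x.1⟩) (fun x => ⟨x.2, x.1⟩) ?_ ?_
    (fun _ _ => rfl) (fun _ _ => rfl) (fun _ _ => rfl) <;>
  · simp only [Finset.mem_sigma, Finset.mem_Ico, Finset.mem_Ioc, Finset.mem_Ioo, Sigma.forall]
    intro a b h
    omega

lemma swapB {M : Type*} [AddCommMonoid M] (N : ℕ) (f : ℕ → ℕ → M) :
    ∑ k ∈ Finset.range N, ∑ j ∈ Finset.Ioo k N, f k j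
      = ∑ j ∈ Finset.range N, ∑ k ∈ Finset.range j, f k j := by
  rw [Finset.sum_sigma', Finset.sum_sigma']
  refine Finset.sum_nbij' (fun x => ⟨x.2, x.1⟩) (fun x => ⟨x.2, x.1⟩) ?_ ?_
    (fun _ _ => rfl) (fun _ _ => rfl) (fun _ _ => rfl) <;>
  · simp only [Finset.mem_sigma, Finset.mem_range, Finset.mem_Ioo, Sigma.forall]
    intro a b h
    omega

lemma double_sum (N : ℕ) (c : ℕ → ℂ) (F G : ℕ → ℂ) :
    ∑ m ∈ Finset.range N, ∑ n ∈ Finset.range N,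
      (∑ k ∈ Finset.range N, if k ≤ m ∧ k ≤ n then c k else 0) * F m * G n
    = ∑ k ∈ Finset.range N, c k * (∑ m ∈ Finset.Ico k N, F m) * ∑ n ∈ Finset.Ico k N, G n := by
  have step1 : ∀ m n : ℕ, (∑ k ∈ Finset.range N, if k ≤ m ∧ k ≤ n then c k else 0) * F m * G n
      = ∑ k ∈ Finset.range N, (if k ≤ m then F m else 0) * (if k ≤ n then c k * G n else 0) := by
    intro m n
    rw [Finset.sum_mul, Finset.sum_mul]
    refine Finset.sum_congr rfl fun k _ => ?_
    by_cases h1 : k ≤ m <;> by_cases h2 : k ≤ n <;> simp [h1, h2] <;> ring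
  simp_rw [step1]
  calc ∑ m ∈ Finset.range N, ∑ n ∈ Finset.range N, ∑ k ∈ Finset.range N,
        (if k ≤ m then F m else 0) * (if k ≤ n then c k * G n else 0)
      = ∑ m ∈ Finset.range N, ∑ k ∈ Finset.range N, ∑ n ∈ Finset.range N,
        (if k ≤ m then F m else 0) * (if k ≤ n then c k * G n else 0) :=
        Finset.sum_congr rfl fun m _ => Finset.sum_comm
    _ = ∑ k ∈ Finset.range N, ∑ m ∈ Finset.range N, ∑ n ∈ Finset.range N,
        (if k ≤ m then F m else 0) * (if k ≤ n then c k * G n else 0) := Finset.sum_comm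
    _ = _ := by
        refine Finset.sum_congr rfl fun k _ => ?_
        simp_rw [← Finset.mul_sum, ← Finset.sum_mul]
        have e1 : ∑ n ∈ Finset.range N, (if k ≤ n then c k * G n else 0)
            = ∑ n ∈ Finset.Ico k N, c k * G n := by
          rw [← Finset.sum_filter]; congr 1; ext x
          simp only [Finset.mem_filter, Finset.mem_range, Finset.mem_Ico]; omega
        have e2 : ∑ m ∈ Finset.range N, (if k ≤ m then F m else 0)
            = ∑ m ∈ Finset.Ico k N, F m := by
          rw [← Finset.sum_filter]; congr 1; ext x
          simp only [Finset.mem_filter, Finset.mem_range, Finset.mem_Ico]; omega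
        rw [e1, e2, ← Finset.mul_sum]
        ring

lemma abel_sum (θ : ℂ) (f : ℕ → ℂ) (k N : ℕ) :
    ∑ n ∈ Finset.Ico k N, θ ^ n * f n
      = θ ^ k * ∑ n ∈ Finset.Ico k N, f n
        + ∑ j ∈ Finset.Ioo k N, (θ ^ j - θ ^ (j - 1)) * ∑ n ∈ Finset.Ico j N, f n := by
  have point : ∀ n, k ≤ n → θ ^ n = θ ^ k + ∑ j ∈ Finset.Ioc k n, (θ ^ j - θ ^ (j-1)) := by
    intro n hn
    induction n, hn using Nat.le_induction with
    | base => simp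
    | succ n hn ih =>
        rw [Finset.sum_Ioc_succ_top hn, ← add_assoc, ← ih]
        simp only [Nat.add_sub_cancel]
        ring
  calc ∑ n ∈ Finset.Ico k N, θ ^ n * f n
      = ∑ n ∈ Finset.Ico k N,
          (θ ^ k * f n + ∑ j ∈ Finset.Ioc k n, (θ ^ j - θ ^ (j-1)) * f n) := by
        refine Finset.sum_congr rfl fun n hn => ?_
        rw [point n (Finset.mem_Ico.mp hn).1, add_mul, Finset.sum_mul]
    _ = θ ^ k * ∑ n ∈ Finset.Ico k N, f n
          + ∑ n ∈ Finset.Ico k N, ∑ j ∈ Finset.Ioc k n, (θ ^ j - θ ^ (j-1)) * f n := by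
        rw [Finset.sum_add_distrib, Finset.mul_sum]
    _ = _ := by
        rw [swapA k N (fun j n => (θ ^ j - θ ^ (j-1)) * f n)]
        congr 1
        exact Finset.sum_congr rfl fun j _ => (Finset.mul_sum _ _ _).symm

lemma form_eq (α : ℝ) (N : ℕ) (f : ℕ → ℂ) (hf : ∀ n, N ≤ n → f n = 0) :
    coxFormDiscrete α f f
      = ((∑ k ∈ Finset.range N, cc α k * ‖(∑ n ∈ Finset.Ico k N, f n)‖ ^ 2 : ℝ) : ℂ) := by
  have step0 : coxFormDiscrete α f f
      = ∑ m ∈ Finset.range N, ∑ n ∈ Finset.range N,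
          ((α ^ min m n : ℝ) : ℂ) * f m * (starRingEnd ℂ) (f n) := by
    rw [coxFormDiscrete]
    rw [tsum_eq_sum (s := Finset.range N)
      (fun m hm => by simp [hf m (by simpa using hm)])]
    refine Finset.sum_congr rfl fun m _ => ?_
    exact tsum_eq_sum (fun n hn => by simp [hf n (by simpa using hn)])
  rw [step0]
  have step1 : ∑ m ∈ Finset.range N, ∑ n ∈ Finset.range N,
      ((α ^ min m n : ℝ) : ℂ) * f m * (starRingEnd ℂ) (f n)
      = ∑ m ∈ Finset.range N, ∑ n ∈ Finset.range N,
        (∑ k ∈ Finset.range N, if k ≤ m ∧ k ≤ n then ((cc α k : ℝ) : ℂ) else 0)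
          * f m * (starRingEnd ℂ) (f n) := by
    refine Finset.sum_congr rfl fun m hm => Finset.sum_congr rfl fun n hn => ?_
    congr 1
    congr 1
    rw [kernel_eq α (Finset.mem_range.mp hm) (Finset.mem_range.mp hn)]
    push_cast
    exact Finset.sum_congr rfl fun k _ => by split_ifs <;> simp
  rw [step1, double_sum N (fun k => ((cc α k : ℝ) : ℂ)) f (fun n => (starRingEnd ℂ) (f n))]
  rw [Complex.ofReal_sum]
  refine Finset.sum_congr rfl fun k _ => ?_
  rw [← map_sum (starRingEnd ℂ) f (Finset.Ico k N)]
  rw [Complex.ofReal_mul, Complex.sq_norm, mul_assoc, Complex.mul_conj]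

lemma geo (β : ℝ) (hβ : 1 < β) (k N : ℕ) :
    ∑ j ∈ Finset.Ioo k N, (β⁻¹) ^ j ≤ (β⁻¹) ^ k / (β - 1) := by
  have hβ0 : (0:ℝ) < β := by linarith
  have hr0 : (0:ℝ) < β⁻¹ := by positivity
  have hr1 : β⁻¹ < 1 := by rw [inv_lt_one_iff₀]; right; exact hβ
  have hsub : Finset.Ioo k N ⊆ Finset.Ico (k+1) (N + k + 1) := by
    intro x hx
    simp only [Finset.mem_Ioo] at hx
    simp only [Finset.mem_Ico]
    omega
  have h1 : ∑ j ∈ Finset.Ioo k N, (β⁻¹) ^ j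
      ≤ ∑ j ∈ Finset.Ico (k+1) (N + k + 1), (β⁻¹) ^ j :=
    Finset.sum_le_sum_of_subset_of_nonneg hsub (fun j _ _ => by positivity)
  refine h1.trans ?_
  rw [Finset.sum_Ico_eq_sum_range]
  have h2 : ∀ i : ℕ, (β⁻¹) ^ (k + 1 + i) = (β⁻¹)^(k+1) * (β⁻¹)^i := fun i => pow_add _ _ _
  simp_rw [h2, ← Finset.mul_sum]
  have h3 : ∑ i ∈ Finset.range (N + k + 1 - (k + 1)), (β⁻¹) ^ i ≤ 1 / (1 - β⁻¹) := by
    rw [geom_sum_eq (ne_of_lt hr1)]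
    have h4 : ((β⁻¹) ^ (N + k + 1 - (k + 1)) - 1) / (β⁻¹ - 1)
        = (1 - (β⁻¹) ^ (N + k + 1 - (k + 1))) / (1 - β⁻¹) := by
      rw [← neg_div_neg_eq]; ring_nf
    rw [h4]
    have h5 : (0:ℝ) < 1 - β⁻¹ := by linarith
    rw [div_le_div_iff₀ h5 h5]
    have : (0:ℝ) ≤ (β⁻¹) ^ (N + k + 1 - (k + 1)) := by positivity
    nlinarith
  have h6 : (0:ℝ) ≤ (β⁻¹)^(k+1) := by positivity
  calc (β⁻¹)^(k+1) * ∑ i ∈ Finset.range (N + k + 1 - (k + 1)), (β⁻¹) ^ i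
      ≤ (β⁻¹)^(k+1) * (1 / (1 - β⁻¹)) := mul_le_mul_of_nonneg_left h3 h6
    _ = (β⁻¹) ^ k / (β - 1) := by
        have hne : β ≠ 0 := by positivity
        have hne1 : β - 1 ≠ 0 := by intro h; rw [sub_eq_zero] at h; exact absurd h.symm (ne_of_lt hβ)
        have h7 : 1 - β⁻¹ = (β-1)/β := by field_simp
        rw [pow_succ, h7, one_div_div, inv_pow]
        field_simp

lemma perj (β : ℝ) (hβ : 1 < β) : ∀ j : ℕ,
    ∑ k ∈ Finset.range j, cc (β^2) k * (β⁻¹) ^ k ≤ (β⁻¹) ^ j * cc (β^2) j / (β - 1) := by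
  have hβ0 : (0:ℝ) < β := by linarith
  have h1 : (0:ℝ) < β - 1 := by linarith
  intro j
  induction j with
  | zero =>
      simp only [Finset.range_zero, Finset.sum_empty, pow_zero, one_mul]
      have : cc (β^2) 0 = 1 := rfl
      rw [this]
      positivity
  | succ j ih =>
      rw [Finset.sum_range_succ]
      rcases Nat.eq_zero_or_pos j with rfl | hj
      · simp only [Finset.range_zero, Finset.sum_empty, pow_zero, one_mul, zero_add]
        have e0 : cc (β^2) 0 = 1 := rfl
        have e1 : cc (β^2) 1 = β^2 - 1 := by simp [cc]
        rw [e0, e1, pow_one, le_div_iff₀ h1]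
        have : β⁻¹ * (β ^ 2 - 1) = β - β⁻¹ := by field_simp
        rw [this]
        have h2 : 0 < β⁻¹ := by positivity
        nlinarith
      · have hcc : cc (β^2) (j+1) = β^2 * cc (β^2) j := by
          obtain ⟨i, rfl⟩ := Nat.exists_eq_succ_of_ne_zero hj.ne'
          show (β^2)^(i+1+1) - (β^2)^(i+1) = β^2 * ((β^2)^(i+1) - (β^2)^i)
          ring
        have hccj : 0 ≤ cc (β^2) j := cc_nonneg (by nlinarith) j
        have hwj : (0:ℝ) < (β⁻¹)^j := by positivity
        calc ∑ k ∈ Finset.range j, cc (β^2) k * (β⁻¹) ^ k + cc (β^2) j * (β⁻¹) ^ j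
            ≤ (β⁻¹) ^ j * cc (β^2) j / (β - 1) + cc (β^2) j * (β⁻¹) ^ j := by linarith
          _ = (β⁻¹) ^ (j+1) * cc (β^2) (j+1) / (β - 1) := by
              rw [hcc, pow_succ]
              have hne : β ≠ 0 := by positivity
              field_simp
              have hb1 : β * (1 / β) = 1 := by field_simp
              linear_combination (-(β * (1 / β) ^ j * cc (β ^ 2) j)) * hb1

lemma schur (β : ℝ) (hβ : 1 < β) (N : ℕ) (a : ℕ → ℝ) (ha : ∀ k, 0 ≤ a k) :
    ∑ k ∈ Finset.range N, cc (β^2) k * (∑ j ∈ Finset.Ioo k N, a j) ^ 2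
      ≤ (1 / (β - 1)) ^ 2 * ∑ k ∈ Finset.range N, cc (β^2) k * a k ^ 2 := by
  have hβ0 : (0:ℝ) < β := by linarith
  have h1 : (0:ℝ) < β - 1 := by linarith
  have hα1 : (1:ℝ) ≤ β ^ 2 := by nlinarith
  -- Cauchy-Schwarz with geometric weights, for each k
  have CS : ∀ k, (∑ j ∈ Finset.Ioo k N, a j) ^ 2
      ≤ ((β⁻¹) ^ k / (β - 1)) * ∑ j ∈ Finset.Ioo k N, β ^ j * a j ^ 2 := by
    intro k
    have cs := Finset.sum_mul_sq_le_sq_mul_sq (Finset.Ioo k N)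
      (fun j => Real.sqrt ((β⁻¹) ^ j)) (fun j => Real.sqrt (β ^ j) * a j)
    have e1 : ∀ j : ℕ, Real.sqrt ((β⁻¹) ^ j) * (Real.sqrt (β ^ j) * a j) = a j := by
      intro j
      rw [← mul_assoc, ← Real.sqrt_mul (by positivity), ← mul_pow, inv_mul_cancel₀ (by positivity),
        one_pow, Real.sqrt_one, one_mul]
    have e2 : ∀ j : ℕ, Real.sqrt ((β⁻¹) ^ j) ^ 2 = (β⁻¹) ^ j := fun j =>
      Real.sq_sqrt (by positivity)
    have e3 : ∀ j : ℕ, (Real.sqrt (β ^ j) * a j) ^ 2 = β ^ j * a j ^ 2 := by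
      intro j
      rw [mul_pow, Real.sq_sqrt (by positivity)]
    simp_rw [e1, e2, e3] at cs
    refine cs.trans ?_
    have hnn : (0:ℝ) ≤ ∑ j ∈ Finset.Ioo k N, β ^ j * a j ^ 2 :=
      Finset.sum_nonneg fun j _ => by have := ha j; positivity
    exact mul_le_mul_of_nonneg_right (geo β hβ k N) hnn
  calc ∑ k ∈ Finset.range N, cc (β^2) k * (∑ j ∈ Finset.Ioo k N, a j) ^ 2
      ≤ ∑ k ∈ Finset.range N,
          cc (β^2) k * (((β⁻¹) ^ k / (β - 1)) * ∑ j ∈ Finset.Ioo k N, β ^ j * a j ^ 2) :=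
        Finset.sum_le_sum fun k _ => mul_le_mul_of_nonneg_left (CS k) (cc_nonneg hα1 k)
    _ = ∑ k ∈ Finset.range N, ∑ j ∈ Finset.Ioo k N,
          (cc (β^2) k * (β⁻¹) ^ k / (β - 1)) * (β ^ j * a j ^ 2) := by
        refine Finset.sum_congr rfl fun k _ => ?_
        rw [Finset.mul_sum, Finset.mul_sum]
        exact Finset.sum_congr rfl fun j _ => by ring
    _ = ∑ j ∈ Finset.range N, ∑ k ∈ Finset.range j,
          (cc (β^2) k * (β⁻¹) ^ k / (β - 1)) * (β ^ j * a j ^ 2) := swapB N _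
    _ = ∑ j ∈ Finset.range N,
          (β ^ j * a j ^ 2 / (β - 1)) * ∑ k ∈ Finset.range j, cc (β^2) k * (β⁻¹) ^ k := by
        refine Finset.sum_congr rfl fun j _ => ?_
        rw [Finset.mul_sum]
        exact Finset.sum_congr rfl fun k _ => by ring
    _ ≤ ∑ j ∈ Finset.range N,
          (β ^ j * a j ^ 2 / (β - 1)) * ((β⁻¹) ^ j * cc (β^2) j / (β - 1)) := by
        refine Finset.sum_le_sum fun j _ => ?_
        have hnn : (0:ℝ) ≤ β ^ j * a j ^ 2 / (β - 1) := by
          have := ha j; positivity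
        exact mul_le_mul_of_nonneg_left (perj β hβ j) hnn
    _ = (1 / (β - 1)) ^ 2 * ∑ k ∈ Finset.range N, cc (β^2) k * a k ^ 2 := by
        rw [Finset.mul_sum]
        refine Finset.sum_congr rfl fun j _ => ?_
        have hne : β ≠ 0 := by positivity
        have hne1 : β - 1 ≠ 0 := ne_of_gt h1
        have hip : (β⁻¹) ^ j = (β ^ j)⁻¹ := inv_pow β j
        rw [hip]
        have hpne : β ^ j ≠ 0 := by positivity
        field_simp

lemma main_real (β t : ℝ) (hβ : 1 < β) (ht : 0 ≤ t) (N : ℕ) (a b : ℕ → ℝ)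
    (ha : ∀ k, 0 ≤ a k) (hb0 : ∀ k, 0 ≤ b k)
    (hb : ∀ k, b k ≤ a k + t * ∑ j ∈ Finset.Ioo k N, a j) :
    ∑ k ∈ Finset.range N, cc (β^2) k * b k ^ 2
      ≤ (1 + t / (β - 1)) ^ 2 * ∑ k ∈ Finset.range N, cc (β^2) k * a k ^ 2 := by
  have h1 : (0:ℝ) < β - 1 := by linarith
  have hα1 : (1:ℝ) ≤ β ^ 2 := by nlinarith
  set T : ℕ → ℝ := fun k => ∑ j ∈ Finset.Ioo k N, a j with hT
  have hT0 : ∀ k, 0 ≤ T k := fun k => Finset.sum_nonneg fun j _ => ha j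
  set A := ∑ k ∈ Finset.range N, cc (β^2) k * a k ^ 2 with hA
  have hA0 : 0 ≤ A := Finset.sum_nonneg fun k _ => by
    have := cc_nonneg hα1 k; have := ha k; positivity
  -- step 1 : bound b by a + t T
  have step1 : ∑ k ∈ Finset.range N, cc (β^2) k * b k ^ 2
      ≤ ∑ k ∈ Finset.range N, cc (β^2) k * (a k + t * T k) ^ 2 := by
    refine Finset.sum_le_sum fun k _ => ?_
    refine mul_le_mul_of_nonneg_left ?_ (cc_nonneg hα1 k)
    have h2 : 0 ≤ a k + t * T k := by
      have := ha k; have := hT0 k; positivity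
    exact pow_le_pow_left₀ (hb0 k) (hb k) 2
  refine step1.trans ?_
  -- step 2 : expand
  have expand : ∑ k ∈ Finset.range N, cc (β^2) k * (a k + t * T k) ^ 2
      = A + 2 * t * (∑ k ∈ Finset.range N, cc (β^2) k * (a k * T k))
          + t ^ 2 * ∑ k ∈ Finset.range N, cc (β^2) k * T k ^ 2 := by
    rw [hA, Finset.mul_sum, Finset.mul_sum, ← Finset.sum_add_distrib, ← Finset.sum_add_distrib]
    exact Finset.sum_congr rfl fun k _ => by ring
  rw [expand]
  have hTT : ∑ k ∈ Finset.range N, cc (β^2) k * T k ^ 2 ≤ (1 / (β - 1)) ^ 2 * A :=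
    schur β hβ N a ha
  have haT : ∑ k ∈ Finset.range N, cc (β^2) k * (a k * T k) ≤ (1 / (β - 1)) * A := by
    have cs : (∑ k ∈ Finset.range N, cc (β^2) k * (a k * T k)) ^ 2
        ≤ A * ∑ k ∈ Finset.range N, cc (β^2) k * T k ^ 2 := by
      have cs0 := Finset.sum_mul_sq_le_sq_mul_sq (Finset.range N)
        (fun k => Real.sqrt (cc (β^2) k) * a k) (fun k => Real.sqrt (cc (β^2) k) * T k)
      have e1 : ∀ k : ℕ, (Real.sqrt (cc (β^2) k) * a k) * (Real.sqrt (cc (β^2) k) * T k)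
          = cc (β^2) k * (a k * T k) := by
        intro k
        have : Real.sqrt (cc (β^2) k) * Real.sqrt (cc (β^2) k) = cc (β^2) k :=
          Real.mul_self_sqrt (cc_nonneg hα1 k)
        calc (Real.sqrt (cc (β^2) k) * a k) * (Real.sqrt (cc (β^2) k) * T k)
            = (Real.sqrt (cc (β^2) k) * Real.sqrt (cc (β^2) k)) * (a k * T k) := by ring
          _ = cc (β^2) k * (a k * T k) := by rw [this]
      have e2 : ∀ k : ℕ, (Real.sqrt (cc (β^2) k) * a k) ^ 2 = cc (β^2) k * a k ^ 2 := by
        intro k; rw [mul_pow, Real.sq_sqrt (cc_nonneg hα1 k)]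
      have e3 : ∀ k : ℕ, (Real.sqrt (cc (β^2) k) * T k) ^ 2 = cc (β^2) k * T k ^ 2 := by
        intro k; rw [mul_pow, Real.sq_sqrt (cc_nonneg hα1 k)]
      simp_rw [e1, e2, e3] at cs0
      exact cs0
    have cs2 : (∑ k ∈ Finset.range N, cc (β^2) k * (a k * T k)) ^ 2
        ≤ ((1 / (β - 1)) * A) ^ 2 := by
      calc (∑ k ∈ Finset.range N, cc (β^2) k * (a k * T k)) ^ 2
          ≤ A * ((1 / (β - 1)) ^ 2 * A) := cs.trans (mul_le_mul_of_nonneg_left hTT hA0)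
        _ = ((1 / (β - 1)) * A) ^ 2 := by ring
    have hs0 : 0 ≤ ∑ k ∈ Finset.range N, cc (β^2) k * (a k * T k) :=
      Finset.sum_nonneg fun k _ => by
        have := cc_nonneg hα1 k; have := ha k; have := hT0 k; positivity
    have hs1 : 0 ≤ (1 / (β - 1)) * A := by positivity
    calc ∑ k ∈ Finset.range N, cc (β^2) k * (a k * T k)
        = Real.sqrt ((∑ k ∈ Finset.range N, cc (β^2) k * (a k * T k)) ^ 2) :=
          (Real.sqrt_sq hs0).symm
      _ ≤ Real.sqrt (((1 / (β - 1)) * A) ^ 2) := Real.sqrt_le_sqrt cs2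
      _ = (1 / (β - 1)) * A := Real.sqrt_sq hs1
  have hfin : A + 2 * t * ((1 / (β - 1)) * A) + t ^ 2 * ((1 / (β - 1)) ^ 2 * A)
      = (1 + t / (β - 1)) ^ 2 * A := by ring
  nlinarith [mul_le_mul_of_nonneg_left haT (by linarith : (0:ℝ) ≤ 2 * t),
    mul_le_mul_of_nonneg_left hTT (sq_nonneg t)]

/-- For `α > 1`, `θ = e^{iψ}` with `ψ ∈ [-π,π)` and `f : ℕ → ℂ` finitely supported,
`[D_θ f, D_θ f]°_α ≤ (1 + 2|ψ|/log α)² [f,f]°_α`, both sides being nonnegative reals. -/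
theorem coxFormDiscrete_mulOp_bound (α ψ : ℝ) (hα : 1 < α)
    (hψ : ψ ∈ Set.Ico (-Real.pi) Real.pi) (θ : ℂ)
    (hθ : θ = Complex.exp (Complex.I * ψ)) (f : ℕ → ℂ)
    (hf : (Function.support f).Finite) :
    0 ≤ coxFormDiscrete α (fun n => θ ^ n * f n) (fun n => θ ^ n * f n) ∧
    coxFormDiscrete α (fun n => θ ^ n * f n) (fun n => θ ^ n * f n)
      ≤ (((1 + 2 * |ψ| / Real.log α) ^ 2 : ℝ) : ℂ) * coxFormDiscrete α f f := by
  -- support bound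
  obtain ⟨N, hfN⟩ : ∃ N : ℕ, ∀ n, N ≤ n → f n = 0 := by
    refine ⟨hf.toFinset.sup id + 1, fun n hn => ?_⟩
    by_contra h
    have hn' : n ∈ hf.toFinset := by simpa [Set.Finite.mem_toFinset, Function.mem_support] using h
    have : n ≤ hf.toFinset.sup id := Finset.le_sup (f := id) hn'
    omega
  set g : ℕ → ℂ := fun n => θ ^ n * f n with hg
  have hgN : ∀ n, N ≤ n → g n = 0 := fun n hn => by simp [hg, hfN n hn]
  -- θ facts
  have hθ1 : ‖θ‖ = 1 := by
    rw [hθ, Complex.norm_exp]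
    simp
  have hθ2 : ‖(θ - 1)‖ ≤ |ψ| := by
    have h1 : θ - 1 = ((Real.cos ψ - 1 : ℝ) : ℂ) + ((Real.sin ψ : ℝ) : ℂ) * Complex.I := by
      rw [hθ, mul_comm, Complex.exp_mul_I]
      push_cast [Complex.ofReal_cos, Complex.ofReal_sin]
      ring
    have h2 : ‖(θ - 1)‖ ^ 2 = (Real.cos ψ - 1) ^ 2 + Real.sin ψ ^ 2 := by
      rw [h1, Complex.sq_norm, Complex.normSq_add_mul_I]
    have h3 : (Real.cos ψ - 1) ^ 2 + Real.sin ψ ^ 2 ≤ ψ ^ 2 := by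
      have hc := Real.one_sub_sq_div_two_le_cos (x := ψ)
      have hs := Real.sin_sq_add_cos_sq ψ
      nlinarith
    calc ‖(θ - 1)‖ = Real.sqrt (‖(θ - 1)‖ ^ 2) :=
          (Real.sqrt_sq (norm_nonneg _)).symm
      _ ≤ Real.sqrt (ψ ^ 2) := Real.sqrt_le_sqrt (by rw [h2]; exact h3)
      _ = |ψ| := Real.sqrt_sq_eq_abs ψ
  -- β = sqrt α
  set β : ℝ := Real.sqrt α with hβdef
  have hα0 : (0:ℝ) < α := by linarith
  have hβ : 1 < β := by
    rw [hβdef]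
    rw [show (1:ℝ) = Real.sqrt 1 from (Real.sqrt_one).symm]
    exact Real.sqrt_lt_sqrt (by norm_num) hα
  have hβ2 : β ^ 2 = α := Real.sq_sqrt (le_of_lt hα0)
  have h1 : (0:ℝ) < β - 1 := by linarith
  -- the sequences
  set a : ℕ → ℝ := fun k => ‖(∑ n ∈ Finset.Ico k N, f n)‖ with ha'
  set b : ℕ → ℝ := fun k => ‖(∑ n ∈ Finset.Ico k N, g n)‖ with hb'
  have ha : ∀ k, 0 ≤ a k := fun k => norm_nonneg _
  have hb0 : ∀ k, 0 ≤ b k := fun k => norm_nonneg _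
  have hb : ∀ k, b k ≤ a k + |ψ| * ∑ j ∈ Finset.Ioo k N, a j := by
    intro k
    have e1 : ∑ n ∈ Finset.Ico k N, g n
        = θ ^ k * ∑ n ∈ Finset.Ico k N, f n
          + ∑ j ∈ Finset.Ioo k N, (θ ^ j - θ ^ (j - 1)) * ∑ n ∈ Finset.Ico j N, f n :=
      abel_sum θ f k N
    calc b k = ‖(θ ^ k * ∑ n ∈ Finset.Ico k N, f n
          + ∑ j ∈ Finset.Ioo k N, (θ ^ j - θ ^ (j - 1)) * ∑ n ∈ Finset.Ico j N, f n)‖ := by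
          show ‖_‖ = _
          rw [e1]
      _ ≤ ‖(θ ^ k * ∑ n ∈ Finset.Ico k N, f n)‖
          + ‖(∑ j ∈ Finset.Ioo k N, (θ ^ j - θ ^ (j - 1)) * ∑ n ∈ Finset.Ico j N, f n)‖ :=
          norm_add_le _ _
      _ ≤ a k + |ψ| * ∑ j ∈ Finset.Ioo k N, a j := by
          have e2 : ‖(θ ^ k * ∑ n ∈ Finset.Ico k N, f n)‖ = a k := by
            rw [norm_mul, norm_pow, hθ1, one_pow, one_mul]
          rw [e2]
          refine add_le_add (le_refl _) ?_
          calc ‖(∑ j ∈ Finset.Ioo k N, (θ ^ j - θ ^ (j - 1)) * ∑ n ∈ Finset.Ico j N, f n)‖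
              ≤ ∑ j ∈ Finset.Ioo k N, ‖((θ ^ j - θ ^ (j - 1)) * ∑ n ∈ Finset.Ico j N, f n)‖ :=
                norm_sum_le _ _
            _ ≤ ∑ j ∈ Finset.Ioo k N, |ψ| * a j := by
                refine Finset.sum_le_sum fun j hj => ?_
                rw [norm_mul]
                refine mul_le_mul_of_nonneg_right ?_ (ha j)
                have hj1 : 1 ≤ j := by have := (Finset.mem_Ioo.mp hj).1; omega
                have e3 : θ ^ j - θ ^ (j - 1) = θ ^ (j-1) * (θ - 1) := by
                  rw [mul_sub, mul_one, ← pow_succ]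
                  congr 2
                  omega
                rw [e3, norm_mul, norm_pow, hθ1, one_pow, one_mul]
                exact hθ2
            _ = |ψ| * ∑ j ∈ Finset.Ioo k N, a j := (Finset.mul_sum _ _ _).symm
  -- the form identities
  have hFf : coxFormDiscrete α f f
      = ((∑ k ∈ Finset.range N, cc α k * a k ^ 2 : ℝ) : ℂ) := form_eq α N f hfN
  have hFg : coxFormDiscrete α g g
      = ((∑ k ∈ Finset.range N, cc α k * b k ^ 2 : ℝ) : ℂ) := form_eq α N g hgN
  have hgg : coxFormDiscrete α (fun n => θ ^ n * f n) (fun n => θ ^ n * f n)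
      = coxFormDiscrete α g g := rfl
  constructor
  · rw [hgg, hFg, Complex.zero_le_real]
    refine Finset.sum_nonneg fun k _ => ?_
    have := cc_nonneg (le_of_lt hα) k
    have := hb0 k
    positivity
  · rw [hgg, hFg, hFf, ← Complex.ofReal_mul, Complex.real_le_real]
    have major : ∑ k ∈ Finset.range N, cc α k * b k ^ 2
        ≤ (1 + |ψ| / (β - 1)) ^ 2 * ∑ k ∈ Finset.range N, cc α k * a k ^ 2 := by
      rw [← hβ2]
      exact main_real β |ψ| hβ (abs_nonneg ψ) N a b ha hb0 hb
    refine major.trans ?_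
    refine mul_le_mul_of_nonneg_right ?_ ?_
    · have hlog : 0 < Real.log α := Real.log_pos hα
      have hlogβ : Real.log β ≤ β - 1 := Real.log_le_sub_one_of_pos (by linarith)
      have hlogα : Real.log α = 2 * Real.log β := by
        rw [← hβ2, Real.log_pow]
        push_cast
        ring
      have hdiv : |ψ| / (β - 1) ≤ 2 * |ψ| / Real.log α := by
        rw [div_le_div_iff₀ h1 hlog]
        have habs : 0 ≤ |ψ| := abs_nonneg ψ
        nlinarith
      have h2 : (0:ℝ) ≤ 1 + |ψ| / (β - 1) := by positivity
      exact pow_le_pow_left₀ h2 (by linarith) 2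
    · refine Finset.sum_nonneg fun k _ => ?_
      have := cc_nonneg (le_of_lt hα) k
      have := ha k
      positivity
end

section
/- Let α > 1 and let θ = e^{iψ} with ψ ∈ [-π, π). If Λ : ℕ × ℕ → ℂ is a positive semidefinite kernel which vanishes outside a finite set, then ∑_{k,l} θ^k · conj(θ)^l · α^{min(k,l)} · Λ(k,l) ≤ (1 + 2|ψ|/log α)² · ∑_{k,l} α^{min(k,l)} · Λ(k,l), where both sides are nonnegative real numbers. -/
open Finset

noncomputable section PosKernelAux

private def cK (α : ℝ) (m : ℕ) : ℝ := if m = 0 then 1 else (α - 1) * α ^ (m - 1)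

private lemma cK_nonneg {α : ℝ} (hα : 1 < α) (m : ℕ) : 0 ≤ cK α m := by
  unfold cK; split
  · norm_num
  · exact mul_nonneg (by linarith) (pow_nonneg (by linarith) _)

private lemma cK_sum {α : ℝ} (n : ℕ) : ∑ m ∈ range (n + 1), cK α m = α ^ n := by
  induction n with
  | zero => simp [cK]
  | succ n ih =>
      rw [sum_range_succ, ih]
      have : cK α (n + 1) = (α - 1) * α ^ n := by simp [cK]
      rw [this]; ring

private lemma geo_le {r : ℝ} (h0 : 0 ≤ r) (h1 : r < 1) (n : ℕ) :
    ∑ i ∈ range n, r ^ i ≤ (1 - r)⁻¹ := by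
  have h2 : (0:ℝ) < 1 - r := by linarith
  rw [geom_sum_eq h1.ne, div_le_iff_of_neg (by linarith : r - 1 < 0)]
  have e : (1 - r)⁻¹ * (r - 1) = -1 := by field_simp; ring
  rw [e]
  nlinarith [pow_nonneg h0 n]

private lemma col_bound {y : ℝ} (hy : 1 < y) (j : ℕ) :
    (y ^ 2 - 1) * ∑ m ∈ range j, cK (y ^ 4) m * ((y ^ 2)⁻¹) ^ m
      ≤ y ^ 2 * cK (y ^ 4) j * ((y ^ 2)⁻¹) ^ j := by
  have hy0 : (0:ℝ) < y := by linarith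
  have hy2 : (0:ℝ) < y ^ 2 := by positivity
  have h1 : (0:ℝ) < y ^ 2 - 1 := by nlinarith
  have h41 : (1:ℝ) < y ^ 4 := by nlinarith
  induction j with
  | zero => simp [cK]; positivity
  | succ j ih =>
      rw [sum_range_succ, mul_add]
      have hC : 0 ≤ cK (y ^ 4) j * ((y ^ 2)⁻¹) ^ j :=
        mul_nonneg (cK_nonneg h41 j) (pow_nonneg (by positivity) _)
      rcases Nat.eq_zero_or_pos j with hj | hj
      · subst hj
        have e1 : y ^ 2 * cK (y ^ 4) 1 * ((y ^ 2)⁻¹) ^ 1 = y ^ 4 - 1 := by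
          simp only [cK, if_neg one_ne_zero, pow_one]
          field_simp
          norm_num
        rw [e1]
        have e0 : cK (y ^ 4) 0 = 1 := by simp [cK]
        simp only [range_zero, sum_empty, mul_zero, zero_add, e0, pow_zero, mul_one]
        nlinarith
      · have hstep : cK (y ^ 4) (j + 1) = y ^ 4 * cK (y ^ 4) j := by
          obtain ⟨i, rfl⟩ : ∃ i, j = i + 1 := ⟨j - 1, by omega⟩
          simp only [cK, if_neg (Nat.succ_ne_zero _), Nat.add_sub_cancel]
          rw [pow_succ]
          ring
        have e2 : y ^ 2 * cK (y ^ 4) (j + 1) * ((y ^ 2)⁻¹) ^ (j + 1)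
            = y ^ 4 * (cK (y ^ 4) j * ((y ^ 2)⁻¹) ^ j) := by
          rw [hstep, pow_succ]
          have hyy : y ^ 2 * (y ^ 2)⁻¹ = 1 := mul_inv_cancel₀ hy2.ne'
          linear_combination (y ^ 4 * cK (y ^ 4) j * ((y ^ 2)⁻¹) ^ j) * hyy
        rw [e2]
        have hmain : (y ^ 2 - 1) * (cK (y ^ 4) j * ((y ^ 2)⁻¹) ^ j)
            ≤ (y ^ 4 - y ^ 2) * (cK (y ^ 4) j * ((y ^ 2)⁻¹) ^ j) :=
          mul_le_mul_of_nonneg_right (by nlinarith) hC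
        calc (y ^ 2 - 1) * ∑ m ∈ range j, cK (y ^ 4) m * ((y ^ 2)⁻¹) ^ m
              + (y ^ 2 - 1) * (cK (y ^ 4) j * ((y ^ 2)⁻¹) ^ j)
            ≤ y ^ 2 * cK (y ^ 4) j * ((y ^ 2)⁻¹) ^ j
              + (y ^ 4 - y ^ 2) * (cK (y ^ 4) j * ((y ^ 2)⁻¹) ^ j) := add_le_add ih hmain
          _ = y ^ 4 * (cK (y ^ 4) j * ((y ^ 2)⁻¹) ^ j) := by ring

private lemma schur_s5 {y : ℝ} (hy : 1 < y) (N : ℕ) (a : ℕ → ℝ) (ha : ∀ j, 0 ≤ a j) :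
    ∑ m ∈ range N, cK (y ^ 4) m * (∑ j ∈ Ico (m + 1) N, a j) ^ 2
      ≤ y ^ 2 / (y ^ 2 - 1) ^ 2 * ∑ m ∈ range N, cK (y ^ 4) m * a m ^ 2 := by
  have hy0 : (0:ℝ) < y := by linarith
  have hy2 : (0:ℝ) < y ^ 2 := by positivity
  have h1 : (0:ℝ) < y ^ 2 - 1 := by nlinarith
  have h41 : (1:ℝ) < y ^ 4 := by nlinarith
  have hr0 : (0:ℝ) ≤ (y ^ 2)⁻¹ := by positivity
  have hr1 : (y ^ 2)⁻¹ < 1 := inv_lt_one_of_one_lt₀ (by nlinarith)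
  have hAB : ∀ m, (∑ j ∈ Ico (m + 1) N, a j) ^ 2
      ≤ (((y ^ 2)⁻¹) ^ m * (y ^ 2 - 1)⁻¹) * ∑ j ∈ Ico (m + 1) N, (y ^ 2) ^ j * a j ^ 2 := by
    intro m
    have hcs := sum_mul_sq_le_sq_mul_sq (Ico (m + 1) N)
      (fun j => (y⁻¹) ^ j) (fun j => y ^ j * a j)
    have hL : ∑ j ∈ Ico (m + 1) N, (y⁻¹) ^ j * (y ^ j * a j) = ∑ j ∈ Ico (m + 1) N, a j :=
      sum_congr rfl fun j _ => by
        rw [← mul_assoc, ← mul_pow, inv_mul_cancel₀ hy0.ne', one_pow, one_mul]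
    have hF : ∑ j ∈ Ico (m + 1) N, ((y⁻¹) ^ j) ^ 2 = ∑ j ∈ Ico (m + 1) N, ((y ^ 2)⁻¹) ^ j :=
      sum_congr rfl fun j _ => by
        rw [← pow_mul, ← inv_pow, ← pow_mul, mul_comm]
    have hG : ∑ j ∈ Ico (m + 1) N, (y ^ j * a j) ^ 2
        = ∑ j ∈ Ico (m + 1) N, (y ^ 2) ^ j * a j ^ 2 :=
      sum_congr rfl fun j _ => by rw [mul_pow, ← pow_mul, ← pow_mul, mul_comm j 2]
    rw [hL, hF, hG] at hcs
    have htail : ∑ j ∈ Ico (m + 1) N, ((y ^ 2)⁻¹) ^ j ≤ ((y ^ 2)⁻¹) ^ m * (y ^ 2 - 1)⁻¹ := by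
      rw [sum_Ico_eq_sum_range]
      have e : ∀ i, ((y ^ 2)⁻¹) ^ (m + 1 + i) = ((y ^ 2)⁻¹) ^ (m + 1) * ((y ^ 2)⁻¹) ^ i :=
        fun i => pow_add _ _ _
      rw [sum_congr rfl fun i _ => e i, ← mul_sum]
      have hg := geo_le hr0 hr1 (N - (m + 1))
      have hpos : (0:ℝ) ≤ ((y ^ 2)⁻¹) ^ (m + 1) := by positivity
      calc ((y ^ 2)⁻¹) ^ (m + 1) * ∑ i ∈ range (N - (m + 1)), ((y ^ 2)⁻¹) ^ i
          ≤ ((y ^ 2)⁻¹) ^ (m + 1) * (1 - (y ^ 2)⁻¹)⁻¹ := mul_le_mul_of_nonneg_left hg hpos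
        _ = ((y ^ 2)⁻¹) ^ m * (y ^ 2 - 1)⁻¹ := by
            rw [pow_succ, mul_assoc]
            congr 1
            rw [inv_mul_eq_div, div_eq_iff (by positivity), eq_comm, inv_mul_eq_div,
              div_eq_iff h1.ne']
            field_simp
    exact hcs.trans (mul_le_mul_of_nonneg_right htail
      (sum_nonneg fun j _ => by positivity))
  have hsum1 : ∑ m ∈ range N, cK (y ^ 4) m * (∑ j ∈ Ico (m + 1) N, a j) ^ 2
      ≤ (y ^ 2 - 1)⁻¹ * ∑ m ∈ range N,
          (cK (y ^ 4) m * ((y ^ 2)⁻¹) ^ m) * ∑ j ∈ Ico (m + 1) N, (y ^ 2) ^ j * a j ^ 2 := by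
    rw [mul_sum]
    apply sum_le_sum; intro m _
    calc cK (y ^ 4) m * (∑ j ∈ Ico (m + 1) N, a j) ^ 2
        ≤ cK (y ^ 4) m * ((((y ^ 2)⁻¹) ^ m * (y ^ 2 - 1)⁻¹)
            * ∑ j ∈ Ico (m + 1) N, (y ^ 2) ^ j * a j ^ 2) :=
          mul_le_mul_of_nonneg_left (hAB m) (cK_nonneg h41 m)
      _ = (y ^ 2 - 1)⁻¹ * ((cK (y ^ 4) m * ((y ^ 2)⁻¹) ^ m)
            * ∑ j ∈ Ico (m + 1) N, (y ^ 2) ^ j * a j ^ 2) := by ring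
  have hswap : ∑ m ∈ range N,
        (cK (y ^ 4) m * ((y ^ 2)⁻¹) ^ m) * ∑ j ∈ Ico (m + 1) N, (y ^ 2) ^ j * a j ^ 2
      = ∑ j ∈ range N, ((y ^ 2) ^ j * a j ^ 2) * ∑ m ∈ range j, cK (y ^ 4) m * ((y ^ 2)⁻¹) ^ m := by
    have e1 : ∀ m : ℕ, Ico (m + 1) N = (range N).filter (fun j => m + 1 ≤ j) := by
      intro m; ext j; simp only [mem_Ico, mem_filter, mem_range]; omega
    calc ∑ m ∈ range N,
          (cK (y ^ 4) m * ((y ^ 2)⁻¹) ^ m) * ∑ j ∈ Ico (m + 1) N, (y ^ 2) ^ j * a j ^ 2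
        = ∑ m ∈ range N, ∑ j ∈ range N,
            (if m + 1 ≤ j then (cK (y ^ 4) m * ((y ^ 2)⁻¹) ^ m) * ((y ^ 2) ^ j * a j ^ 2) else 0) := by
          apply sum_congr rfl; intro m _
          rw [mul_sum, e1 m, sum_filter]
      _ = ∑ j ∈ range N, ∑ m ∈ range N,
            (if m + 1 ≤ j then (cK (y ^ 4) m * ((y ^ 2)⁻¹) ^ m) * ((y ^ 2) ^ j * a j ^ 2) else 0) :=
          sum_comm
      _ = ∑ j ∈ range N, ((y ^ 2) ^ j * a j ^ 2) * ∑ m ∈ range j, cK (y ^ 4) m * ((y ^ 2)⁻¹) ^ m := by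
          apply sum_congr rfl; intro j hj
          have e2 : (range N).filter (fun m => m + 1 ≤ j) = range j := by
            have := mem_range.mp hj
            ext m; simp only [mem_filter, mem_range]; omega
          rw [← sum_filter, e2, mul_sum]
          exact sum_congr rfl fun m _ => by ring
  have hcol : ∑ j ∈ range N, ((y ^ 2) ^ j * a j ^ 2) * ∑ m ∈ range j, cK (y ^ 4) m * ((y ^ 2)⁻¹) ^ m
      ≤ ∑ j ∈ range N, ((y ^ 2) ^ j * a j ^ 2)
          * ((y ^ 2 - 1)⁻¹ * (y ^ 2 * cK (y ^ 4) j * ((y ^ 2)⁻¹) ^ j)) := by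
    apply sum_le_sum; intro j _
    apply mul_le_mul_of_nonneg_left _ (by positivity)
    rw [inv_mul_eq_div, le_div_iff₀ h1]
    calc (∑ m ∈ range j, cK (y ^ 4) m * ((y ^ 2)⁻¹) ^ m) * (y ^ 2 - 1)
        = (y ^ 2 - 1) * ∑ m ∈ range j, cK (y ^ 4) m * ((y ^ 2)⁻¹) ^ m := by ring
      _ ≤ y ^ 2 * cK (y ^ 4) j * ((y ^ 2)⁻¹) ^ j := col_bound hy j
  have hfin : ∑ j ∈ range N, ((y ^ 2) ^ j * a j ^ 2)
        * ((y ^ 2 - 1)⁻¹ * (y ^ 2 * cK (y ^ 4) j * ((y ^ 2)⁻¹) ^ j))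
      = (y ^ 2 * (y ^ 2 - 1)⁻¹) * ∑ j ∈ range N, cK (y ^ 4) j * a j ^ 2 := by
    rw [mul_sum]
    apply sum_congr rfl; intro j _
    have hone : (y ^ 2) ^ j * ((y ^ 2)⁻¹) ^ j = 1 := by
      rw [← mul_pow, mul_inv_cancel₀ hy2.ne', one_pow]
    calc ((y ^ 2) ^ j * a j ^ 2) * ((y ^ 2 - 1)⁻¹ * (y ^ 2 * cK (y ^ 4) j * ((y ^ 2)⁻¹) ^ j))
        = ((y ^ 2) ^ j * ((y ^ 2)⁻¹) ^ j) * (a j ^ 2 * (y ^ 2 - 1)⁻¹ * y ^ 2 * cK (y ^ 4) j) := by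
          ring
      _ = y ^ 2 * (y ^ 2 - 1)⁻¹ * (cK (y ^ 4) j * a j ^ 2) := by rw [hone]; ring
  calc ∑ m ∈ range N, cK (y ^ 4) m * (∑ j ∈ Ico (m + 1) N, a j) ^ 2
      ≤ (y ^ 2 - 1)⁻¹ * ∑ m ∈ range N,
          (cK (y ^ 4) m * ((y ^ 2)⁻¹) ^ m) * ∑ j ∈ Ico (m + 1) N, (y ^ 2) ^ j * a j ^ 2 := hsum1
    _ = (y ^ 2 - 1)⁻¹ * ∑ j ∈ range N,
          ((y ^ 2) ^ j * a j ^ 2) * ∑ m ∈ range j, cK (y ^ 4) m * ((y ^ 2)⁻¹) ^ m := by rw [hswap]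
    _ ≤ (y ^ 2 - 1)⁻¹ * ∑ j ∈ range N, ((y ^ 2) ^ j * a j ^ 2)
          * ((y ^ 2 - 1)⁻¹ * (y ^ 2 * cK (y ^ 4) j * ((y ^ 2)⁻¹) ^ j)) :=
        mul_le_mul_of_nonneg_left hcol (by positivity)
    _ = (y ^ 2 - 1)⁻¹ * ((y ^ 2 * (y ^ 2 - 1)⁻¹) * ∑ j ∈ range N, cK (y ^ 4) j * a j ^ 2) := by
        rw [hfin]
    _ = y ^ 2 / (y ^ 2 - 1) ^ 2 * ∑ m ∈ range N, cK (y ^ 4) m * a m ^ 2 := by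
        rw [div_eq_mul_inv, sq (y ^ 2 - 1), mul_inv]
        ring

end PosKernelAux

open scoped BigOperators ComplexOrder

/-- A kernel `K : X × X → ℂ` is positive semidefinite if all the finite sums
`∑ᵢⱼ cᵢ conj(cⱼ) K(xᵢ,xⱼ)` are nonnegative real numbers. -/
def IsPosSemidefKernel {X : Type*} (K : X → X → ℂ) : Prop :=
  ∀ (n : ℕ) (x : Fin n → X) (c : Fin n → ℂ),
    0 ≤ ∑ i, ∑ j, c i * (starRingEnd ℂ) (c j) * K (x i) (x j)

set_option maxHeartbeats 3200000 in
/-- For `α > 1`, `θ = e^{iψ}` with `ψ ∈ [-π,π)`, and `Λ : ℕ × ℕ → ℂ` a positive semidefinite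
kernel vanishing outside a finite set,
`∑_{k,l} θ^k conj(θ)^l α^(min k l) Λ(k,l) ≤ (1 + 2|ψ|/log α)² ∑_{k,l} α^(min k l) Λ(k,l)`,
both sides being nonnegative real numbers. -/
theorem posSemidefKernel_mulOp_bound (α ψ : ℝ) (hα : 1 < α)
    (hψ : ψ ∈ Set.Ico (-Real.pi) Real.pi) (θ : ℂ)
    (hθ : θ = Complex.exp (Complex.I * ψ)) (Λ : ℕ → ℕ → ℂ)
    (hΛ : IsPosSemidefKernel Λ)
    (hfin : (Function.support fun p : ℕ × ℕ => Λ p.1 p.2).Finite) :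
    0 ≤ ∑' k : ℕ, ∑' l : ℕ,
        θ ^ k * (starRingEnd ℂ) θ ^ l * ((α ^ min k l : ℝ) : ℂ) * Λ k l ∧
    (∑' k : ℕ, ∑' l : ℕ,
        θ ^ k * (starRingEnd ℂ) θ ^ l * ((α ^ min k l : ℝ) : ℂ) * Λ k l)
      ≤ (((1 + 2 * |ψ| / Real.log α) ^ 2 : ℝ) : ℂ) *
        ∑' k : ℕ, ∑' l : ℕ, ((α ^ min k l : ℝ) : ℂ) * Λ k l := by
  classical
  -- choose N beyond the support
  set F : Finset (ℕ × ℕ) := hfin.toFinset with hF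
  set N : ℕ := (F.sup fun p => max p.1 p.2) + 1 with hNdef
  have hzero : ∀ k l : ℕ, N ≤ k ∨ N ≤ l → Λ k l = 0 := by
    intro k l h
    by_contra hne
    have hmem : (k, l) ∈ F := hfin.mem_toFinset.mpr (by simpa [Function.mem_support] using hne)
    have hle := Finset.le_sup (f := fun p : ℕ × ℕ => max p.1 p.2) hmem
    simp only [max_le_iff] at hle
    omega
  -- reduce tsums to finite sums
  have hred : ∀ c : ℕ → ℕ → ℂ,
      (∑' k : ℕ, ∑' l : ℕ, c k l * Λ k l)
        = ∑ k ∈ range N, ∑ l ∈ range N, c k l * Λ k l := by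
    intro c
    rw [tsum_eq_sum (s := range N) (fun k hk => ?_)]
    · exact Finset.sum_congr rfl fun k _ =>
        tsum_eq_sum fun l hl => by
          rw [hzero k l (Or.inr (le_of_not_gt (fun h => hl (mem_range.mpr h)))), mul_zero]
    · have : ∀ l : ℕ, c k l * Λ k l = 0 := fun l => by
        rw [hzero k l (Or.inl (le_of_not_gt (fun h => hk (mem_range.mpr h)))), mul_zero]
      simp [this]
  -- hermitian property of the kernel
  have him : ∀ k : ℕ, (Λ k k).im = 0 := by
    intro k
    have h := hΛ 1 (fun _ => k) (fun _ => 1)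
    simp only [Fin.sum_univ_one, map_one, one_mul] at h
    exact ((Complex.le_def.mp h).2).symm
  have herm : ∀ k l : ℕ, Λ l k = (starRingEnd ℂ) (Λ k l) := by
    intro k l
    have h1 := hΛ 2 ![k, l] ![1, 1]
    have h2 := hΛ 2 ![k, l] ![1, Complex.I]
    simp only [Fin.sum_univ_two, Matrix.cons_val_zero, Matrix.cons_val_one, Matrix.head_cons,
      map_one, one_mul, mul_one, Complex.conj_I] at h1 h2
    have e1 := (Complex.le_def.mp h1).2
    have e2 := (Complex.le_def.mp h2).2
    simp only [Complex.add_im, Complex.mul_im, Complex.zero_im, Complex.I_re, Complex.I_im,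
      Complex.neg_im, Complex.neg_re, him k, him l] at e1 e2
    apply Complex.ext
    · simp only [Complex.conj_re]; linarith [e2]
    · simp only [Complex.conj_im]; linarith [e1]
  -- the matrix is positive semidefinite
  set M : Matrix (Fin N) (Fin N) ℂ := Matrix.of (fun i j => Λ i j) with hMdef
  have hM : M.PosSemidef := by
    refine Matrix.PosSemidef.of_dotProduct_mulVec_nonneg ?_ ?_
    · ext i j
      simp only [Matrix.conjTranspose_apply, hMdef, Matrix.of_apply]
      rw [Complex.star_def]
      exact (herm (j : ℕ) (i : ℕ)).symm
    · intro x
      have h := hΛ N (fun i : Fin N => (i : ℕ)) (fun i => (starRingEnd ℂ) (x i))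
      have e : dotProduct (star x) (M.mulVec x)
          = ∑ i, ∑ j, (starRingEnd ℂ) (x i) * (starRingEnd ℂ) ((starRingEnd ℂ) (x j)) * Λ i j := by
        simp only [dotProduct, Matrix.mulVec, Pi.star_apply, hMdef, Matrix.of_apply,
          Finset.mul_sum, Complex.star_def]
        exact Finset.sum_congr rfl fun i _ => Finset.sum_congr rfl fun j _ => by
          rw [Complex.conj_conj]; ring
      rw [e]
      exact h
  obtain ⟨B, hB⟩ : ∃ B : Matrix (Fin N) (Fin N) ℂ, M = B.conjTranspose * B := by
    open scoped MatrixOrder in exact CStarAlgebra.nonneg_iff_eq_star_mul_self.mp hM.nonneg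
  have hΛB : ∀ k l : Fin N, Λ (k : ℕ) (l : ℕ) = ∑ i : Fin N, (starRingEnd ℂ) (B i k) * B i l := by
    intro k l
    have : M k l = (B.conjTranspose * B) k l := by rw [← hB]
    simpa [Matrix.mul_apply, Matrix.conjTranspose_apply, Complex.star_def, hMdef] using this
  -- the Gram-vector map
  set V : (ℕ → ℂ) → EuclideanSpace ℂ (Fin N) :=
    fun f => WithLp.toLp 2 (fun i => ∑ l : Fin N, B i l * (starRingEnd ℂ) (f (l : ℕ))) with hVdef
  have hVapply : ∀ (f : ℕ → ℂ) (i : Fin N),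
      V f i = ∑ l : Fin N, B i l * (starRingEnd ℂ) (f (l : ℕ)) := fun f i => rfl
  -- quadratic form identity
  have hQ : ∀ f : ℕ → ℂ,
      (∑ k ∈ range N, ∑ l ∈ range N, f k * (starRingEnd ℂ) (f l) * Λ k l)
        = ((‖V f‖ ^ 2 : ℝ) : ℂ) := by
    intro f
    have h1 : (∑ k ∈ range N, ∑ l ∈ range N, f k * (starRingEnd ℂ) (f l) * Λ k l)
        = ∑ k : Fin N, ∑ l : Fin N, f (k : ℕ) * (starRingEnd ℂ) (f (l : ℕ)) * Λ (k : ℕ) (l : ℕ) := by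
      rw [← Fin.sum_univ_eq_sum_range (fun k => ∑ l ∈ range N, f k * (starRingEnd ℂ) (f l) * Λ k l) N]
      exact Finset.sum_congr rfl fun k _ =>
        (Fin.sum_univ_eq_sum_range (fun l => f (k : ℕ) * (starRingEnd ℂ) (f l) * Λ (k : ℕ) l) N).symm
    have h2 : ∀ i : Fin N, (starRingEnd ℂ) (V f i) * V f i
        = ∑ k : Fin N, ∑ l : Fin N,
            f (k : ℕ) * (starRingEnd ℂ) (f (l : ℕ)) * ((starRingEnd ℂ) (B i k) * B i l) := by
      intro i
      have hc : (starRingEnd ℂ) (V f i) = ∑ k : Fin N, (starRingEnd ℂ) (B i k) * f (k : ℕ) := by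
        rw [hVapply, map_sum]
        exact Finset.sum_congr rfl fun k _ => by
          rw [map_mul, Complex.conj_conj]
      rw [hc, hVapply, Finset.sum_mul_sum]
      exact Finset.sum_congr rfl fun k _ => Finset.sum_congr rfl fun l _ => by ring
    have h3 : ∑ i : Fin N, (starRingEnd ℂ) (V f i) * V f i
        = ∑ k : Fin N, ∑ l : Fin N, f (k : ℕ) * (starRingEnd ℂ) (f (l : ℕ)) * Λ (k : ℕ) (l : ℕ) := by
      rw [Finset.sum_congr rfl fun i _ => h2 i, Finset.sum_comm]
      refine Finset.sum_congr rfl fun k _ => ?_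
      rw [Finset.sum_comm]
      refine Finset.sum_congr rfl fun l _ => ?_
      rw [← Finset.mul_sum, ← hΛB k l]
    have h4 : ∑ i : Fin N, (starRingEnd ℂ) (V f i) * V f i = ((‖V f‖ ^ 2 : ℝ) : ℂ) := by
      have e : ∀ z : ℂ, (starRingEnd ℂ) z * z = ((‖z‖ ^ 2 : ℝ) : ℂ) := by
        intro z
        rw [mul_comm, Complex.mul_conj, Complex.sq_norm]
      rw [Finset.sum_congr rfl fun i _ => e (V f i), ← Complex.ofReal_sum]
      congr 1
      have := EuclideanSpace.norm_eq (V f)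
      rw [this, Real.sq_sqrt (Finset.sum_nonneg fun i _ => sq_nonneg _)]
    rw [h1, ← h3, h4]
  -- truncated geometric kernels
  set gv : ℂ → ℕ → (ℕ → ℂ) := fun t m k => if m ≤ k then t ^ k else 0 with hgdef
  -- key decomposition
  have hkey : ∀ t : ℂ,
      (∑ k ∈ range N, ∑ l ∈ range N,
          t ^ k * (starRingEnd ℂ) t ^ l * ((α ^ min k l : ℝ) : ℂ) * Λ k l)
        = ∑ m ∈ range N, ((cK α m : ℝ) : ℂ) *
            ∑ k ∈ range N, ∑ l ∈ range N,
              gv t m k * (starRingEnd ℂ) (gv t m l) * Λ k l := by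
    intro t
    have step1 : ∀ m, ((cK α m : ℝ) : ℂ) *
          (∑ k ∈ range N, ∑ l ∈ range N, gv t m k * (starRingEnd ℂ) (gv t m l) * Λ k l)
        = ∑ k ∈ range N, ∑ l ∈ range N,
            ((cK α m : ℝ) : ℂ) * (gv t m k * (starRingEnd ℂ) (gv t m l)) * Λ k l := by
      intro m
      rw [Finset.mul_sum]
      refine Finset.sum_congr rfl fun k _ => ?_
      rw [Finset.mul_sum]
      exact Finset.sum_congr rfl fun l _ => by ring
    have main : ∑ m ∈ range N, ((cK α m : ℝ) : ℂ) *
          (∑ k ∈ range N, ∑ l ∈ range N, gv t m k * (starRingEnd ℂ) (gv t m l) * Λ k l)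
        = ∑ k ∈ range N, ∑ l ∈ range N,
            t ^ k * (starRingEnd ℂ) t ^ l * ((α ^ min k l : ℝ) : ℂ) * Λ k l := by
      calc ∑ m ∈ range N, ((cK α m : ℝ) : ℂ) *
            (∑ k ∈ range N, ∑ l ∈ range N, gv t m k * (starRingEnd ℂ) (gv t m l) * Λ k l)
          = ∑ m ∈ range N, ∑ k ∈ range N, ∑ l ∈ range N,
              ((cK α m : ℝ) : ℂ) * (gv t m k * (starRingEnd ℂ) (gv t m l)) * Λ k l :=
            Finset.sum_congr rfl fun m _ => step1 m
        _ = ∑ k ∈ range N, ∑ m ∈ range N, ∑ l ∈ range N,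
              ((cK α m : ℝ) : ℂ) * (gv t m k * (starRingEnd ℂ) (gv t m l)) * Λ k l :=
            Finset.sum_comm
        _ = ∑ k ∈ range N, ∑ l ∈ range N, ∑ m ∈ range N,
              ((cK α m : ℝ) : ℂ) * (gv t m k * (starRingEnd ℂ) (gv t m l)) * Λ k l :=
            Finset.sum_congr rfl fun k _ => Finset.sum_comm
        _ = ∑ k ∈ range N, ∑ l ∈ range N,
              t ^ k * (starRingEnd ℂ) t ^ l * ((α ^ min k l : ℝ) : ℂ) * Λ k l := by
            refine Finset.sum_congr rfl fun k hk => Finset.sum_congr rfl fun l hl => ?_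
            rw [← Finset.sum_mul]
            congr 1
            have hmin : min k l + 1 ≤ N := by
              have := mem_range.mp hk; have := mem_range.mp hl; omega
            have e1 : ∀ m, ((cK α m : ℝ) : ℂ) * (gv t m k * (starRingEnd ℂ) (gv t m l))
                = if m ≤ min k l then ((cK α m : ℝ) : ℂ) * (t ^ k * (starRingEnd ℂ) t ^ l)
                  else 0 := by
              intro m
              simp only [hgdef]
              by_cases h1 : m ≤ k <;> by_cases h2 : m ≤ l <;>
                simp [h1, h2, le_min_iff, map_pow, map_zero] <;> tauto
            rw [Finset.sum_congr rfl fun m _ => e1 m, ← Finset.sum_filter]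
            have e2 : (range N).filter (fun m => m ≤ min k l) = range (min k l + 1) := by
              ext m; simp only [mem_filter, mem_range]; omega
            rw [e2, ← Finset.sum_mul]
            have e3 : (∑ m ∈ range (min k l + 1), ((cK α m : ℝ) : ℂ))
                = ((α ^ min k l : ℝ) : ℂ) := by
              rw [← Complex.ofReal_sum]
              exact congrArg _ (cK_sum (min k l))
            rw [e3]
            ring
    exact main.symm
  -- θ is unimodular
  have habs : ‖θ‖ = 1 := by
    rw [hθ, Complex.norm_exp]
    simp
  set ε : ℝ := ‖θ - 1‖ with hεdef
  have hεnn : 0 ≤ ε := norm_nonneg _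
  have hdabs : ∀ j : ℕ, 1 ≤ j → ‖θ ^ j - θ ^ (j - 1)‖ = ε := by
    intro j hj
    obtain ⟨i, rfl⟩ : ∃ i, j = i + 1 := ⟨j - 1, by omega⟩
    have e : θ ^ (i + 1) - θ ^ (i + 1 - 1) = θ ^ i * (θ - 1) := by
      simp only [Nat.add_sub_cancel, pow_succ]
      ring
    rw [e, norm_mul, norm_pow, habs, one_pow, one_mul]
  -- triangle inequality step
  have htri : ∀ m, m < N → ‖V (gv θ m)‖ ≤ ‖V (gv 1 m)‖
      + ε * ∑ j ∈ Ico (m + 1) N, ‖V (gv 1 j)‖ := by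
    intro m hm
    set coef : ℕ → ℂ := fun j => if j = m then θ ^ m else θ ^ j - θ ^ (j - 1) with hcoef
    have hpt : ∀ l : ℕ, l < N → gv θ m l = ∑ j ∈ Ico m N, coef j * gv 1 j l := by
      intro l hl
      by_cases hml : m ≤ l
      · have hgl : gv θ m l = θ ^ l := by simp [hgdef, hml]
        have hterm : ∀ j, coef j * gv 1 j l = if j ≤ l then coef j else 0 := by
          intro j
          simp only [hgdef, one_pow]
          split <;> simp
        rw [hgl, Finset.sum_congr rfl fun j _ => hterm j, ← Finset.sum_filter]
        have e2 : (Ico m N).filter (fun j => j ≤ l) = Ico m (l + 1) := by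
          ext j; simp only [mem_filter, mem_Ico]; omega
        rw [e2, Finset.sum_eq_sum_Ico_succ_bot (by omega : m < l + 1)]
        have e3 : ∑ j ∈ Ico (m + 1) (l + 1), coef j = θ ^ l - θ ^ m := by
          have e4 : ∀ j ∈ Ico (m + 1) (l + 1), coef j = θ ^ j - θ ^ (j - 1) := by
            intro j hj
            have := (mem_Ico.mp hj).1
            simp only [hcoef, if_neg (by omega : j ≠ m)]
          rw [Finset.sum_congr rfl e4, Finset.sum_Ico_eq_sum_range]
          have e5 : ∀ i ∈ range (l + 1 - (m + 1)),
              θ ^ (m + 1 + i) - θ ^ (m + 1 + i - 1) = θ ^ (m + (i + 1)) - θ ^ (m + i) := by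
            intro i _
            congr 2 <;> omega
          rw [Finset.sum_congr rfl e5]
          have e6 : l + 1 - (m + 1) = l - m := by omega
          rw [e6, Finset.sum_range_sub (fun i => θ ^ (m + i)) (l - m),
            Nat.add_sub_cancel' hml]
          norm_num
        rw [e3]
        simp only [hcoef, if_pos rfl]
        ring
      · have hgl : gv θ m l = 0 := by simp [hgdef, hml]
        rw [hgl]
        symm
        apply Finset.sum_eq_zero
        intro j hj
        have h1 := (mem_Ico.mp hj).1
        have hz : gv 1 j l = 0 := by
          simp only [hgdef, one_pow, ite_eq_right_iff]
          intro h
          omega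
        rw [hz, mul_zero]
    have hvec : V (gv θ m) = ∑ j ∈ Ico m N, (starRingEnd ℂ) (coef j) • V (gv 1 j) := by
      have hRapp : ∀ i : Fin N,
          (∑ j ∈ Ico m N, (starRingEnd ℂ) (coef j) • V (gv 1 j)) i
            = ∑ j ∈ Ico m N, (starRingEnd ℂ) (coef j) * (V (gv 1 j) i) := by
        intro i
        calc (∑ j ∈ Ico m N, (starRingEnd ℂ) (coef j) • V (gv 1 j)) i
            = EuclideanSpace.proj i (∑ j ∈ Ico m N, (starRingEnd ℂ) (coef j) • V (gv 1 j)) :=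
              rfl
          _ = ∑ j ∈ Ico m N, EuclideanSpace.proj i ((starRingEnd ℂ) (coef j) • V (gv 1 j)) :=
              map_sum _ _ _
          _ = ∑ j ∈ Ico m N, (starRingEnd ℂ) (coef j) * (V (gv 1 j) i) := by
              refine Finset.sum_congr rfl fun j _ => ?_
              rw [map_smul]
              rfl
      ext i
      rw [hRapp i, hVapply]
      have hterm2 : ∀ j ∈ Ico m N, (starRingEnd ℂ) (coef j) * V (gv 1 j) i
          = ∑ l : Fin N, B i l * ((starRingEnd ℂ) (coef j) * (starRingEnd ℂ) (gv 1 j (l : ℕ))) := by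
        intro j _
        rw [hVapply, Finset.mul_sum]
        exact Finset.sum_congr rfl fun l _ => by ring
      rw [Finset.sum_congr rfl hterm2, Finset.sum_comm]
      refine Finset.sum_congr rfl fun l _ => ?_
      rw [← Finset.mul_sum]
      congr 1
      rw [hpt (l : ℕ) l.isLt, map_sum]
      exact Finset.sum_congr rfl fun j _ => by rw [map_mul]
    calc ‖V (gv θ m)‖ = ‖∑ j ∈ Ico m N, (starRingEnd ℂ) (coef j) • V (gv 1 j)‖ := by rw [hvec]
      _ ≤ ∑ j ∈ Ico m N, ‖(starRingEnd ℂ) (coef j) • V (gv 1 j)‖ := norm_sum_le _ _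
      _ = ∑ j ∈ Ico m N, ‖coef j‖ * ‖V (gv 1 j)‖ := by
          refine Finset.sum_congr rfl fun j _ => ?_
          rw [norm_smul]
          congr 1
          rw [Complex.norm_conj]
      _ = ‖coef m‖ * ‖V (gv 1 m)‖
            + ∑ j ∈ Ico (m + 1) N, ‖coef j‖ * ‖V (gv 1 j)‖ :=
          Finset.sum_eq_sum_Ico_succ_bot hm _
      _ = ‖V (gv 1 m)‖ + ε * ∑ j ∈ Ico (m + 1) N, ‖V (gv 1 j)‖ := by
          have ecm : ‖coef m‖ = 1 := by
            simp only [hcoef, if_pos rfl]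
            rw [norm_pow, habs, one_pow]
          rw [ecm, one_mul, Finset.mul_sum]
          congr 1
          refine Finset.sum_congr rfl fun j hj => ?_
          have h1 := (mem_Ico.mp hj).1
          simp only [hcoef, if_neg (by omega : j ≠ m)]
          rw [hdabs j (by omega)]
  -- ε ≤ |ψ|
  have hεψ : ε ≤ |ψ| := by
    have hsq : ε ^ 2 = 2 - 2 * Real.cos ψ := by
      rw [hεdef, Complex.sq_norm, hθ, mul_comm, Complex.exp_mul_I,
        ← Complex.ofReal_cos, ← Complex.ofReal_sin]
      simp only [Complex.normSq_apply, Complex.sub_re, Complex.add_re, Complex.ofReal_re,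
        Complex.mul_re, Complex.I_re, Complex.I_im, Complex.ofReal_im, Complex.one_re,
        Complex.sub_im, Complex.add_im, Complex.mul_im, Complex.one_im]
      nlinarith [Real.sin_sq_add_cos_sq ψ]
    have h2 : ε ^ 2 ≤ |ψ| ^ 2 := by
      rw [hsq, sq_abs]
      nlinarith [Real.one_sub_sq_div_two_le_cos (x := ψ)]
    nlinarith [hεnn, abs_nonneg ψ, h2]
  -- the quarter-power parameter
  have hα0 : (0:ℝ) < α := by linarith
  have hL : 0 < Real.log α := Real.log_pos hα
  set y : ℝ := Real.sqrt (Real.sqrt α) with hydef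
  have hsα : 0 ≤ Real.sqrt α := Real.sqrt_nonneg _
  have hy2 : y ^ 2 = Real.sqrt α := Real.sq_sqrt hsα
  have hy4 : y ^ 4 = α := by
    have h' : (y ^ 2) ^ 2 = α := by rw [hy2]; exact Real.sq_sqrt hα0.le
    nlinarith [h']
  have hy0 : 0 ≤ y := Real.sqrt_nonneg _
  have hsα1 : 1 < Real.sqrt α := by
    have h := Real.sqrt_lt_sqrt (by norm_num : (0:ℝ) ≤ 1) hα
    rwa [Real.sqrt_one] at h
  have hy : 1 < y := by
    rw [hydef]
    have h := Real.sqrt_lt_sqrt (by norm_num : (0:ℝ) ≤ 1) hsα1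
    rwa [Real.sqrt_one] at h
  have hy2pos : (0:ℝ) < y ^ 2 - 1 := by nlinarith
  set κ : ℝ := y / (y ^ 2 - 1) with hκdef
  have hκnn : 0 ≤ κ := div_nonneg (by linarith) hy2pos.le
  have hκ : κ ≤ 2 / Real.log α := by
    have ht : 0 < Real.log y := Real.log_pos hy
    have hsinh := Real.self_lt_sinh_iff.mpr ht
    rw [Real.sinh_eq] at hsinh
    have hey : Real.exp (Real.log y) = y := Real.exp_log (by linarith)
    have heny : Real.exp (-Real.log y) = y⁻¹ := by rw [Real.exp_neg, hey]
    rw [hey, heny] at hsinh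
    have hyy : y * y⁻¹ = 1 := mul_inv_cancel₀ (by linarith)
    have hLy : Real.log α = 4 * Real.log y := by
      rw [← hy4, Real.log_pow]
      push_cast
      ring
    rw [hκdef, hLy, div_le_div_iff₀ hy2pos (by linarith)]
    nlinarith [mul_lt_mul_of_pos_left hsinh (show (0:ℝ) < y by linarith), hyy]
  -- cast identities
  have hcast : ∀ t : ℂ, (∑ k ∈ range N, ∑ l ∈ range N,
        t ^ k * (starRingEnd ℂ) t ^ l * ((α ^ min k l : ℝ) : ℂ) * Λ k l)
      = ((∑ m ∈ range N, cK α m * ‖V (gv t m)‖ ^ 2 : ℝ) : ℂ) := by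
    intro t
    rw [hkey t]
    calc ∑ m ∈ range N, ((cK α m : ℝ) : ℂ) *
          ∑ k ∈ range N, ∑ l ∈ range N, gv t m k * (starRingEnd ℂ) (gv t m l) * Λ k l
        = ∑ m ∈ range N, ((cK α m * ‖V (gv t m)‖ ^ 2 : ℝ) : ℂ) := by
          refine Finset.sum_congr rfl fun m _ => ?_
          rw [hQ (gv t m), ← Complex.ofReal_mul]
      _ = _ := (Complex.ofReal_sum _ _).symm
  have h1eq : (∑ k ∈ range N, ∑ l ∈ range N, ((α ^ min k l : ℝ) : ℂ) * Λ k l)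
      = ((∑ m ∈ range N, cK α m * ‖V (gv 1 m)‖ ^ 2 : ℝ) : ℂ) := by
    have h := hcast 1
    simp only [one_pow, map_one, one_mul] at h
    exact h
  have hredθ : (∑' k : ℕ, ∑' l : ℕ,
        θ ^ k * (starRingEnd ℂ) θ ^ l * ((α ^ min k l : ℝ) : ℂ) * Λ k l)
      = ∑ k ∈ range N, ∑ l ∈ range N,
          θ ^ k * (starRingEnd ℂ) θ ^ l * ((α ^ min k l : ℝ) : ℂ) * Λ k l :=
    hred (fun k l => θ ^ k * (starRingEnd ℂ) θ ^ l * ((α ^ min k l : ℝ) : ℂ))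
  have hred1 : (∑' k : ℕ, ∑' l : ℕ, ((α ^ min k l : ℝ) : ℂ) * Λ k l)
      = ∑ k ∈ range N, ∑ l ∈ range N, ((α ^ min k l : ℝ) : ℂ) * Λ k l :=
    hred (fun k l => ((α ^ min k l : ℝ) : ℂ))
  -- the real-variable endgame
  have hcnn : ∀ m, 0 ≤ cK α m := cK_nonneg hα
  have hT1nn : 0 ≤ ∑ m ∈ range N, cK α m * ‖V (gv 1 m)‖ ^ 2 :=
    Finset.sum_nonneg fun m _ => mul_nonneg (hcnn m) (sq_nonneg _)
  have hTθnn : 0 ≤ ∑ m ∈ range N, cK α m * ‖V (gv θ m)‖ ^ 2 :=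
    Finset.sum_nonneg fun m _ => mul_nonneg (hcnn m) (sq_nonneg _)
  have hSnn : 0 ≤ ∑ m ∈ range N, cK α m *
      (‖V (gv 1 m)‖ * ∑ j ∈ Ico (m + 1) N, ‖V (gv 1 j)‖) :=
    Finset.sum_nonneg fun m _ => mul_nonneg (hcnn m) (mul_nonneg (norm_nonneg _)
      (Finset.sum_nonneg fun j _ => norm_nonneg _))
  have hT2κ : (∑ m ∈ range N, cK α m * (∑ j ∈ Ico (m + 1) N, ‖V (gv 1 j)‖) ^ 2)
      ≤ κ ^ 2 * ∑ m ∈ range N, cK α m * ‖V (gv 1 m)‖ ^ 2 := by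
    have h := schur_s5 hy N (fun m => ‖V (gv 1 m)‖) (fun m => norm_nonneg _)
    rw [hy4] at h
    have eκ : y ^ 2 / (y ^ 2 - 1) ^ 2 = κ ^ 2 := by
      rw [hκdef, div_pow]
    rw [eκ] at h
    exact h
  have hCS : (∑ m ∈ range N, cK α m *
        (‖V (gv 1 m)‖ * ∑ j ∈ Ico (m + 1) N, ‖V (gv 1 j)‖)) ^ 2
      ≤ (∑ m ∈ range N, cK α m * ‖V (gv 1 m)‖ ^ 2)
        * ∑ m ∈ range N, cK α m * (∑ j ∈ Ico (m + 1) N, ‖V (gv 1 j)‖) ^ 2 := by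
    have hcs := sum_mul_sq_le_sq_mul_sq (range N)
      (fun m => Real.sqrt (cK α m) * ‖V (gv 1 m)‖)
      (fun m => Real.sqrt (cK α m) * ∑ j ∈ Ico (m + 1) N, ‖V (gv 1 j)‖)
    have e1 : ∑ m ∈ range N, (Real.sqrt (cK α m) * ‖V (gv 1 m)‖)
          * (Real.sqrt (cK α m) * ∑ j ∈ Ico (m + 1) N, ‖V (gv 1 j)‖)
        = ∑ m ∈ range N, cK α m *
            (‖V (gv 1 m)‖ * ∑ j ∈ Ico (m + 1) N, ‖V (gv 1 j)‖) :=
      Finset.sum_congr rfl fun m _ => by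
        rw [show (Real.sqrt (cK α m) * ‖V (gv 1 m)‖)
            * (Real.sqrt (cK α m) * ∑ j ∈ Ico (m + 1) N, ‖V (gv 1 j)‖)
          = (Real.sqrt (cK α m) * Real.sqrt (cK α m)) *
            (‖V (gv 1 m)‖ * ∑ j ∈ Ico (m + 1) N, ‖V (gv 1 j)‖) from by ring,
          Real.mul_self_sqrt (hcnn m)]
    have e2 : ∑ m ∈ range N, (Real.sqrt (cK α m) * ‖V (gv 1 m)‖) ^ 2
        = ∑ m ∈ range N, cK α m * ‖V (gv 1 m)‖ ^ 2 :=
      Finset.sum_congr rfl fun m _ => by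
        rw [mul_pow, Real.sq_sqrt (hcnn m)]
    have e3 : ∑ m ∈ range N, (Real.sqrt (cK α m) * ∑ j ∈ Ico (m + 1) N, ‖V (gv 1 j)‖) ^ 2
        = ∑ m ∈ range N, cK α m * (∑ j ∈ Ico (m + 1) N, ‖V (gv 1 j)‖) ^ 2 :=
      Finset.sum_congr rfl fun m _ => by
        rw [mul_pow, Real.sq_sqrt (hcnn m)]
    rw [e1, e2, e3] at hcs
    exact hcs
  have hS : (∑ m ∈ range N, cK α m *
        (‖V (gv 1 m)‖ * ∑ j ∈ Ico (m + 1) N, ‖V (gv 1 j)‖))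
      ≤ κ * ∑ m ∈ range N, cK α m * ‖V (gv 1 m)‖ ^ 2 := by
    have hq2 : (∑ m ∈ range N, cK α m *
          (‖V (gv 1 m)‖ * ∑ j ∈ Ico (m + 1) N, ‖V (gv 1 j)‖)) ^ 2
        ≤ (κ * ∑ m ∈ range N, cK α m * ‖V (gv 1 m)‖ ^ 2) ^ 2 := by
      calc (∑ m ∈ range N, cK α m *
            (‖V (gv 1 m)‖ * ∑ j ∈ Ico (m + 1) N, ‖V (gv 1 j)‖)) ^ 2
          ≤ (∑ m ∈ range N, cK α m * ‖V (gv 1 m)‖ ^ 2)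
            * ∑ m ∈ range N, cK α m * (∑ j ∈ Ico (m + 1) N, ‖V (gv 1 j)‖) ^ 2 := hCS
        _ ≤ (∑ m ∈ range N, cK α m * ‖V (gv 1 m)‖ ^ 2)
            * (κ ^ 2 * ∑ m ∈ range N, cK α m * ‖V (gv 1 m)‖ ^ 2) :=
            mul_le_mul_of_nonneg_left hT2κ hT1nn
        _ = (κ * ∑ m ∈ range N, cK α m * ‖V (gv 1 m)‖ ^ 2) ^ 2 := by ring
    nlinarith [hq2, hSnn, mul_nonneg hκnn hT1nn]
  have hstep1 : (∑ m ∈ range N, cK α m * ‖V (gv θ m)‖ ^ 2)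
      ≤ ∑ m ∈ range N, cK α m *
          (‖V (gv 1 m)‖ + ε * ∑ j ∈ Ico (m + 1) N, ‖V (gv 1 j)‖) ^ 2 :=
    Finset.sum_le_sum fun m hm => mul_le_mul_of_nonneg_left
      (pow_le_pow_left₀ (norm_nonneg _) (htri m (mem_range.mp hm)) 2) (hcnn m)
  have hexpand : ∑ m ∈ range N, cK α m *
        (‖V (gv 1 m)‖ + ε * ∑ j ∈ Ico (m + 1) N, ‖V (gv 1 j)‖) ^ 2
      = (∑ m ∈ range N, cK α m * ‖V (gv 1 m)‖ ^ 2)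
        + 2 * ε * (∑ m ∈ range N, cK α m *
            (‖V (gv 1 m)‖ * ∑ j ∈ Ico (m + 1) N, ‖V (gv 1 j)‖))
        + ε ^ 2 * ∑ m ∈ range N, cK α m * (∑ j ∈ Ico (m + 1) N, ‖V (gv 1 j)‖) ^ 2 := by
    rw [Finset.mul_sum, Finset.mul_sum, ← Finset.sum_add_distrib, ← Finset.sum_add_distrib]
    exact Finset.sum_congr rfl fun m _ => by ring
  have hεκ : ε * κ ≤ 2 * |ψ| / Real.log α := by
    calc ε * κ ≤ |ψ| * (2 / Real.log α) := mul_le_mul hεψ hκ hκnn (abs_nonneg ψ)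
      _ = 2 * |ψ| / Real.log α := by ring
  have hfinal : (∑ m ∈ range N, cK α m * ‖V (gv θ m)‖ ^ 2)
      ≤ (1 + 2 * |ψ| / Real.log α) ^ 2 * ∑ m ∈ range N, cK α m * ‖V (gv 1 m)‖ ^ 2 := by
    have h2 : 2 * ε * (∑ m ∈ range N, cK α m *
          (‖V (gv 1 m)‖ * ∑ j ∈ Ico (m + 1) N, ‖V (gv 1 j)‖))
        ≤ 2 * ε * (κ * ∑ m ∈ range N, cK α m * ‖V (gv 1 m)‖ ^ 2) :=
      mul_le_mul_of_nonneg_left hS (by positivity)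
    have h3 : ε ^ 2 * (∑ m ∈ range N, cK α m * (∑ j ∈ Ico (m + 1) N, ‖V (gv 1 j)‖) ^ 2)
        ≤ ε ^ 2 * (κ ^ 2 * ∑ m ∈ range N, cK α m * ‖V (gv 1 m)‖ ^ 2) :=
      mul_le_mul_of_nonneg_left hT2κ (sq_nonneg ε)
    have h4 : (∑ m ∈ range N, cK α m * ‖V (gv θ m)‖ ^ 2)
        ≤ (1 + ε * κ) ^ 2 * ∑ m ∈ range N, cK α m * ‖V (gv 1 m)‖ ^ 2 := by
      calc (∑ m ∈ range N, cK α m * ‖V (gv θ m)‖ ^ 2)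
          ≤ ∑ m ∈ range N, cK α m *
              (‖V (gv 1 m)‖ + ε * ∑ j ∈ Ico (m + 1) N, ‖V (gv 1 j)‖) ^ 2 := hstep1
        _ = _ := hexpand
        _ ≤ (∑ m ∈ range N, cK α m * ‖V (gv 1 m)‖ ^ 2)
              + 2 * ε * (κ * ∑ m ∈ range N, cK α m * ‖V (gv 1 m)‖ ^ 2)
              + ε ^ 2 * (κ ^ 2 * ∑ m ∈ range N, cK α m * ‖V (gv 1 m)‖ ^ 2) := by
            linarith [h2, h3]
        _ = (1 + ε * κ) ^ 2 * ∑ m ∈ range N, cK α m * ‖V (gv 1 m)‖ ^ 2 := by ring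
    calc (∑ m ∈ range N, cK α m * ‖V (gv θ m)‖ ^ 2)
        ≤ (1 + ε * κ) ^ 2 * ∑ m ∈ range N, cK α m * ‖V (gv 1 m)‖ ^ 2 := h4
      _ ≤ (1 + 2 * |ψ| / Real.log α) ^ 2 * ∑ m ∈ range N, cK α m * ‖V (gv 1 m)‖ ^ 2 :=
          mul_le_mul_of_nonneg_right
            (pow_le_pow_left₀ (by positivity) (by linarith [hεκ]) 2) hT1nn
  constructor
  · rw [hredθ, hcast θ]
    exact Complex.zero_le_real.mpr hTθnn
  · rw [hredθ, hred1, hcast θ, h1eq, ← Complex.ofReal_mul]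
    exact Complex.real_le_real.mpr hfinal
end

section
/- For every q with 0 < q < 1 there exists μ > 0 such that the function m ↦ q^{m² − μ|m|} is a positive definite function on the group ℤ. -/
open scoped BigOperators ComplexOrder
open Complex MeasureTheory Real Set Filter

noncomputable section

namespace PDGaussAux

lemma summable_exp_aux {c : ℝ} (hc : 0 < c) (d : ℝ) :
    Summable (fun n : ℤ => Real.exp (d * |(n : ℝ)| - c * (n : ℝ) ^ 2)) := by
  have key : Summable (fun n : ℕ => Real.exp (d * (n : ℝ) - c * (n : ℝ) ^ 2)) := by
    obtain ⟨N, hN⟩ := exists_nat_ge ((d + 1) / (2 * c))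
    refine summable_of_ratio_norm_eventually_le (r := Real.exp (-1))
      (by rw [Real.exp_lt_one_iff]; norm_num) ?_
    filter_upwards [eventually_ge_atTop N] with n hn
    have hn' : (d + 1) / (2 * c) ≤ (n : ℝ) := hN.trans (by exact_mod_cast hn)
    have h2c : (0:ℝ) < 2 * c := by linarith
    have hdn : d + 1 ≤ 2 * c * n := by
      rw [div_le_iff₀ h2c] at hn'; linarith
    simp only [Real.norm_eq_abs, Real.abs_exp, ← Real.exp_add]
    apply Real.exp_le_exp.2
    push_cast
    nlinarith [hc.le]
  apply Summable.of_nat_of_neg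
  · refine key.congr fun n => ?_
    simp [_root_.abs_of_nonneg (n.cast_nonneg : (0:ℝ) ≤ n)]
  · refine key.congr fun n => ?_
    push_cast
    simp [_root_.abs_of_nonneg (n.cast_nonneg : (0:ℝ) ≤ n)]

lemma tsum_ofReal_cos {φ : ℤ → ℝ} (hφe : ∀ m, φ (-m) = φ m) (hs : Summable φ) (θ : ℝ) :
    ∑' m : ℤ, (φ m : ℂ) * Complex.exp (Complex.I * m * θ)
      = ((∑' m : ℤ, φ m * Real.cos (m * θ) : ℝ) : ℂ) := by
  have habs := hs.abs
  have hsc : Summable (fun m : ℤ => φ m * Real.cos (m * θ)) := by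
    refine Summable.of_abs (Summable.of_nonneg_of_le (fun m => abs_nonneg _) (fun m => ?_) habs)
    rw [abs_mul]
    exact mul_le_of_le_one_right (abs_nonneg _) (Real.abs_cos_le_one _)
  have hss : Summable (fun m : ℤ => φ m * Real.sin (m * θ)) := by
    refine Summable.of_abs (Summable.of_nonneg_of_le (fun m => abs_nonneg _) (fun m => ?_) habs)
    rw [abs_mul]
    exact mul_le_of_le_one_right (abs_nonneg _) (Real.abs_sin_le_one _)
  have him : ∑' m : ℤ, φ m * Real.sin (m * θ) = 0 := by
    have h1 := (Equiv.neg ℤ).tsum_eq (fun m : ℤ => φ m * Real.sin (m * θ))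
    have h2 : ∀ m : ℤ, φ (-m) * Real.sin ((-m : ℤ) * θ) = -(φ m * Real.sin (m * θ)) := by
      intro m
      rw [hφe]
      push_cast
      rw [neg_mul, Real.sin_neg]
      ring
    simp only [Equiv.neg_apply] at h1
    rw [tsum_congr h2, tsum_neg] at h1
    linarith
  have hcos : HasSum (fun m : ℤ => φ m * Real.cos (m * θ))
      (∑' m : ℤ, φ m * Real.cos (m * θ)) := hsc.hasSum
  have hsin : HasSum (fun m : ℤ => φ m * Real.sin (m * θ)) 0 := him ▸ hss.hasSum
  have hC : HasSum (fun m : ℤ => (φ m : ℂ) * Complex.exp (Complex.I * m * θ))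
      ((∑' m : ℤ, φ m * Real.cos (m * θ) : ℝ) : ℂ) := by
    have h3 := (Complex.hasSum_ofReal.mpr hcos).add
      ((Complex.hasSum_ofReal.mpr hsin).mul_right Complex.I)
    simp only [Complex.ofReal_zero, zero_mul, add_zero] at h3
    refine h3.congr_fun fun m => ?_
    rw [show Complex.I * m * θ = ((m * θ : ℝ) : ℂ) * Complex.I by push_cast; ring,
      Complex.exp_mul_I]
    push_cast
    ring
  exact hC.tsum_eq

lemma summable_mul_cos {φ : ℤ → ℝ} (hs : Summable φ) (θ : ℝ) :
    Summable (fun m : ℤ => φ m * Real.cos (m * θ)) := by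
  refine Summable.of_abs (Summable.of_nonneg_of_le (fun m => abs_nonneg _) (fun m => ?_) hs.abs)
  rw [abs_mul]
  exact mul_le_of_le_one_right (abs_nonneg _) (Real.abs_cos_le_one _)

lemma summable_wrapped {β : ℝ} (hβ : 0 < β) (θ : ℝ) :
    Summable (fun n : ℤ => Real.exp (-(2 * π * n - θ) ^ 2 / (4 * β))) := by
  refine Summable.of_nonneg_of_le (fun n => (Real.exp_pos _).le) (fun n => ?_)
    (summable_exp_aux (c := π ^ 2 / β) (div_pos (pow_pos pi_pos 2) hβ) (π * |θ| / β))
  apply Real.exp_le_exp.2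
  have h1 : (n:ℝ) * θ ≤ |(n:ℝ)| * |θ| := by
    rw [← abs_mul]; exact le_abs_self _
  have h2 : (0:ℝ) < π := pi_pos
  have h3 : |(n:ℝ)|^2 = (n:ℝ)^2 := sq_abs _
  have key : π * |θ| / β * |(n:ℝ)| - π ^ 2 / β * (n:ℝ) ^ 2 - (-(2 * π * n - θ) ^ 2 / (4 * β))
      = (4 * π * (|(n:ℝ)| * |θ| - (n:ℝ) * θ) + θ ^ 2) / (4 * β) := by
    field_simp
    ring
  have hnum : (0:ℝ) ≤ (4 * π * (|(n:ℝ)| * |θ| - (n:ℝ) * θ) + θ ^ 2) / (4 * β) := by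
    apply div_nonneg ?_ (by positivity)
    nlinarith
  linarith

lemma poisson {β : ℝ} (hβ : 0 < β) (θ : ℝ) :
    ∑' n : ℤ, ((Real.exp (-β * (n:ℝ) ^ 2) : ℝ) : ℂ) * Complex.exp (Complex.I * n * θ)
      = (((1 / (β / π) ^ ((1:ℝ)/2)) * ∑' n : ℤ, Real.exp (-(2 * π * n - θ) ^ 2 / (4 * β)) : ℝ) : ℂ) := by
  have hβπ : 0 < β / π := div_pos hβ pi_pos
  have hπ : (π : ℂ) ≠ 0 := by exact_mod_cast Real.pi_ne_zero
  have hβ' : (β : ℂ) ≠ 0 := by exact_mod_cast hβ.ne'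
  have h := Complex.tsum_exp_neg_quadratic (a := ((β / π : ℝ) : ℂ))
      (by simpa using hβπ) (Complex.I * θ / (2 * π))
  have hL : ∀ n : ℤ,
      Complex.exp (-π * ((β / π : ℝ) : ℂ) * (n:ℂ) ^ 2 + 2 * π * (Complex.I * θ / (2 * π)) * (n:ℂ))
        = ((Real.exp (-β * (n:ℝ) ^ 2) : ℝ) : ℂ) * Complex.exp (Complex.I * n * θ) := by
    intro n
    rw [show (-π * ((β / π : ℝ) : ℂ) * (n:ℂ) ^ 2 + 2 * π * (Complex.I * θ / (2 * π)) * (n:ℂ))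
        = ((-β * (n:ℝ) ^ 2 : ℝ) : ℂ) + Complex.I * n * θ by push_cast; field_simp]
    rw [Complex.exp_add, Complex.ofReal_exp]
  have hR : ∀ n : ℤ,
      Complex.exp (-π / ((β / π : ℝ) : ℂ) * ((n:ℂ) + Complex.I * (Complex.I * θ / (2 * π))) ^ 2)
        = ((Real.exp (-(2 * π * n - θ) ^ 2 / (4 * β)) : ℝ) : ℂ) := by
    intro n
    rw [show ((n:ℂ) + Complex.I * (Complex.I * θ / (2 * π))) = (((n : ℝ) - θ / (2 * π) : ℝ) : ℂ) by
      push_cast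
      rw [show Complex.I * (Complex.I * (θ:ℂ) / (2 * (π:ℂ))) = (Complex.I * Complex.I) * (θ:ℂ) / (2 * (π:ℂ)) by ring,
        Complex.I_mul_I]
      ring]
    rw [show (-π / ((β / π : ℝ) : ℂ) * ((((n : ℝ) - θ / (2 * π) : ℝ)) : ℂ) ^ 2)
        = ((-(2 * π * n - θ) ^ 2 / (4 * β) : ℝ) : ℂ) by
      push_cast
      field_simp
      ring]
    rw [Complex.ofReal_exp]
  rw [tsum_congr hL, tsum_congr hR] at h
  have hpref : ((1 / (β / π) ^ ((1:ℝ)/2) : ℝ) : ℂ) = 1 / ((β / π : ℝ) : ℂ) ^ ((1:ℂ)/2) := by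
    rw [Complex.ofReal_div, Complex.ofReal_one, Complex.ofReal_cpow hβπ.le]
    norm_num
  rw [h, ← Complex.ofReal_tsum, Complex.ofReal_mul, hpref]

lemma theta_lb {β : ℝ} (hβ : 0 < β) {θ : ℝ} (h1 : 0 < θ) (h2 : θ ≤ 2 * π) :
    Real.exp (-(π ^ 2) / (4 * β)) ≤ ∑' n : ℤ, Real.exp (-(2 * π * n - θ) ^ 2 / (4 * β)) := by
  have hsum := summable_wrapped hβ θ
  have key : ∃ n₀ : ℤ, (2 * π * (n₀:ℝ) - θ) ^ 2 ≤ π ^ 2 := by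
    by_cases hc : θ ≤ π
    · exact ⟨0, by push_cast; nlinarith⟩
    · refine ⟨1, ?_⟩
      push_cast
      have := pi_pos
      nlinarith
  obtain ⟨n₀, hn₀⟩ := key
  calc Real.exp (-(π ^ 2) / (4 * β)) ≤ Real.exp (-(2 * π * (n₀:ℝ) - θ) ^ 2 / (4 * β)) := by
        apply Real.exp_le_exp.2
        apply div_le_div_of_nonneg_right ?_ (by positivity)
        · linarith
    _ ≤ ∑' n : ℤ, Real.exp (-(2 * π * n - θ) ^ 2 / (4 * β)) :=
        hsum.le_tsum n₀ (fun j _ => (Real.exp_pos _).le)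

lemma orth (k : ℤ) : (∫ θ in Set.Ioc (0:ℝ) (2*π), Complex.exp (Complex.I * k * θ))
    = if k = 0 then ((2*π : ℝ) : ℂ) else 0 := by
  split_ifs with hk
  · subst hk
    simp only [Int.cast_zero, mul_zero, zero_mul, Complex.exp_zero]
    rw [MeasureTheory.setIntegral_const, MeasureTheory.measureReal_def, Real.volume_Ioc]
    rw [ENNReal.toReal_ofReal (by rw [sub_zero]; positivity)]
    rw [sub_zero, Complex.real_smul, mul_one]
  · have hc : Complex.I * (k:ℂ) ≠ 0 :=
      mul_ne_zero Complex.I_ne_zero (Int.cast_ne_zero.2 hk)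
    rw [← intervalIntegral.integral_of_le (by positivity : (0:ℝ) ≤ 2*π)]
    have heq : ∀ θ : ℝ, Complex.exp (Complex.I * k * θ) = Complex.exp ((Complex.I * k) * θ) := by
      intro θ; ring_nf
    rw [intervalIntegral.integral_congr (fun θ _ => heq θ)]
    rw [integral_exp_mul_complex hc]
    rw [show Complex.I * (k:ℂ) * ((2*π : ℝ):ℂ) = (k:ℂ) * (2*(π:ℝ)*Complex.I) by push_cast; ring]
    rw [Complex.exp_int_mul_two_pi_mul_I]
    simp

lemma abs_le_sq_int (m : ℤ) : |(m : ℝ)| ≤ (m : ℝ) ^ 2 := by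
  rcases eq_or_ne m 0 with h | h
  · simp [h]
  · have h1 : (1 : ℝ) ≤ |(m : ℝ)| := by
      rw [← Int.cast_abs]
      exact_mod_cast Int.one_le_abs h
    nlinarith [_root_.sq_abs (m:ℝ), abs_nonneg (m:ℝ)]

lemma exp_perturb {μ a t : ℝ} (hμ0 : 0 ≤ μ) (hμ : μ ≤ 1/2) (ha : 0 ≤ a) (ht : t ≤ μ * a) :
    Real.exp (t - a) ≤ Real.exp (-a) + 4 * μ * Real.exp (-(a/4)) := by
  have e1 : Real.exp (t - a) ≤ Real.exp (μ * a) * Real.exp (-a) := by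
    rw [← Real.exp_add]
    exact Real.exp_le_exp.2 (by linarith)
  have e2 : Real.exp (μ * a) ≤ 1 + μ * a * Real.exp (μ * a) := by
    have h3 := Real.add_one_le_exp (-(μ * a))
    have h4 := mul_le_mul_of_nonneg_right h3 (Real.exp_pos (μ * a)).le
    rw [← Real.exp_add] at h4
    simp only [neg_add_cancel, Real.exp_zero] at h4
    nlinarith
  have e3 : Real.exp (μ * a) ≤ Real.exp (a / 2) := Real.exp_le_exp.2 (by nlinarith)
  have e4 : a * Real.exp (-(a/4)) ≤ 4 := by
    have h5 := Real.add_one_le_exp (a / 4)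
    have h6 := mul_le_mul_of_nonneg_right h5 (Real.exp_pos (-(a/4))).le
    rw [← Real.exp_add] at h6
    simp only [add_neg_cancel, Real.exp_zero] at h6
    nlinarith [Real.exp_pos (-(a/4))]
  have e5 : Real.exp (a/2) * Real.exp (-a) = Real.exp (-(a/4)) * Real.exp (-(a/4)) := by
    rw [← Real.exp_add, ← Real.exp_add]
    ring_nf
  have f1 : Real.exp (μ*a) * Real.exp (-a) ≤ (1 + μ*a*Real.exp (μ*a)) * Real.exp (-a) :=
    mul_le_mul_of_nonneg_right e2 (Real.exp_pos _).le
  have f2 : μ*a*(Real.exp (μ*a) * Real.exp (-a)) ≤ μ*a*(Real.exp (a/2) * Real.exp (-a)) :=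
    mul_le_mul_of_nonneg_left (mul_le_mul_of_nonneg_right e3 (Real.exp_pos (-a)).le)
      (mul_nonneg hμ0 ha)
  have f3 : μ * Real.exp (-(a/4)) * (a * Real.exp (-(a/4))) ≤ μ * Real.exp (-(a/4)) * 4 :=
    mul_le_mul_of_nonneg_left e4 (mul_nonneg hμ0 (Real.exp_pos (-(a/4))).le)
  nlinarith [Real.exp_pos (-a), Real.exp_pos (μ * a), Real.exp_pos (-(a/4))]

end PDGaussAux

open PDGaussAux

set_option maxHeartbeats 1000000 in
/-- For `0 < q < 1` there exists `μ > 0` such that `m ↦ q^(m² - μ|m|)` is a positive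
definite function on the group `ℤ`. -/
theorem exists_mu_posdef_gaussian (q : ℝ) (hq0 : 0 < q) (hq1 : q < 1) :
    ∃ μ : ℝ, 0 < μ ∧
      ∀ (n : ℕ) (x : Fin n → ℤ) (c : Fin n → ℂ),
        0 ≤ ∑ i, ∑ j, c i * (starRingEnd ℂ) (c j) *
          ((q ^ ((((x j - x i : ℤ) : ℝ)) ^ 2 - μ * |((x j - x i : ℤ) : ℝ)|) : ℝ) : ℂ) := by
  have hπ := Real.pi_pos
  have hlog : Real.log q < 0 := Real.log_neg hq0 hq1
  set β : ℝ := -Real.log q with hβdef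
  have hβ : 0 < β := by rw [hβdef]; linarith
  have hβπ : 0 < β / π := div_pos hβ hπ
  have hCsum : Summable (fun m : ℤ => Real.exp (-(β/4) * (m:ℝ)^2)) :=
    (summable_exp_aux (show (0:ℝ) < β/4 by linarith) 0).congr
      (fun m => congrArg Real.exp (by ring))
  set C : ℝ := ∑' m : ℤ, Real.exp (-(β/4) * (m:ℝ)^2) with hCdef
  have hC0 : 0 ≤ C := tsum_nonneg (fun m => (Real.exp_pos _).le)
  set δ : ℝ := (1 / (β/π) ^ ((1:ℝ)/2)) * Real.exp (-(π^2)/(4*β)) with hδdef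
  have hδ : 0 < δ := by
    apply mul_pos _ (Real.exp_pos _)
    have := Real.rpow_pos_of_pos hβπ ((1:ℝ)/2)
    positivity
  set μ : ℝ := min (1/2) (δ/(4*C+1)) with hμdef
  have h4C : (0:ℝ) < 4*C+1 := by linarith
  have hμ0 : 0 < μ := lt_min (by norm_num) (div_pos hδ h4C)
  have hμhalf : μ ≤ 1/2 := min_le_left _ _
  have hμδ : 4*μ*C ≤ δ := by
    have h1 : μ ≤ δ/(4*C+1) := min_le_right _ _
    have h5 : 4*μ*C ≤ 4*(δ/(4*C+1))*C := by nlinarith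
    have h6 : 4*(δ/(4*C+1))*C = 4*δ*C/(4*C+1) := by ring
    have h7 : 4*δ*C/(4*C+1) ≤ δ := by
      rw [div_le_iff₀ h4C]; nlinarith
    linarith
  refine ⟨μ, hμ0, ?_⟩
  intro n x c
  set φ : ℤ → ℝ := fun m => q ^ ((m:ℝ)^2 - μ * |(m:ℝ)|) with hφdef
  have hlogq : Real.log q = -β := by rw [hβdef]; ring
  have hφ_exp : ∀ m : ℤ, φ m = Real.exp (β*μ*|(m:ℝ)| - β*(m:ℝ)^2) := by
    intro m
    rw [hφdef]
    dsimp only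
    rw [Real.rpow_def_of_pos hq0, hlogq]
    congr 1
    ring
  have hφ_even : ∀ m : ℤ, φ (-m) = φ m := by
    intro m
    rw [hφdef]
    simp only [Int.cast_neg, neg_sq, abs_neg]
  have hφ_pos : ∀ m, 0 < φ m := fun m => by rw [hφ_exp m]; exact Real.exp_pos _
  have hφ_sum : Summable φ := (summable_exp_aux hβ (β*μ)).congr (fun m => (hφ_exp m).symm)
  have hφ₀_sum : Summable (fun m : ℤ => Real.exp (-β * (m:ℝ)^2)) :=
    (summable_exp_aux hβ 0).congr (fun m => congrArg Real.exp (by ring))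
  have hφ₀_le : ∀ m : ℤ, Real.exp (-β * (m:ℝ)^2) ≤ φ m := by
    intro m
    rw [hφ_exp m]
    apply Real.exp_le_exp.2
    have h1 : 0 ≤ β*μ*|(m:ℝ)| := by positivity
    linarith
  have hdiff : ∀ m : ℤ, φ m ≤ Real.exp (-β * (m:ℝ)^2) + 4*μ*Real.exp (-(β/4)*(m:ℝ)^2) := by
    intro m
    have habs := abs_le_sq_int m
    have key := exp_perturb (μ := μ) (a := β*(m:ℝ)^2) (t := β*μ*|(m:ℝ)|) hμ0.le hμhalf
      (by positivity)
      (by nlinarith [mul_le_mul_of_nonneg_left habs (by positivity : (0:ℝ) ≤ β*μ)])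
    rw [hφ_exp m]
    calc Real.exp (β*μ*|(m:ℝ)| - β*(m:ℝ)^2)
        ≤ Real.exp (-(β*(m:ℝ)^2)) + 4*μ*Real.exp (-((β*(m:ℝ)^2)/4)) := key
      _ = Real.exp (-β*(m:ℝ)^2) + 4*μ*Real.exp (-(β/4)*(m:ℝ)^2) := by
          rw [show -(β*(m:ℝ)^2) = -β*(m:ℝ)^2 by ring,
            show -((β*(m:ℝ)^2)/4) = -(β/4)*(m:ℝ)^2 by ring]
  have hSig : ∑' m : ℤ, φ m ≤ (∑' m : ℤ, Real.exp (-β * (m:ℝ)^2)) + 4*μ*C := by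
    have h1 : ∑' m : ℤ, φ m
        ≤ ∑' m : ℤ, (Real.exp (-β * (m:ℝ)^2) + 4*μ*Real.exp (-(β/4)*(m:ℝ)^2)) :=
      Summable.tsum_le_tsum hdiff hφ_sum (hφ₀_sum.add (hCsum.mul_left (4*μ)))
    rwa [Summable.tsum_add hφ₀_sum (hCsum.mul_left (4*μ)), tsum_mul_left] at h1
  set g : ℝ → ℝ := fun θ => ∑' m : ℤ, φ m * Real.cos (m*θ) with hgdef
  have hg_lb : ∀ θ ∈ Set.Ioc (0:ℝ) (2*π), 0 ≤ g θ := by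
    rintro θ ⟨hθ1, hθ2⟩
    have hcos0 := tsum_ofReal_cos (φ := fun m : ℤ => Real.exp (-β * (m:ℝ)^2))
      (fun m => by simp only [Int.cast_neg, neg_sq]) hφ₀_sum θ
    have hg₀ : ∑' m : ℤ, Real.exp (-β*(m:ℝ)^2) * Real.cos (m*θ)
        = (1/(β/π) ^ ((1:ℝ)/2)) * ∑' n : ℤ, Real.exp (-(2*π*n - θ)^2/(4*β)) := by
      have h2 := (poisson hβ θ).symm.trans hcos0
      exact_mod_cast h2.symm
    have hg₀_lb : δ ≤ ∑' m : ℤ, Real.exp (-β*(m:ℝ)^2) * Real.cos (m*θ) := by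
      rw [hg₀, hδdef]
      exact mul_le_mul_of_nonneg_left (theta_lb hβ hθ1 hθ2) (by positivity)
    have hsc := summable_mul_cos hφ_sum θ
    have hsc0 := summable_mul_cos hφ₀_sum θ
    have hsd : Summable (fun m : ℤ => φ m - Real.exp (-β*(m:ℝ)^2)) := hφ_sum.sub hφ₀_sum
    have hterm : ∀ m : ℤ,
        Real.exp (-β*(m:ℝ)^2) * Real.cos (m*θ) - (φ m - Real.exp (-β*(m:ℝ)^2))
          ≤ φ m * Real.cos (m*θ) := by
      intro m
      have h1 : 0 ≤ (φ m - Real.exp (-β*(m:ℝ)^2)) * (Real.cos (m*θ) + 1) :=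
        mul_nonneg (sub_nonneg.2 (hφ₀_le m)) (by nlinarith [Real.neg_one_le_cos ((m:ℝ)*θ)])
      nlinarith
    have h2 : ∑' m : ℤ, (Real.exp (-β*(m:ℝ)^2) * Real.cos (m*θ) - (φ m - Real.exp (-β*(m:ℝ)^2)))
        ≤ ∑' m : ℤ, φ m * Real.cos (m*θ) := Summable.tsum_le_tsum hterm (hsc0.sub hsd) hsc
    rw [Summable.tsum_sub hsc0 hsd, Summable.tsum_sub hφ_sum hφ₀_sum] at h2
    rw [hgdef]
    dsimp only
    linarith
  -- the Fourier-analytic part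
  set S : ℝ → ℂ := fun θ => ∑ i, c i * Complex.exp (Complex.I * (x i) * θ) with hSdef
  have hexpcont : ∀ k : ℤ, Continuous (fun θ : ℝ => Complex.exp (Complex.I * k * θ)) := by
    intro k
    exact Complex.continuous_exp.comp (continuous_const.mul Complex.continuous_ofReal)
  have hScont : Continuous S := by
    rw [hSdef]
    exact continuous_finset_sum _ (fun i _ => continuous_const.mul (hexpcont (x i)))
  have hexp1 : ∀ (k : ℤ) (θ : ℝ), ‖Complex.exp (Complex.I * k * θ)‖ = 1 := by
    intro k θ
    rw [Complex.norm_exp]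
    simp
  have hnormS : ∀ θ : ℝ, ‖S θ‖ ≤ ∑ i, ‖c i‖ := by
    intro θ
    rw [hSdef]
    dsimp only
    refine (norm_sum_le _ _).trans (Finset.sum_le_sum fun i _ => ?_)
    rw [norm_mul, hexp1, mul_one]
  set F : ℤ → ℝ → ℂ :=
    fun m θ => (φ m : ℂ) * Complex.exp (Complex.I * m * θ) * (S θ * (starRingEnd ℂ) (S θ))
    with hFdef
  have hFcont : ∀ m, Continuous (F m) := by
    intro m
    rw [hFdef]
    exact (continuous_const.mul (hexpcont m)).mul (hScont.mul (continuous_star.comp hScont))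
  have hFint : ∀ m, IntegrableOn (F m) (Set.Ioc (0:ℝ) (2*π)) :=
    fun m => (hFcont m).integrableOn_Ioc
  have hFbound : ∀ (m : ℤ) (θ : ℝ), ‖F m θ‖ ≤ φ m * (∑ i, ‖c i‖)^2 := by
    intro m θ
    rw [hFdef]
    dsimp only
    rw [norm_mul, norm_mul, norm_mul, hexp1, mul_one, RCLike.norm_conj]
    have h1 : ‖((φ m : ℝ) : ℂ)‖ = φ m := by
      rw [Complex.norm_real, Real.norm_eq_abs, abs_of_pos (hφ_pos m)]
    rw [h1]
    have h2 : (0:ℝ) ≤ ∑ i, ‖c i‖ := Finset.sum_nonneg (fun i _ => norm_nonneg _)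
    have h3 := mul_le_mul (hnormS θ) (hnormS θ) (norm_nonneg _) h2
    nlinarith [(hφ_pos m).le]
  have hFnormsum : Summable (fun m : ℤ => ∫ θ in Set.Ioc (0:ℝ) (2*π), ‖F m θ‖) := by
    apply Summable.of_nonneg_of_le (fun m => integral_nonneg (fun θ => norm_nonneg _))
      (fun m => ?_) (hφ_sum.mul_right ((∑ i, ‖c i‖)^2 * (2*π)))
    calc (∫ θ in Set.Ioc (0:ℝ) (2*π), ‖F m θ‖)
        ≤ ∫ _θ in Set.Ioc (0:ℝ) (2*π), φ m * (∑ i, ‖c i‖)^2 := by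
          apply MeasureTheory.setIntegral_mono_on ((hFint m).norm)
            (integrableOn_const measure_Ioc_lt_top.ne) measurableSet_Ioc
          exact fun θ _ => hFbound m θ
      _ = φ m * ((∑ i, ‖c i‖)^2 * (2*π)) := by
          rw [MeasureTheory.setIntegral_const, MeasureTheory.measureReal_def, Real.volume_Ioc,
            ENNReal.toReal_ofReal (by rw [sub_zero]; positivity), smul_eq_mul]
          ring
  have hptwise : ∀ θ : ℝ, ((g θ : ℝ) : ℂ) * (S θ * (starRingEnd ℂ) (S θ)) = ∑' m : ℤ, F m θ := by
    intro θ
    rw [hgdef]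
    dsimp only
    rw [← tsum_ofReal_cos hφ_even hφ_sum θ, ← tsum_mul_right]
  have key_swap : (∫ θ in Set.Ioc (0:ℝ) (2*π), ((g θ : ℝ) : ℂ) * (S θ * (starRingEnd ℂ) (S θ)))
      = ∑' m : ℤ, ∫ θ in Set.Ioc (0:ℝ) (2*π), F m θ := by
    rw [MeasureTheory.integral_congr_ae (Filter.Eventually.of_forall hptwise)]
    exact (MeasureTheory.integral_tsum_of_summable_integral_norm hFint hFnormsum).symm
  have hFval : ∀ m : ℤ, (∫ θ in Set.Ioc (0:ℝ) (2*π), F m θ)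
      = ∑ i, ∑ j, (φ m : ℂ) * (c i * (starRingEnd ℂ) (c j)) *
          (if m + x i - x j = 0 then ((2*π:ℝ):ℂ) else 0) := by
    intro m
    have hexpand : ∀ θ : ℝ, F m θ = ∑ i, ∑ j, (φ m : ℂ) * (c i * (starRingEnd ℂ) (c j)) *
        Complex.exp (Complex.I * ((m + x i - x j : ℤ) : ℂ) * θ) := by
      intro θ
      rw [hFdef, hSdef]
      dsimp only
      rw [map_sum, Finset.sum_mul_sum, Finset.mul_sum]
      refine Finset.sum_congr rfl (fun i _ => ?_)
      rw [Finset.mul_sum]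
      refine Finset.sum_congr rfl (fun j _ => ?_)
      rw [map_mul, ← Complex.exp_conj]
      have hconjarg : (starRingEnd ℂ) (Complex.I * (x j) * θ) = -(Complex.I * (x j) * θ) := by
        simp [Complex.conj_I, Complex.conj_ofReal]
      rw [hconjarg]
      have hsplit : Complex.exp (Complex.I * ((m + x i - x j : ℤ) : ℂ) * (θ:ℂ))
          = Complex.exp (Complex.I * m * θ) *
            (Complex.exp (Complex.I * (x i) * θ) * Complex.exp (-(Complex.I * (x j) * θ))) := by
        rw [← Complex.exp_add, ← Complex.exp_add]
        congr 1
        push_cast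
        ring
      rw [hsplit]
      ring
    rw [MeasureTheory.integral_congr_ae (Filter.Eventually.of_forall hexpand)]
    rw [MeasureTheory.integral_finset_sum _ (f := fun i (θ : ℝ) => ∑ j, (φ m : ℂ) * (c i * (starRingEnd ℂ) (c j)) *
          Complex.exp (Complex.I * ((m + x i - x j : ℤ) : ℂ) * (θ : ℂ))) (fun i _ =>
      integrable_finset_sum _ (fun j _ =>
        by exact (continuous_const.mul (hexpcont (m + x i - x j))).integrableOn_Ioc))]
    refine Finset.sum_congr rfl (fun i _ => ?_)
    rw [MeasureTheory.integral_finset_sum _ (f := fun j (θ : ℝ) => (φ m : ℂ) * (c i * (starRingEnd ℂ) (c j)) *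
          Complex.exp (Complex.I * ((m + x i - x j : ℤ) : ℂ) * (θ : ℂ))) (fun j _ =>
      by exact (continuous_const.mul (hexpcont (m + x i - x j))).integrableOn_Ioc)]
    refine Finset.sum_congr rfl (fun j _ => ?_)
    rw [MeasureTheory.integral_const_mul, orth (m + x i - x j)]
  have hHS : ∀ i j : Fin n, HasSum (fun m : ℤ => (φ m : ℂ) * (c i * (starRingEnd ℂ) (c j)) *
      (if m + x i - x j = 0 then ((2*π:ℝ):ℂ) else 0))
      ((φ (x j - x i) : ℂ) * (c i * (starRingEnd ℂ) (c j)) * ((2*π:ℝ):ℂ)) := by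
    intro i j
    have heq : ∀ m : ℤ, (φ m : ℂ) * (c i * (starRingEnd ℂ) (c j)) *
        (if m + x i - x j = 0 then ((2*π:ℝ):ℂ) else 0)
        = (if m = x j - x i then
            (φ (x j - x i) : ℂ) * (c i * (starRingEnd ℂ) (c j)) * ((2*π:ℝ):ℂ) else 0) := by
      intro m
      by_cases hm : m = x j - x i
      · subst hm
        rw [if_pos (by ring), if_pos rfl]
      · rw [if_neg (by omega), if_neg hm, mul_zero]
    exact (hasSum_ite_eq (x j - x i)
      ((φ (x j - x i) : ℂ) * (c i * (starRingEnd ℂ) (c j)) * ((2*π:ℝ):ℂ))).congr_fun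
      (fun m => heq m)
  have hsum_tsum : (∑' m : ℤ, ∫ θ in Set.Ioc (0:ℝ) (2*π), F m θ)
      = ((2*π:ℝ):ℂ) * ∑ i, ∑ j, c i * (starRingEnd ℂ) (c j) * ((φ (x j - x i) : ℝ):ℂ) := by
    rw [tsum_congr hFval]
    rw [(hasSum_sum (fun i _ => hasSum_sum (fun j _ => hHS i j))).tsum_eq]
    rw [Finset.mul_sum]
    refine Finset.sum_congr rfl (fun i _ => ?_)
    rw [Finset.mul_sum]
    refine Finset.sum_congr rfl (fun j _ => ?_)
    ring
  have hreal : (∫ θ in Set.Ioc (0:ℝ) (2*π), ((g θ : ℝ) : ℂ) * (S θ * (starRingEnd ℂ) (S θ)))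
      = ((∫ θ in Set.Ioc (0:ℝ) (2*π), g θ * Complex.normSq (S θ) : ℝ) : ℂ) := by
    have h0 : ∀ θ : ℝ, ((g θ : ℝ) : ℂ) * (S θ * (starRingEnd ℂ) (S θ))
        = ((g θ * Complex.normSq (S θ) : ℝ) : ℂ) := by
      intro θ
      rw [Complex.mul_conj, Complex.ofReal_mul]
    rw [MeasureTheory.integral_congr_ae (Filter.Eventually.of_forall h0)]
    exact integral_ofReal
  have hRnonneg : 0 ≤ ∫ θ in Set.Ioc (0:ℝ) (2*π), g θ * Complex.normSq (S θ) :=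
    MeasureTheory.setIntegral_nonneg measurableSet_Ioc
      (fun θ hθ => mul_nonneg (hg_lb θ hθ) (Complex.normSq_nonneg _))
  have h2πne : ((2*π:ℝ):ℂ) ≠ 0 := by
    exact_mod_cast (show (2*π:ℝ) ≠ 0 by positivity)
  suffices hP : 0 ≤ ∑ i, ∑ j, c i * (starRingEnd ℂ) (c j) * ((φ (x j - x i) : ℝ):ℂ) by
    simpa only [hφdef] using hP
  have hfinal : ((2*π:ℝ):ℂ) * ∑ i, ∑ j, c i * (starRingEnd ℂ) (c j) * ((φ (x j - x i) : ℝ):ℂ)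
      = ((∫ θ in Set.Ioc (0:ℝ) (2*π), g θ * Complex.normSq (S θ) : ℝ) : ℂ) := by
    rw [← hsum_tsum, ← key_swap, hreal]
  have hPval : (∑ i, ∑ j, c i * (starRingEnd ℂ) (c j) * ((φ (x j - x i) : ℝ):ℂ))
      = (((∫ θ in Set.Ioc (0:ℝ) (2*π), g θ * Complex.normSq (S θ)) / (2*π) : ℝ) : ℂ) := by
    apply mul_left_cancel₀ h2πne
    rw [hfinal, ← Complex.ofReal_mul]
    congr 1
    field_simp
  rw [hPval]
  exact Complex.zero_le_real.2 (div_nonneg hRnonneg (by positivity))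
end
end

section
/- For every q with 0 < q < 1 and every t ∈ ℝ, the sum of the absolutely convergent series ∑_{j ∈ ℤ} q^{j²} e^{-i j t} is a strictly positive real number. -/
open scoped ComplexOrder

open Complex Real

/-- For `0 < q < 1` and `t ∈ ℝ`, the sum `∑_{j ∈ ℤ} q^(j²) e^(-ijt)` is a strictly
positive real number. -/
theorem theta_series_pos (q : ℝ) (hq0 : 0 < q) (hq1 : q < 1) (t : ℝ) :
    0 < ∑' j : ℤ, ((q ^ (j ^ 2) : ℝ) : ℂ) * Complex.exp (-Complex.I * j * t) := by
  have hlog : Real.log q < 0 := Real.log_neg hq0 hq1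
  set b : ℝ := -Real.log q / π with hb_def
  have hb : 0 < b := div_pos (by linarith) Real.pi_pos
  set τ : ℂ := (b : ℂ) * I with hτ_def
  set z : ℂ := ((-t / (2 * π) : ℝ) : ℂ) with hz_def
  have hπ : (π : ℂ) ≠ 0 := Complex.ofReal_ne_zero.mpr Real.pi_ne_zero
  -- step 1: the sum is jacobiTheta₂ z τ
  have hterm : ∀ j : ℤ, ((q ^ (j ^ 2) : ℝ) : ℂ) * Complex.exp (-Complex.I * j * t)
      = jacobiTheta₂_term j z τ := by
    intro j
    have h1 : (q ^ (j ^ 2) : ℝ) = Real.exp (Real.log q * (j ^ 2 : ℤ)) := by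
      rw [← Real.rpow_intCast q (j ^ 2), Real.rpow_def_of_pos hq0]
    rw [h1, jacobiTheta₂_term, Complex.ofReal_exp, ← Complex.exp_add]
    congr 1
    push_cast
    rw [hτ_def, hz_def, hb_def]
    push_cast
    field_simp
    ring_nf
    rw [Complex.I_sq]
    ring
  rw [tsum_congr hterm]
  have hsum : (∑' j : ℤ, jacobiTheta₂_term j z τ) = jacobiTheta₂ z τ := rfl
  rw [hsum, jacobiTheta₂_functional_equation z τ]
  -- compute the three factors
  have hτne : τ ≠ 0 := by
    simp [hτ_def, Complex.ext_iff, hb.ne']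
  have hIτ : -I * τ = (b : ℂ) := by
    rw [hτ_def]; ring_nf; rw [Complex.I_sq]; ring
  have hfac1 : 1 / (-I * τ) ^ (1 / 2 : ℂ) = ((1 / b ^ (1 / 2 : ℝ) : ℝ) : ℂ) := by
    rw [hIτ, show (1 / 2 : ℂ) = ((1 / 2 : ℝ) : ℂ) by norm_num, ← Complex.ofReal_cpow hb.le]
    push_cast
    ring
  have hfac2 : Complex.exp (-π * I * z ^ 2 / τ) =
      ((Real.exp (-π * (-t / (2 * π)) ^ 2 / b) : ℝ) : ℂ) := by
    rw [Complex.ofReal_exp]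
    congr 1
    rw [hz_def, hτ_def]
    push_cast
    rw [div_eq_iff (by simpa [hτ_def] using hτne)]
    field_simp
  -- the transformed theta value
  have him : 0 < (-1 / τ).im := by
    rw [hτ_def]
    have : (-1 : ℂ) / ((b : ℂ) * I) = (b : ℂ)⁻¹ * I := by
      rw [div_eq_iff (by simpa [hτ_def] using hτne)]
      field_simp
      ring_nf
      rw [Complex.I_sq]
    rw [this]
    simp [Complex.mul_I_im, inv_pos, hb]
  have hterm2 : ∀ n : ℤ, jacobiTheta₂_term n (z / τ) (-1 / τ)
      = ((Real.exp (2 * π * n * (-t / (2 * π)) / b - π * n ^ 2 / b) : ℝ) : ℂ) := by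
    intro n
    rw [jacobiTheta₂_term, Complex.ofReal_exp]
    congr 1
    rw [hz_def, hτ_def]
    have hbI : ((b : ℂ) * I) ≠ 0 := by simpa [hτ_def] using hτne
    push_cast
    field_simp
    ring_nf
  have hsummable : Summable fun n : ℤ =>
      Real.exp (2 * π * n * (-t / (2 * π)) / b - π * n ^ 2 / b) := by
    have : Summable fun n : ℤ => jacobiTheta₂_term n (z / τ) (-1 / τ) :=
      (summable_jacobiTheta₂_term_iff _ _).mpr him
    rw [← Complex.summable_ofReal]
    exact this.congr fun n => hterm2 n
  have htheta : jacobiTheta₂ (z / τ) (-1 / τ) =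
      ((∑' n : ℤ, Real.exp (2 * π * n * (-t / (2 * π)) / b - π * n ^ 2 / b) : ℝ) : ℂ) := by
    rw [jacobiTheta₂, Complex.ofReal_tsum]
    exact tsum_congr hterm2
  rw [hfac1, hfac2, htheta, ← Complex.ofReal_mul, ← Complex.ofReal_mul]
  rw [Complex.zero_lt_real]
  have h1 : (0:ℝ) < 1 / b ^ (1 / 2 : ℝ) :=
    one_div_pos.mpr (Real.rpow_pos_of_pos hb _)
  have h2 : (0:ℝ) < Real.exp (-π * (-t / (2 * π)) ^ 2 / b) := Real.exp_pos _
  have h3 : (0:ℝ) < ∑' n : ℤ, Real.exp (2 * π * n * (-t / (2 * π)) / b - π * n ^ 2 / b) :=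
    Summable.tsum_pos hsummable (fun n => (Real.exp_pos _).le) 0 (Real.exp_pos _)
  positivity
end

section
/- Let (W,S) be a Coxeter system with S finite. The word length ℓ is a negative definite function on W: for all g₁, …, gₙ ∈ W and c₁, …, cₙ ∈ ℂ with ∑_{i=1}^n c_i = 0, the sum ∑_{i,j=1}^n c_i · conj(c_j) · ℓ(g_i⁻¹ g_j) is a real number ≤ 0. -/
open scoped BigOperators ComplexOrder


namespace CoxLenND

open CoxeterSystem List
open scoped Classical symmDiff

variable {B W : Type*} [Group W] {M : CoxeterMatrix B} (cs : CoxeterSystem M W)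

local prefix:100 "s" => cs.simple
local prefix:100 "π" => cs.wordProd
local prefix:100 "ℓ" => cs.length

/-- Tits' sign involution associated to a simple reflection. -/
noncomputable def sigmaFun (i : B) : W × ℤˣ → W × ℤˣ :=
  fun p => (s i * p.1 * s i, if p.1 = s i then -p.2 else p.2)

lemma simple_conj_conj (i : B) (t : W) : s i * (s i * t * s i) * s i = t := by
  have h := cs.simple_mul_simple_self i
  calc s i * (s i * t * s i) * s i = (s i * s i) * t * (s i * s i) := by group
  _ = t := by rw [h]; group

lemma simple_conj_eq_simple_iff (i : B) (t : W) :
    (s i * t * s i = s i) ↔ (t = s i) := by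
  constructor
  · intro h
    have h2 := congrArg (fun x => s i * x * s i) h
    rw [simple_conj_conj cs] at h2
    rw [h2]
    have h3 := cs.simple_mul_simple_self i
    rw [h3, one_mul]
  · rintro rfl; rw [cs.simple_mul_simple_self, one_mul]

lemma sigmaFun_involutive (i : B) : Function.Involutive (sigmaFun cs i) := by
  rintro ⟨t, e⟩
  simp only [sigmaFun]
  ext
  · exact simple_conj_conj cs i t
  · rw [show ((s i * t * s i = s i) ↔ (t = s i)) from simple_conj_eq_simple_iff cs i t]
    by_cases ht : t = s i <;> simp [ht]

noncomputable def sigma (i : B) : Equiv.Perm (W × ℤˣ) := (sigmaFun_involutive cs i).toPerm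

lemma sigma_apply (i : B) (p : W × ℤˣ) :
    sigma cs i p = (s i * p.1 * s i, if p.1 = s i then -p.2 else p.2) := rfl

lemma simple_mul_pow_comm (i j : B) (k : ℕ) :
    s j * (s i * s j) ^ k = (s j * s i) ^ k * s j :=
  (SemiconjBy.pow_right (by simp [SemiconjBy, mul_assoc]) k)


lemma ab_mul_ba (i j : B) : (s i * s j) * (s j * s i) = 1 := by
  rw [mul_assoc, cs.simple_mul_simple_cancel_left, cs.simple_mul_simple_self]

lemma conj_pow (i j : B) (r : ℕ) :
    (s i * s j) * (s i * s j) ^ r * (s j * s i) = (s i * s j) ^ r := by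
  rw [← pow_succ', pow_succ, mul_assoc, ab_mul_ba, mul_one]

lemma cond_comp (i j : B) (r : ℕ) :
    (s i * s j) * (s j * (s i * s j) ^ (r + 2)) * (s j * s i) = s j * (s i * s j) ^ r := by
  have h1 : (s i * s j) * (s j * (s i * s j) ^ (r + 2)) = s i * (s i * s j) ^ (r+2) := by
    rw [mul_assoc (s i) (s j), cs.simple_mul_simple_cancel_left]
  rw [h1, pow_succ' (s i * s j) (r+1), ← mul_assoc, ← mul_assoc,
    cs.simple_mul_simple_cancel_left, mul_assoc]
  rw [mul_assoc, pow_succ' (s i * s j) r, conj_pow]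


lemma cond_shift (i j : B) (r : ℕ) (t : W) :
    ((s i * s j) * t * (s j * s i) = s j * (s i * s j) ^ r) ↔
      (t = s j * (s i * s j) ^ (r + 2)) := by
  constructor
  · intro h
    have h2 : (s i * s j) * t * (s j * s i) =
        (s i * s j) * (s j * (s i * s j) ^ (r + 2)) * (s j * s i) := by
      rw [h, cond_comp]
    have h3 := mul_right_cancel h2
    exact mul_left_cancel h3
  · rintro rfl
    exact cond_comp cs i j r

lemma cond_bab (i j : B) (t : W) : (s j * t * s j = s i) ↔ (t = s j * s i * s j) := by
  constructor
  · intro h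
    have h2 : s j * (s j * t * s j) * s j = s j * s i * s j := by rw [h]
    rw [simple_conj_conj cs] at h2
    exact h2
  · rintro rfl
    rw [show s j * (s j * s i * s j) * s j = (s j * s j) * s i * (s j * s j) by group,
      cs.simple_mul_simple_self]
    group

lemma sigma_mul_apply (i j : B) (t : W) (e : ℤˣ) :
    (sigma cs i * sigma cs j) (t, e) =
      ((s i * s j) * t * (s j * s i),
        e * (if t = s j then -1 else 1) * (if t = s j * s i * s j then -1 else 1)) := by
  show sigma cs i (sigma cs j (t, e)) = _
  rw [sigma_apply, sigma_apply]
  refine Prod.ext ?_ ?_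
  · show s i * (s j * t * s j) * s i = _
    group
  · show (if s j * t * s j = s i then -(if t = s j then -e else e) else (if t = s j then -e else e) : ℤˣ)
        = (e * (if t = s j then -1 else 1) * (if t = s j * s i * s j then -1 else 1) : ℤˣ)
    rw [if_congr (cond_bab cs i j t) rfl rfl]
    by_cases h1 : t = s j <;> by_cases h2 : t = s j * s i * s j <;> simp [h1, h2]

lemma sigma_pow_eval (i j : B) (k : ℕ) (t : W) (e : ℤˣ) :
    ((sigma cs i * sigma cs j) ^ k) (t, e) =
      ((s i * s j) ^ k * t * (s j * s i) ^ k,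
        e * ∏ r ∈ Finset.range (2 * k), (if t = s j * (s i * s j) ^ r then -1 else 1)) := by
  induction k generalizing t e with
  | zero => simp
  | succ k ih =>
    rw [pow_succ]
    show ((sigma cs i * sigma cs j) ^ k) ((sigma cs i * sigma cs j) (t, e)) = _
    rw [sigma_mul_apply, ih]
    refine Prod.ext ?_ ?_
    · show (s i * s j) ^ k * ((s i * s j) * t * (s j * s i)) * (s j * s i) ^ k = _
      rw [pow_succ (s i * s j) k, pow_succ' (s j * s i) k]
      simp only [mul_assoc]
    · show (e * (if t = s j then -1 else 1) * (if t = s j * s i * s j then -1 else 1)) *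
          ∏ r ∈ Finset.range (2 * k),
            (if (s i * s j) * t * (s j * s i) = s j * (s i * s j) ^ r then -1 else 1) = _
      have hsh : ∀ r : ℕ, (if (s i * s j) * t * (s j * s i) = s j * (s i * s j) ^ r then (-1 : ℤˣ) else 1)
          = (if t = s j * (s i * s j) ^ (r + 2) then -1 else 1) := fun r =>
        if_congr (cond_shift cs i j r t) rfl rfl
      simp only [hsh]
      have h2 : 2 * (k + 1) = 2 + 2 * k := by ring
      rw [h2, Finset.prod_range_add]
      have h3 : ∏ r ∈ Finset.range 2, (if t = s j * (s i * s j) ^ r then (-1:ℤˣ) else 1)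
          = (if t = s j then -1 else 1) * (if t = s j * s i * s j then -1 else 1) := by
        rw [Finset.prod_range_succ, Finset.prod_range_one, pow_zero, mul_one, pow_one, ← mul_assoc]
      have h4 : ∀ r, t = s j * (s i * s j) ^ (2 + r) ↔ t = s j * (s i * s j) ^ (r + 2) := by
        intro r; rw [Nat.add_comm]
      simp only [h4]
      rw [h3]
      simp only [mul_assoc]

lemma sigma_liftable : M.IsLiftable (fun i => sigma cs i) := by
  intro i j
  apply Equiv.ext
  rintro ⟨t, e⟩
  have hm : (s i * s j) ^ M i j = 1 := cs.simple_mul_simple_pow i j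
  have hm' : (s j * s i) ^ M i j = 1 := cs.simple_mul_simple_pow' i j
  rw [Equiv.Perm.one_apply, sigma_pow_eval, hm, hm', one_mul, mul_one]
  refine Prod.ext rfl ?_
  show e * ∏ r ∈ Finset.range (2 * M i j), (if t = s j * (s i * s j) ^ r then (-1:ℤˣ) else 1) = e
  rw [two_mul, Finset.prod_range_add]
  have hper : ∀ r : ℕ, (if t = s j * (s i * s j) ^ (M i j + r) then (-1:ℤˣ) else 1)
      = (if t = s j * (s i * s j) ^ r then (-1:ℤˣ) else 1) := by
    intro r
    rw [pow_add, hm, one_mul]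
  simp only [hper]
  rw [← Finset.prod_mul_distrib]
  have : ∀ r : ℕ, (if t = s j * (s i * s j) ^ r then (-1:ℤˣ) else 1) *
      (if t = s j * (s i * s j) ^ r then (-1:ℤˣ) else 1) = 1 := by
    intro r; split <;> simp
  simp only [this, Finset.prod_const_one, mul_one]

/-- Tits' sign representation. -/
noncomputable def Phi : W →* Equiv.Perm (W × ℤˣ) :=
  cs.lift ⟨fun i => sigma cs i, sigma_liftable cs⟩

lemma Phi_simple (i : B) : Phi cs (s i) = sigma cs i :=
  cs.lift_apply_simple (sigma_liftable cs) i

/-- Second-component linearity of `Phi`. -/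
lemma Phi_snd_linear (w : W) : ∀ t e, Phi cs w (t, e) =
    ((Phi cs w (t, 1)).1, e * (Phi cs w (t, 1)).2) := by
  obtain ⟨ω, rfl⟩ := cs.wordProd_surjective w
  induction ω with
  | nil => intro t e; simp [cs.wordProd_nil]
  | cons i ω ih =>
    intro t e
    rw [cs.wordProd_cons, map_mul, Phi_simple]
    have hm : ∀ e' : ℤˣ, (sigma cs i * Phi cs (π ω)) (t, e') = sigma cs i (Phi cs (π ω) (t, e')) :=
      fun _ => rfl
    rw [hm, hm, ih t e, ih t 1, sigma_apply, sigma_apply]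
    simp only [one_mul]
    refine Prod.ext rfl ?_
    show (if (Phi cs (π ω) (t, 1)).1 = s i then -(e * (Phi cs (π ω) (t, 1)).2)
        else e * (Phi cs (π ω) (t, 1)).2)
      = e * (if (Phi cs (π ω) (t, 1)).1 = s i then -(Phi cs (π ω) (t, 1)).2
        else (Phi cs (π ω) (t, 1)).2)
    split
    · rw [mul_neg]
    · rfl

/-- The sign cocycle: `eta w t = -1` iff `t` is a left inversion of `w`. -/
noncomputable def eta (w t : W) : ℤˣ := (Phi cs w⁻¹ (t, 1)).2

lemma eta_one (t : W) : eta cs 1 t = 1 := by simp [eta]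

lemma eta_simple_mul (i : B) (w t : W) :
    eta cs (s i * w) t = (if t = s i then -1 else 1) * eta cs w (s i * t * s i) := by
  unfold eta
  rw [mul_inv_rev, map_mul]
  show (Phi cs w⁻¹ ((Phi cs (s i)⁻¹) (t, 1))).2 = _
  rw [cs.inv_simple, Phi_simple]
  rw [sigma_apply]
  show (Phi cs w⁻¹ (s i * t * s i, if t = s i then -1 else 1)).2 = _
  rw [Phi_snd_linear]

lemma eta_wordProd (ω : List B) (t : W) :
    eta cs (π ω) t = (-1) ^ ((cs.leftInvSeq ω).count t) := by
  induction ω generalizing t with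
  | nil => simp [eta_one, leftInvSeq]
  | cons i ω ih =>
    rw [cs.wordProd_cons, eta_simple_mul]
    have hlis : cs.leftInvSeq (i :: ω) = s i :: List.map (MulAut.conj (s i)) (cs.leftInvSeq ω) :=
      rfl
    rw [hlis]
    simp only [List.count_cons, beq_iff_eq]
    have hconj : ∀ x : W, (MulAut.conj (s i)) x = s i * x * s i := by
      intro x; rw [MulAut.conj_apply, cs.inv_simple]
    have hcnt : (List.map (⇑(MulAut.conj (s i))) (cs.leftInvSeq ω)).count t
        = (cs.leftInvSeq ω).count (s i * t * s i) := by
      have hinj : Function.Injective (⇑(MulAut.conj (s i)) : W → W) := (MulAut.conj (s i)).injective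
      have := List.count_map_of_injective (cs.leftInvSeq ω) (⇑(MulAut.conj (s i))) hinj
        (s i * t * s i)
      rw [← this]
      congr 1
      rw [hconj, simple_conj_conj cs]
    rw [hcnt, ih, pow_add]
    by_cases ht : t = s i
    · subst ht
      rw [if_pos rfl, if_pos rfl, pow_one]
      exact mul_comm _ _
    · rw [if_neg ht, if_neg (fun h => ht h.symm), pow_zero, one_mul, mul_one]

/-- The left inversion set of `w`, as a finset. -/
noncomputable def nset (w : W) : Finset W :=
  (cs.leftInvSeq (Classical.choose (cs.exists_reduced_word' w))).toFinset

lemma mem_nset (w t : W) : t ∈ nset cs w ↔ eta cs w t = -1 := by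
  obtain ⟨hred, hw⟩ := Classical.choose_spec (cs.exists_reduced_word' w)
  rw [nset, List.mem_toFinset]
  have heq : eta cs w t = (-1) ^ ((cs.leftInvSeq (Classical.choose (cs.exists_reduced_word' w))).count t) := by
    conv_lhs => rw [hw]
    rw [eta_wordProd]
  rw [heq]
  by_cases hmem : t ∈ cs.leftInvSeq (Classical.choose (cs.exists_reduced_word' w))
  · rw [List.count_eq_one_of_mem hred.nodup_leftInvSeq hmem, pow_one]
    simp [hmem]
  · rw [List.count_eq_zero_of_not_mem hmem, pow_zero]
    simp only [hmem, false_iff]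
    decide

lemma card_nset (w : W) : (nset cs w).card = ℓ w := by
  obtain ⟨hred, hw⟩ := Classical.choose_spec (cs.exists_reduced_word' w)
  rw [nset, List.toFinset_card_of_nodup hred.nodup_leftInvSeq, length_leftInvSeq, ← hred, ← hw]

lemma nset_one : nset cs (1 : W) = ∅ := by
  have := card_nset cs (1 : W)
  rw [cs.length_one] at this
  exact Finset.card_eq_zero.mp this

lemma eta_ne_neg_one_iff (u : ℤˣ) : ¬(u = -1) ↔ u = 1 := by
  rcases Int.units_eq_one_or u with h | h <;> subst h <;> decide

lemma nset_simple_mul (i : B) (w : W) :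
    nset cs (s i * w) = {s i} ∆ ((nset cs w).image (fun t => s i * t * s i)) := by
  ext t
  rw [Finset.mem_symmDiff, mem_nset, eta_simple_mul]
  have himg : t ∈ (nset cs w).image (fun t => s i * t * s i) ↔ (s i * t * s i) ∈ nset cs w := by
    constructor
    · rintro h
      obtain ⟨x, hx, rfl⟩ := Finset.mem_image.mp h
      rwa [simple_conj_conj cs]
    · intro h
      refine Finset.mem_image.mpr ⟨s i * t * s i, h, ?_⟩
      rw [simple_conj_conj cs]
  rw [Finset.mem_singleton, himg, mem_nset]
  rcases Int.units_eq_one_or (eta cs w (s i * t * s i)) with h | h <;>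
    rw [h] <;> split_ifs with ht <;> simp [ht] <;> decide

lemma sd_cancel {α : Type*} [GeneralizedBooleanAlgebra α] (a b c : α) :
    (a ∆ b) ∆ (a ∆ c) = b ∆ c := by
  rw [symmDiff_comm a b, symmDiff_assoc, symmDiff_symmDiff_cancel_left]

lemma conj_injective (i : B) : Function.Injective (fun t : W => s i * t * s i) := by
  intro x y h
  simp only at h
  have := congrArg (fun z => s i * z * s i) h
  simpa only [simple_conj_conj cs] using this

lemma length_eq_card_symmDiff (u v : W) :
    ℓ (u⁻¹ * v) = ((nset cs u) ∆ (nset cs v)).card := by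
  suffices H : ∀ n : ℕ, ∀ u v : W, ℓ u = n → ℓ (u⁻¹ * v) = ((nset cs u) ∆ (nset cs v)).card from
    H (ℓ u) u v rfl
  intro n
  induction n using Nat.strong_induction_on with
  | _ n ih =>
    intro u v hn
    by_cases hu : u = 1
    · subst hu
      rw [nset_one, inv_one, one_mul]
      rw [show (∅ : Finset W) ∆ (nset cs v) = nset cs v by simp [symmDiff]]
      exact (card_nset cs v).symm
    · obtain ⟨i, hi⟩ := cs.exists_leftDescent_of_ne_one hu
      set u' := s i * u with hu'def
      have hu2 : u = s i * u' := by rw [hu'def, cs.simple_mul_simple_cancel_left]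
      have hlt : ℓ u' < n := hn ▸ hi
      have IH := ih (ℓ u') hlt u' (s i * v) rfl
      have hL : u'⁻¹ * (s i * v) = u⁻¹ * v := by
        rw [hu'def, mul_inv_rev, cs.inv_simple, mul_assoc, cs.simple_mul_simple_cancel_left]
      rw [hL] at IH
      rw [IH]
      -- now show the two symmDiffs have the same cardinality
      have hinj := conj_injective cs i
      have himg : Finset.image (fun t => s i * t * s i) (nset cs u ∆ nset cs v)
          = nset cs u' ∆ nset cs (s i * v) := by
        rw [Finset.image_symmDiff _ _ hinj]
        have hsingle : Finset.image (fun t => s i * t * s i) ({s i} : Finset W) = {s i} := by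
          simp only [Finset.image_singleton, cs.simple_mul_simple_self, one_mul]
        have hcomp : ((fun t : W => s i * t * s i) ∘ (fun t : W => s i * t * s i)) = id := by
          funext x
          simp only [Function.comp_apply, id_eq, simple_conj_conj cs]
        have h1 : Finset.image (fun t => s i * t * s i) (nset cs u) = {s i} ∆ nset cs u' := by
          conv_lhs => rw [hu2]
          rw [nset_simple_mul, Finset.image_symmDiff _ _ hinj, hsingle,
            Finset.image_image, hcomp, Finset.image_id]
        have h2 : Finset.image (fun t => s i * t * s i) (nset cs v)
            = {s i} ∆ nset cs (s i * v) := by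
          rw [nset_simple_mul, symmDiff_symmDiff_cancel_left]
        rw [h1, h2, sd_cancel]
      rw [← himg, Finset.card_image_of_injective _ hinj]

lemma length_add_two_inter (u v : W) :
    ℓ (u⁻¹ * v) + 2 * ((nset cs u ∩ nset cs v).card) = ℓ u + ℓ v := by
  rw [length_eq_card_symmDiff]
  have hu := card_nset cs u
  have hv := card_nset cs v
  have hd : Disjoint (nset cs u \ nset cs v) (nset cs v \ nset cs u) := disjoint_sdiff_sdiff
  have hsd : (nset cs u ∆ nset cs v).card
      = (nset cs u \ nset cs v).card + (nset cs v \ nset cs u).card := by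
    rw [symmDiff_def, Finset.sup_eq_union, Finset.card_union_of_disjoint hd]
  have hca : (nset cs u \ nset cs v).card + (nset cs u ∩ nset cs v).card = (nset cs u).card :=
    Finset.card_sdiff_add_card_inter _ _
  have hcb : (nset cs v \ nset cs u).card + (nset cs v ∩ nset cs u).card = (nset cs v).card :=
    Finset.card_sdiff_add_card_inter _ _
  have hcomm : (nset cs u ∩ nset cs v).card = (nset cs v ∩ nset cs u).card := by
    rw [Finset.inter_comm]
  omega

end CoxLenND

/-- For a Coxeter system `(W,S)` with `S` finite, the word length `ℓ` is a negative
definite function on `W`: whenever `∑ cᵢ = 0`, the sum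
`∑ᵢⱼ cᵢ conj(cⱼ) ℓ(gᵢ⁻¹gⱼ)` is a real number `≤ 0`. -/
theorem coxeter_length_negdef {B W : Type*} [Group W] [Finite B]
    (M : CoxeterMatrix B) (cs : CoxeterSystem M W)
    (n : ℕ) (g : Fin n → W) (c : Fin n → ℂ) (hc : ∑ i, c i = 0) :
    ∑ i, ∑ j, c i * (starRingEnd ℂ) (c j) * (cs.length ((g i)⁻¹ * g j) : ℂ) ≤ 0 := by
  classical
  set A : Fin n → Finset W := fun i => CoxLenND.nset cs (g i) with hA
  set U : Finset W := Finset.univ.biUnion A with hU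
  set χ : Fin n → W → ℂ := fun i t => if t ∈ A i then 1 else 0 with hχ
  set z : W → ℂ := fun t => ∑ i, c i * χ i t with hz
  have hc' : ∑ j, (starRingEnd ℂ) (c j) = 0 := by rw [← map_sum, hc, map_zero]
  have hker : ∀ i j, (cs.length ((g i)⁻¹ * g j) : ℂ)
      = (cs.length (g i) : ℂ) + (cs.length (g j) : ℂ) - 2 * ((A i ∩ A j).card : ℂ) := by
    intro i j
    have h := CoxLenND.length_add_two_inter cs (g i) (g j)
    have h2 := congrArg (fun m : ℕ => (m : ℂ)) h
    push_cast at h2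
    linear_combination h2
  have hsub : ∀ i, A i ⊆ U := fun i => Finset.subset_biUnion_of_mem A (Finset.mem_univ i)
  have hcard : ∀ i j, ((A i ∩ A j).card : ℂ) = ∑ t ∈ U, χ i t * χ j t := by
    intro i j
    have hterm : ∀ t, χ i t * χ j t = if t ∈ A i ∩ A j then (1 : ℂ) else 0 := by
      intro t
      by_cases h1 : t ∈ A i <;> by_cases h2 : t ∈ A j <;>
        simp [hχ, h1, h2, Finset.mem_inter]
    simp only [hterm]
    rw [Finset.sum_boole, Finset.filter_mem_eq_inter,
      Finset.inter_eq_right.mpr (fun t ht => hsub i (Finset.mem_inter.mp ht).1)]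
  have hstep : ∀ i j, c i * (starRingEnd ℂ) (c j) * (cs.length ((g i)⁻¹ * g j) : ℂ)
      = c i * (starRingEnd ℂ) (c j) * (cs.length (g i) : ℂ)
        + c i * (starRingEnd ℂ) (c j) * (cs.length (g j) : ℂ)
        - 2 * (c i * (starRingEnd ℂ) (c j) * ((A i ∩ A j).card : ℂ)) := by
    intro i j; rw [hker]; ring
  simp only [hstep, Finset.sum_sub_distrib, Finset.sum_add_distrib]
  have hT1 : ∑ i, ∑ j, c i * (starRingEnd ℂ) (c j) * (cs.length (g i) : ℂ) = 0 := by
    have h1 : ∀ i : Fin n, ∑ j, c i * (starRingEnd ℂ) (c j) * (cs.length (g i) : ℂ)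
        = (c i * (cs.length (g i) : ℂ)) * ∑ j, (starRingEnd ℂ) (c j) := by
      intro i
      rw [Finset.mul_sum]
      exact Finset.sum_congr rfl (fun j _ => by ring)
    simp only [h1, hc', mul_zero, Finset.sum_const_zero]
  have hT2 : ∑ i, ∑ j, c i * (starRingEnd ℂ) (c j) * (cs.length (g j) : ℂ) = 0 := by
    have h1 : ∀ i : Fin n, ∑ j, c i * (starRingEnd ℂ) (c j) * (cs.length (g j) : ℂ)
        = c i * ∑ j, (starRingEnd ℂ) (c j) * (cs.length (g j) : ℂ) := by
      intro i
      rw [Finset.mul_sum]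
      exact Finset.sum_congr rfl (fun j _ => by ring)
    simp only [h1, ← Finset.sum_mul, hc, zero_mul]
  have hT3 : ∑ i, ∑ j, c i * (starRingEnd ℂ) (c j) * ((A i ∩ A j).card : ℂ)
      = ∑ t ∈ U, z t * (starRingEnd ℂ) (z t) := by
    have h1 : ∀ i j : Fin n, c i * (starRingEnd ℂ) (c j) * ((A i ∩ A j).card : ℂ)
        = ∑ t ∈ U, (c i * χ i t) * ((starRingEnd ℂ) (c j) * χ j t) := by
      intro i j
      rw [hcard, Finset.mul_sum]
      exact Finset.sum_congr rfl (fun t _ => by ring)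
    simp only [h1]
    have h2 : ∀ i : Fin n, ∑ j, ∑ t ∈ U, (c i * χ i t) * ((starRingEnd ℂ) (c j) * χ j t)
        = ∑ t ∈ U, ∑ j, (c i * χ i t) * ((starRingEnd ℂ) (c j) * χ j t) := fun i =>
      Finset.sum_comm
    simp only [h2]
    rw [Finset.sum_comm]
    refine Finset.sum_congr rfl (fun t _ => ?_)
    have h3 : ∑ j, ((starRingEnd ℂ) (c j) * χ j t) = (starRingEnd ℂ) (z t) := by
      rw [hz, map_sum]
      refine Finset.sum_congr rfl (fun j _ => ?_)
      rw [map_mul]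
      congr 1
      by_cases hjt : t ∈ A j <;> simp [hχ, hjt]
    rw [← Finset.sum_mul_sum, h3]
  have hT4 : ∑ i, ∑ j, 2 * (c i * (starRingEnd ℂ) (c j) * ((A i ∩ A j).card : ℂ))
      = 2 * ∑ t ∈ U, z t * (starRingEnd ℂ) (z t) := by
    simp only [← Finset.mul_sum]
    rw [hT3]
  rw [hT1, hT2, hT4]
  have hr : ∀ t ∈ U, z t * (starRingEnd ℂ) (z t) = (Complex.normSq (z t) : ℂ) :=
    fun t _ => Complex.mul_conj (z t)
  rw [Finset.sum_congr rfl hr]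
  have hcast : ∑ t ∈ U, (Complex.normSq (z t) : ℂ) = ((∑ t ∈ U, Complex.normSq (z t) : ℝ) : ℂ) := by
    push_cast
    rfl
  rw [hcast]
  set r : ℝ := ∑ t ∈ U, Complex.normSq (z t) with hrdef
  have hr0 : (0:ℝ) ≤ r := Finset.sum_nonneg fun t _ => Complex.normSq_nonneg _
  have heq : (0:ℂ) + 0 - 2 * (r:ℂ) = ((-2*r : ℝ) : ℂ) := by push_cast; ring
  rw [heq]
  have hfin : ((-2*r:ℝ):ℂ) ≤ ((0:ℝ):ℂ) := Complex.real_le_real.mpr (by linarith)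
  simpa using hfin
end

section
/- Let (W,S) be a Coxeter system with S finite and let 0 < r < 1. The function g ↦ r^{ℓ(g)} is a positive definite function on W: for all g₁, …, gₙ ∈ W and c₁, …, cₙ ∈ ℂ, the sum ∑_{i,j=1}^n c_i · conj(c_j) · r^{ℓ(g_i⁻¹ g_j)} is a nonnegative real number. -/
open scoped BigOperators
set_option linter.unusedSectionVars false
set_option maxHeartbeats 800000

namespace CoxAux

variable {B W : Type*} [Group W] [DecidableEq W] {M : CoxeterMatrix B} (cs : CoxeterSystem M W)

local prefix:100 "s" => cs.simple

lemma zmod2_add_self (e : ZMod 2) : e + e = 0 := by fin_cases e <;> decide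

lemma conj_eq_iff (u x y : W) : u * x * u⁻¹ = y ↔ x = u⁻¹ * y * u := by
  constructor
  · rintro rfl; group
  · rintro rfl; group

def sigmaFun (i : B) (p : W × ZMod 2) : W × ZMod 2 :=
  (s i * p.1 * s i, p.2 + if p.1 = s i then 1 else 0)

lemma sigmaFun_involutive (i : B) : Function.Involutive (sigmaFun cs i) := by
  rintro ⟨t, e⟩
  have h1 : s i * (s i * t * s i) * s i = t := by
    rw [← mul_assoc, ← mul_assoc, cs.simple_mul_simple_self, one_mul, mul_assoc,
      cs.simple_mul_simple_self, mul_one]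
  have h2 : (s i * t * s i = s i) ↔ (t = s i) := by
    constructor
    · intro h
      have := congrArg (fun x => s i * x * s i) h
      rw [h1] at this
      rw [this, cs.simple_mul_simple_self, one_mul]
    · rintro rfl; rw [cs.simple_mul_simple_self, one_mul]
  simp only [sigmaFun, Prod.mk.injEq, h1, h2]
  refine ⟨trivial, ?_⟩
  by_cases ht : t = s i <;> simp [ht, add_assoc, zmod2_add_self]

def sigma (i : B) : Equiv.Perm (W × ZMod 2) := (sigmaFun_involutive cs i).toPerm _

lemma sigma_apply (i : B) (p : W × ZMod 2) :
    sigma cs i p = (s i * p.1 * s i, p.2 + if p.1 = s i then 1 else 0) := rfl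

lemma mul_pow_comm (a b : W) (k : ℕ) : a * (b * a) ^ k = (a * b) ^ k * a := by
  induction k with
  | zero => simp
  | succ k ih =>
    rw [pow_succ', pow_succ']
    calc a * ((b * a) * (b * a) ^ k) = (a * b) * (a * (b * a) ^ k) := by
          rw [← mul_assoc, ← mul_assoc, mul_assoc (a * b)]
    _ = (a * b) * ((a * b) ^ k * a) := by rw [ih]
    _ = ((a * b) * (a * b) ^ k) * a := (mul_assoc _ _ _).symm

lemma inv_pow_simple (i j : B) (k : ℕ) : ((s i * s j) ^ k)⁻¹ = (s j * s i) ^ k := by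
  have h : (s i * s j)⁻¹ = s j * s i := by rw [mul_inv_rev, cs.inv_simple, cs.inv_simple]
  rw [← inv_pow, h]

lemma simple_mul_w1_pow (i j : B) (k : ℕ) :
    s j * (s i * s j) ^ k = ((s i * s j) ^ k)⁻¹ * s j := by
  rw [inv_pow_simple, mul_pow_comm]

/-- The "rotated reflections" in the dihedral subgroup generated by `s i`, `s j`. -/
def qq (i j : B) (r : ℕ) : W := ((s i * s j) ^ r)⁻¹ * s j

lemma qq_period (i j : B) (r : ℕ) : qq cs i j (r + M i j) = qq cs i j r := by
  unfold qq
  rw [pow_add, cs.simple_mul_simple_pow i j, mul_one]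

lemma tau_pow (i j : B) (k : ℕ) (p : W × ZMod 2) :
    ((sigma cs i * sigma cs j) ^ k) p =
      ((s i * s j) ^ k * p.1 * ((s i * s j) ^ k)⁻¹,
        p.2 + ∑ l ∈ Finset.range k,
          ((if p.1 = qq cs i j (2 * l) then 1 else 0) +
           (if p.1 = qq cs i j (2 * l + 1) then 1 else 0))) := by
  induction k with
  | zero => simp
  | succ k ih =>
    rw [pow_succ']
    have happ : ((sigma cs i * sigma cs j) * (sigma cs i * sigma cs j) ^ k) p
        = (sigma cs i) ((sigma cs j) (((sigma cs i * sigma cs j) ^ k) p)) := rfl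
    rw [happ, ih, sigma_apply, sigma_apply]
    -- condition A : inner element equals s j
    have keyA : ((s i * s j) ^ k)⁻¹ * s j * (s i * s j) ^ k = qq cs i j (2 * k) := by
      rw [mul_assoc, simple_mul_w1_pow, ← mul_assoc, ← mul_inv_rev, ← pow_add, ← two_mul, qq]
    have hA : ((s i * s j) ^ k * p.1 * ((s i * s j) ^ k)⁻¹ = s j) ↔ p.1 = qq cs i j (2 * k) := by
      rw [conj_eq_iff, keyA]
    -- condition B
    have hL : s j * ((s i * s j) ^ k * p.1 * ((s i * s j) ^ k)⁻¹) * s j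
        = (s j * (s i * s j) ^ k) * p.1 * (s j * (s i * s j) ^ k)⁻¹ := by
      rw [mul_inv_rev (s j) ((s i * s j) ^ k), cs.inv_simple]
      group
    have h3 : (s j * s i * s j) * (s i * s j) ^ k = (s j * s i) ^ k * (s j * s i * s j) := by
      have h := mul_pow_comm (s j * s i * s j) (s j) k
      have e1 : s j * (s j * s i * s j) = s i * s j := by
        rw [mul_assoc (s j) (s i), ← mul_assoc, cs.simple_mul_simple_self, one_mul]
      have e2 : (s j * s i * s j) * s j = s j * s i := by
        rw [mul_assoc, cs.simple_mul_simple_self, mul_one]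
      rw [e1, e2] at h
      exact h
    have keyB : (s j * (s i * s j) ^ k)⁻¹ * s i * (s j * (s i * s j) ^ k)
        = qq cs i j (2 * k + 1) := by
      have lhs_eq : (s j * (s i * s j) ^ k)⁻¹ * s i * (s j * (s i * s j) ^ k)
          = (s j * s i) ^ k * ((s j * s i * s j) * (s i * s j) ^ k) := by
        rw [mul_inv_rev, cs.inv_simple, inv_pow_simple]
        group
      rw [lhs_eq, h3, qq, inv_pow_simple]
      have : (s j * s i) ^ (2 * k + 1) = (s j * s i) ^ k * ((s j * s i) ^ k * (s j * s i)) := by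
        rw [← pow_succ, ← pow_add]
        ring_nf
      rw [this]
      group
    have hB : (s j * ((s i * s j) ^ k * p.1 * ((s i * s j) ^ k)⁻¹) * s j = s i)
        ↔ p.1 = qq cs i j (2 * k + 1) := by
      rw [hL, conj_eq_iff, keyB]
    -- first components
    have hfst : s i * (s j * ((s i * s j) ^ k * p.1 * ((s i * s j) ^ k)⁻¹) * s j) * s i
        = (s i * s j) ^ (k + 1) * p.1 * ((s i * s j) ^ (k + 1))⁻¹ := by
      rw [pow_succ' (s i * s j) k, mul_inv_rev (s i * s j), mul_inv_rev (s i) (s j),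
        cs.inv_simple, cs.inv_simple]
      group
    refine Prod.ext ?_ ?_
    · exact hfst
    · simp only [Finset.sum_range_succ, hA, hB]
      push_cast
      ring

end CoxAux

namespace CoxAux

variable {B W : Type*} [Group W] [DecidableEq W] {M : CoxeterMatrix B} (cs : CoxeterSystem M W)

local prefix:100 "s" => cs.simple
local prefix:100 "π" => cs.wordProd
local prefix:100 "ℓ" => cs.length

lemma zmod2_cancel {a b : ZMod 2} (h : a + b = 0) : b = a := by
  revert a b; decide

lemma sum_range_two_mul {Mo : Type*} [AddCommMonoid Mo] (f : ℕ → Mo) (m : ℕ) :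
    ∑ l ∈ Finset.range m, (f (2 * l) + f (2 * l + 1)) = ∑ r ∈ Finset.range (2 * m), f r := by
  induction m with
  | zero => simp
  | succ m ih =>
    have h2 : 2 * (m + 1) = (2 * m + 1) + 1 := by ring
    rw [Finset.sum_range_succ, ih, h2, Finset.sum_range_succ, Finset.sum_range_succ, add_assoc]

lemma sum_range_add' {Mo : Type*} [AddCommMonoid Mo] (f : ℕ → Mo) (a b : ℕ) :
    ∑ r ∈ Finset.range (a + b), f r
      = ∑ r ∈ Finset.range a, f r + ∑ r ∈ Finset.range b, f (a + r) := by
  induction b with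
  | zero => simp
  | succ b ih =>
    rw [← add_assoc, Finset.sum_range_succ, ih, Finset.sum_range_succ, add_assoc]

lemma braid (i j : B) : (sigma cs i * sigma cs j) ^ (M i j) = 1 := by
  apply Equiv.ext
  rintro ⟨t, e⟩
  rw [tau_pow]
  have h1 : (s i * s j) ^ (M i j) = 1 := cs.simple_mul_simple_pow i j
  have hsum : ∑ l ∈ Finset.range (M i j),
      ((if t = qq cs i j (2 * l) then (1 : ZMod 2) else 0) +
       (if t = qq cs i j (2 * l + 1) then 1 else 0)) = 0 := by
    rw [sum_range_two_mul (fun r => if t = qq cs i j r then (1 : ZMod 2) else 0) (M i j),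
      two_mul, sum_range_add']
    have : ∀ r ∈ Finset.range (M i j),
        (if t = qq cs i j (M i j + r) then (1 : ZMod 2) else 0)
          = (if t = qq cs i j r then (1 : ZMod 2) else 0) := by
      intro r _
      rw [add_comm, qq_period]
    rw [Finset.sum_congr rfl this, ← Finset.sum_add_distrib]
    simp [zmod2_add_self]
  rw [h1, hsum]
  simp

def phi : W →* Equiv.Perm (W × ZMod 2) :=
  cs.lift ⟨fun i => sigma cs i, fun i j => braid cs i j⟩

@[simp] lemma phi_simple (i : B) : phi cs (s i) = sigma cs i :=
  cs.lift_apply_simple _ i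

/-- The parity cocycle. -/
def nn (w t : W) : ZMod 2 := ((phi cs w) (t, 0)).2

lemma phi_apply (w : W) (p : W × ZMod 2) :
    phi cs w p = (w * p.1 * w⁻¹, p.2 + nn cs w p.1) := by
  induction w using cs.simple_induction_left generalizing p with
  | one => simp [nn]
  | mul_simple_left w i ih =>
    have key : ∀ q : W × ZMod 2, phi cs (s i * w) q
        = ((s i * w) * q.1 * ((s i * w))⁻¹, q.2 + (nn cs w q.1 +
            if w * q.1 * w⁻¹ = s i then 1 else 0)) := by
      intro q
      rw [map_mul, Equiv.Perm.mul_apply, ih q, phi_simple, sigma_apply]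
      refine Prod.ext ?_ ?_
      · simp only
        rw [mul_inv_rev, cs.inv_simple]
        group
      · simp only
        rw [add_assoc]
    have hnn : nn cs (s i * w) p.1 = nn cs w p.1 + if w * p.1 * w⁻¹ = s i then 1 else 0 := by
      rw [nn, key (p.1, 0), zero_add]
    rw [key p, hnn]

lemma nn_mul (u v t : W) : nn cs (u * v) t = nn cs v t + nn cs u (v * t * v⁻¹) := by
  have h : phi cs (u * v) (t, 0) = phi cs u (phi cs v (t, 0)) := by
    rw [map_mul, Equiv.Perm.mul_apply]
  rw [nn, h, phi_apply cs v, phi_apply cs u]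
  simp [nn]

lemma nn_one (t : W) : nn cs 1 t = 0 := by simp [nn]

lemma nn_inv (v t : W) : nn cs v (v⁻¹ * t * v) = nn cs v⁻¹ t := by
  have h := nn_mul cs v v⁻¹ t
  rw [mul_inv_cancel, nn_one, inv_inv] at h
  exact zmod2_cancel h.symm

lemma nn_simple (i : B) (t : W) : nn cs (s i) t = if t = s i then 1 else 0 := by
  rw [nn, phi_simple, sigma_apply, zero_add]

/-- `nn (π ω)` counts occurrences in the right inversion sequence, mod 2. -/
lemma nn_wordProd (ω : List B) (t : W) :
    nn cs (π ω) t = ((cs.rightInvSeq ω).count t : ZMod 2) := by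
  induction ω with
  | nil => simp [nn_one]
  | cons i ω ih =>
    rw [cs.wordProd_cons, nn_mul, ih, nn_simple]
    have hris : cs.rightInvSeq (i :: ω) = ((π ω)⁻¹ * (s i) * (π ω)) :: cs.rightInvSeq ω := rfl
    rw [hris, List.count_cons]
    simp only [beq_iff_eq]
    have hiff : (π ω * t * (π ω)⁻¹ = s i) ↔ (t = (π ω)⁻¹ * s i * (π ω)) := conj_eq_iff _ _ _
    by_cases h : t = (π ω)⁻¹ * s i * (π ω)
    · rw [if_pos (hiff.mpr h), if_pos h.symm]
      push_cast
      ring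
    · rw [if_neg (fun hc => h (hiff.mp hc)), if_neg (fun hc => h hc.symm)]
      push_cast
      ring

end CoxAux

namespace CoxAux

open scoped symmDiff

variable {B W : Type*} [Group W] [DecidableEq W] {M : CoxeterMatrix B} (cs : CoxeterSystem M W)

local prefix:100 "s" => cs.simple
local prefix:100 "π" => cs.wordProd
local prefix:100 "ℓ" => cs.length

lemma zmod2_symmdiff_iff (a b : ZMod 2) :
    ((a = 1 ∧ ¬ b = 1) ∨ (b = 1 ∧ ¬ a = 1)) ↔ a + b = 1 := by
  revert a b; decide

/-- A chosen reduced word for `w`. -/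
noncomputable def rword (w : W) : List B := Classical.choose (cs.exists_reduced_word' w)

lemma rword_spec (w : W) : cs.IsReduced (rword cs w) ∧ w = π (rword cs w) :=
  Classical.choose_spec (cs.exists_reduced_word' w)

/-- The right inversion set of `w`, as a `Finset`. -/
noncomputable def invset (w : W) : Finset W := (cs.rightInvSeq (rword cs w)).toFinset

lemma card_invset (w : W) : (invset cs w).card = ℓ w := by
  obtain ⟨hred, hw⟩ := rword_spec cs w
  rw [invset, List.card_toFinset, (hred.nodup_rightInvSeq).dedup, cs.length_rightInvSeq]
  conv_rhs => rw [hw]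
  exact hred.symm

lemma mem_invset (w t : W) : t ∈ invset cs w ↔ nn cs w t = 1 := by
  obtain ⟨hred, hw⟩ := rword_spec cs w
  rw [invset, List.mem_toFinset]
  have hn : nn cs w t = ((cs.rightInvSeq (rword cs w)).count t : ZMod 2) := by
    conv_lhs => rw [hw]
    exact nn_wordProd cs _ t
  constructor
  · intro hmem
    rw [hn, List.count_eq_one_of_mem hred.nodup_rightInvSeq hmem]
    rfl
  · intro h1
    by_contra hmem
    rw [hn, List.count_eq_zero_of_not_mem hmem] at h1
    simp at h1

/-- The inversion Finset used in the positive-definiteness proof: inversions of `w⁻¹`. -/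
noncomputable def Nset (w : W) : Finset W := invset cs w⁻¹

lemma card_Nset (w : W) : (Nset cs w).card = ℓ w := by
  rw [Nset, card_invset, cs.length_inv]

lemma mem_Nset (w t : W) : t ∈ Nset cs w ↔ nn cs w⁻¹ t = 1 := mem_invset cs w⁻¹ t

lemma length_eq_card_symmDiff (u v : W) :
    ℓ (u⁻¹ * v) = (Nset cs u ∆ Nset cs v).card := by
  have hconj_inj : Function.Injective (fun t : W => v * t * v⁻¹) := by
    intro a b hab
    simp only at hab
    have := congrArg (fun x => v⁻¹ * x * v) hab
    simpa [mul_assoc] using this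
  have key : ∀ t' : W, (v⁻¹ * t' * v ∈ invset cs (u⁻¹ * v)) ↔
      (nn cs u⁻¹ t' + nn cs v⁻¹ t' = 1) := by
    intro t'
    rw [mem_invset, nn_mul]
    have e1 : v * (v⁻¹ * t' * v) * v⁻¹ = t' := by group
    rw [e1, nn_inv, add_comm]
  have himg : Nset cs u ∆ Nset cs v = (invset cs (u⁻¹ * v)).image (fun t => v * t * v⁻¹) := by
    ext t'
    rw [Finset.mem_symmDiff, mem_Nset, mem_Nset,
      zmod2_symmdiff_iff (nn cs u⁻¹ t') (nn cs v⁻¹ t'), ← key t', Finset.mem_image]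
    constructor
    · intro h
      exact ⟨v⁻¹ * t' * v, h, by group⟩
    · rintro ⟨t, ht, rfl⟩
      have e2 : v⁻¹ * (v * t * v⁻¹) * v = t := by group
      rwa [e2]
  rw [himg, Finset.card_image_of_injective _ hconj_inj, card_invset]

end CoxAux

open scoped ComplexOrder

namespace CoxAux

open scoped symmDiff

variable {B W : Type*} [Group W] [DecidableEq W] {M : CoxeterMatrix B} (cs : CoxeterSystem M W)

local prefix:100 "ℓ" => cs.length

/-- The Gram decomposition of the kernel `r^{ℓ(g i⁻¹ g j)}`. -/
lemma kernel_gram (r : ℝ) (hr0 : 0 < r) (hr1 : r ≤ 1) (n : ℕ) (g : Fin n → W) :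
    ∃ (E : Finset W) (ψ : Finset W → Fin n → ℝ), ∀ i j,
      (r : ℝ) ^ (ℓ ((g i)⁻¹ * g j)) = ∑ S ∈ E.powerset, ψ S i * ψ S j := by
  set N : Fin n → Finset W := fun i => Nset cs (g i) with hN
  set E : Finset W := Finset.univ.biUnion N with hE
  have hNE : ∀ i, N i ⊆ E := fun i => Finset.subset_biUnion_of_mem N (Finset.mem_univ i)
  have hr1' : (1 : ℝ) ≤ r⁻¹ := (one_le_inv₀ hr0).mpr hr1
  have hbnn : (0 : ℝ) ≤ r⁻¹ ^ 2 - 1 := by nlinarith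
  set b : ℝ := Real.sqrt (r⁻¹ ^ 2 - 1) with hbdef
  have hb2 : b ^ 2 = r⁻¹ ^ 2 - 1 := Real.sq_sqrt hbnn
  have hb2' : 1 + b ^ 2 = r⁻¹ ^ 2 := by rw [hb2]; ring
  refine ⟨E, fun S i => if S ⊆ N i then r ^ (ℓ (g i)) * b ^ S.card else 0, fun i j => ?_⟩
  -- cardinality bookkeeping
  have hcard : ℓ ((g i)⁻¹ * g j) = (N i ∆ N j).card := length_eq_card_symmDiff cs _ _
  have hinter_union : (N i ∩ N j).card + (N i ∪ N j).card = (N i).card + (N j).card :=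
    Finset.card_inter_add_card_union _ _
  have hsd : (N i ∆ N j).card = (N i ∪ N j).card - (N i ∩ N j).card := by
    rw [symmDiff_eq_sup_sdiff_inf]
    exact Finset.card_sdiff_of_subset (Finset.inter_subset_union)
  have hle : (N i ∩ N j).card ≤ (N i ∪ N j).card :=
    Finset.card_le_card Finset.inter_subset_union
  have hcards : (N i ∆ N j).card + 2 * (N i ∩ N j).card = ℓ (g i) + ℓ (g j) := by
    have h1 : (N i).card = ℓ (g i) := card_Nset cs _
    have h2 : (N j).card = ℓ (g j) := card_Nset cs _
    omega
  -- the power identity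
  have hrne : r ≠ 0 := ne_of_gt hr0
  have hpow : r ^ ((N i ∆ N j).card) =
      r ^ (ℓ (g i)) * r ^ (ℓ (g j)) * ((r⁻¹ ^ 2) ^ ((N i ∩ N j).card)) := by
    have h2 : ((r⁻¹) ^ 2) ^ ((N i ∩ N j).card) = ((r ^ 2) ^ ((N i ∩ N j).card))⁻¹ := by
      rw [inv_pow, inv_pow]
    rw [h2, eq_comm, mul_inv_eq_iff_eq_mul₀ (pow_ne_zero _ (pow_ne_zero _ hrne)),
      ← pow_add, ← pow_mul, ← pow_add, hcards]
  -- binomial expansion over subsets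
  have hbin : ((r⁻¹) ^ 2) ^ ((N i ∩ N j).card) =
      ∑ S ∈ (N i ∩ N j).powerset, (b ^ S.card) * (b ^ S.card) := by
    have hconst : ((r⁻¹) ^ 2) ^ ((N i ∩ N j).card) = ∏ _t ∈ N i ∩ N j, (b ^ 2 + 1) := by
      rw [Finset.prod_const, add_comm (b ^ 2) 1, hb2']
    rw [hconst, Finset.prod_add]
    refine Finset.sum_congr rfl fun S _ => ?_
    rw [Finset.prod_const, Finset.prod_const_one, mul_one, ← pow_mul, two_mul, pow_add]
  -- replace the powerset of the intersection by the powerset of E with indicators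
  have hfilter : (N i ∩ N j).powerset
      = E.powerset.filter (fun S => S ⊆ N i ∧ S ⊆ N j) := by
    ext S
    simp only [Finset.mem_powerset, Finset.mem_filter, ← Finset.subset_inter_iff]
    constructor
    · intro h
      exact Finset.subset_inter (h.trans ((Finset.inter_subset_left).trans (hNE i))) h
    · intro h
      exact h.trans Finset.inter_subset_right
  -- put everything together
  rw [hcard, hpow, hbin, hfilter, Finset.sum_filter, Finset.mul_sum]
  refine Finset.sum_congr rfl fun S _ => ?_
  dsimp only
  by_cases hij : S ⊆ N i ∧ S ⊆ N j
  · rw [if_pos hij, if_pos hij.1, if_pos hij.2]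
    ring
  · rw [if_neg hij]
    rcases Decidable.not_and_iff_or_not.mp hij with h | h
    · rw [if_neg h, zero_mul, mul_zero]
    · rw [if_neg h, mul_zero, mul_zero]

end CoxAux

open scoped BigOperators ComplexOrder


/-- For a Coxeter system `(W,S)` with `S` finite and `0 < r < 1`, the function
`g ↦ r^(ℓ g)` is positive definite on `W`: all sums `∑ᵢⱼ cᵢ conj(cⱼ) r^(ℓ(gᵢ⁻¹gⱼ))`
are nonnegative real numbers. -/
theorem coxeter_r_pow_length_posdef {B W : Type*} [Group W] [Finite B]
    (M : CoxeterMatrix B) (cs : CoxeterSystem M W)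
    (r : ℝ) (hr0 : 0 < r) (hr1 : r < 1)
    (n : ℕ) (g : Fin n → W) (c : Fin n → ℂ) :
    0 ≤ ∑ i, ∑ j, c i * (starRingEnd ℂ) (c j) *
      ((r ^ cs.length ((g i)⁻¹ * g j) : ℝ) : ℂ) := by
  classical
  obtain ⟨E, ψ, hK⟩ := CoxAux.kernel_gram cs r hr0 (le_of_lt hr1) n g
  have expand : ∀ i j, c i * (starRingEnd ℂ) (c j) * ((r ^ cs.length ((g i)⁻¹ * g j) : ℝ) : ℂ)
      = ∑ S ∈ E.powerset, (c i * (ψ S i : ℂ)) * (starRingEnd ℂ) (c j * (ψ S j : ℂ)) := by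
    intro i j
    rw [hK i j]
    push_cast
    rw [Finset.mul_sum]
    refine Finset.sum_congr rfl fun S _ => ?_
    rw [map_mul, Complex.conj_ofReal]
    ring
  calc ∑ i, ∑ j, c i * (starRingEnd ℂ) (c j) * ((r ^ cs.length ((g i)⁻¹ * g j) : ℝ) : ℂ)
      = ∑ i, ∑ j, ∑ S ∈ E.powerset, (c i * (ψ S i : ℂ)) * (starRingEnd ℂ) (c j * (ψ S j : ℂ)) := by
        exact Finset.sum_congr rfl fun i _ => Finset.sum_congr rfl fun j _ => expand i j
    _ = ∑ S ∈ E.powerset, ∑ i, ∑ j, (c i * (ψ S i : ℂ)) * (starRingEnd ℂ) (c j * (ψ S j : ℂ)) := by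
        calc ∑ i, ∑ j, ∑ S ∈ E.powerset, (c i * (ψ S i : ℂ)) * (starRingEnd ℂ) (c j * (ψ S j : ℂ))
            = ∑ i, ∑ S ∈ E.powerset, ∑ j, (c i * (ψ S i : ℂ)) * (starRingEnd ℂ) (c j * (ψ S j : ℂ)) :=
              Finset.sum_congr rfl fun i _ => Finset.sum_comm
          _ = ∑ S ∈ E.powerset, ∑ i, ∑ j, (c i * (ψ S i : ℂ)) * (starRingEnd ℂ) (c j * (ψ S j : ℂ)) :=
              Finset.sum_comm
    _ = ∑ S ∈ E.powerset, (∑ i, c i * (ψ S i : ℂ)) *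
          (starRingEnd ℂ) (∑ j, c j * (ψ S j : ℂ)) := by
        refine Finset.sum_congr rfl fun S _ => ?_
        rw [map_sum, Finset.sum_mul_sum]
    _ ≥ 0 := by
        refine Finset.sum_nonneg fun S _ => ?_
        rw [Complex.mul_conj]
        exact Complex.zero_le_real.mpr (Complex.normSq_nonneg _)
end
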